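/- arXiv:2506.22269 — 5 statements merged into one kernel-verified Lean document; each statement's English description precedes it below -/
import Mathlib

section
/- For every integer d ≥ 2 and every integer k ≥ 1, there exists a traceable simple graph on n = d + d² + ⋯ + d^k vertices with modular-width at most 2d and at most 2n·log_d(n) edges. -/
/-- A graph is traceable if it contains a Hamiltonian path. -/
def Traceable {V : Type*} [DecidableEq V] (G : SimpleGraph V) : Prop :=
  ∃ (u v : V) (p : G.Walk u v), p.IsHamiltonian

/-- `M` is a module of `G`: every vertex outside `M` is adjacent either to all
vertices of `M` or to none of them. -/
def IsModule {V : Type*} (G : SimpleGraph V) (M : Set V) : Prop :=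
  ∀ u ∈ M, ∀ v ∈ M, ∀ w ∉ M, (G.Adj u w ↔ G.Adj v w)

/-- Auxiliary (fuel-based) definition of "modular-width at most `m`".  A graph has
modular-width at most `m` iff it has at most one vertex, or its vertex set admits a
partition into at least two modules such that either there are at most `m` parts
(substitution into a pattern with at most `m` vertices), or the quotient is complete
(a join) or edgeless (a disjoint union), and each part induces a graph of
modular-width at most `m`.  The fuel bounds the recursion depth; `fuel = |V|` suffices. -/
def MWleAux (m : ℕ) : (fuel : ℕ) → (V : Type) → [Fintype V] → [DecidableEq V] →
    SimpleGraph V → Prop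
  | 0, V, _, _, _ => Fintype.card V ≤ 1
  | fuel + 1, V, _, _, G =>
      Fintype.card V ≤ 1 ∨
      ∃ P : Finpartition (Finset.univ : Finset V),
        2 ≤ P.parts.card ∧
        (∀ M ∈ P.parts, IsModule G (↑M : Set V)) ∧
        (P.parts.card ≤ m ∨
          (∀ M ∈ P.parts, ∀ M' ∈ P.parts, M ≠ M' → ∀ u ∈ M, ∀ v ∈ M', G.Adj u v) ∨
          (∀ M ∈ P.parts, ∀ M' ∈ P.parts, M ≠ M' → ∀ u ∈ M, ∀ v ∈ M', ¬ G.Adj u v)) ∧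
        (∀ M ∈ P.parts, MWleAux m fuel _ (G.induce (↑M : Set V)))

/-- The modular-width of `G` is at most `m`. -/
def MWle (m : ℕ) (V : Type) [Fintype V] [DecidableEq V] (G : SimpleGraph V) : Prop :=
  MWleAux m (Fintype.card V) V G

namespace Stmt7Aux

open SimpleGraph

/-! ### Generic helper lemmas -/

section Walks

variable {V : Type} {G : SimpleGraph V}

/-- Build a walk out of a list whose consecutive elements are adjacent. -/
def walkOfList : (l : List V) → (h : l ≠ []) → (hc : l.Chain' G.Adj) →
    G.Walk (l.head h) (l.getLast h)
  | [_], _, _ => SimpleGraph.Walk.nil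
  | _ :: b :: t, _, hc =>
    (SimpleGraph.Walk.cons (List.isChain_cons_cons.mp hc).1
      (walkOfList (b :: t) (by simp) (List.isChain_cons_cons.mp hc).2)).copy rfl
      (List.getLast_cons (by simp)).symm

lemma support_walkOfList (l : List V) (h : l ≠ []) (hc : l.Chain' G.Adj) :
    (walkOfList l h hc).support = l := by
  induction l with
  | nil => exact absurd rfl h
  | cons a t ih =>
    cases t with
    | nil => simp [walkOfList]
    | cons b t' => exact congrArg (List.cons a) (ih _ _)

lemma traceable_of_list [DecidableEq V] (l : List V) (h : l ≠ []) (hc : l.Chain' G.Adj)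
    (hn : l.Nodup) (hall : ∀ v, v ∈ l) : Traceable G := by
  refine ⟨_, _, walkOfList l h hc, fun v => ?_⟩
  rw [support_walkOfList]
  exact List.count_eq_one_of_mem hn (hall v)

lemma traceable_iso {V W : Type} [DecidableEq V] [DecidableEq W] {G : SimpleGraph V}
    {G' : SimpleGraph W} (e : G ≃g G') (h : Traceable G) : Traceable G' := by
  obtain ⟨u, v, p, hp⟩ := h
  exact ⟨e u, e v, p.map e.toHom, hp.map e.toHom e.toEquiv.bijective⟩

end Walks


/-! ### The recursive construction -/

section Construction

variable (d : ℕ)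

/-- Vertex type of the level-`j` graph (which represents level `j+1` of the informal
construction); it has `d + d² + ⋯ + d^(j+1)` vertices. -/
@[reducible] def Vt : ℕ → Type
  | 0 => Fin d
  | j + 1 => Fin d ⊕ (Fin d × Vt j)

instance VtFintype : ∀ j, Fintype (Vt d j)
  | 0 => inferInstanceAs (Fintype (Fin d))
  | j + 1 => letI := VtFintype j; inferInstanceAs (Fintype (Fin d ⊕ (Fin d × Vt d j)))

noncomputable instance VtDecEq : ∀ j, DecidableEq (Vt d j)
  | 0 => inferInstanceAs (DecidableEq (Fin d))
  | j + 1 => letI := VtDecEq j; inferInstanceAs (DecidableEq (Fin d ⊕ (Fin d × Vt d j)))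

/-- The level-`j` graph. -/
def Gr : ∀ j, SimpleGraph (Vt d j)
  | 0 => SimpleGraph.fromRel (fun a b : Fin d => a.1 + 1 = b.1)
  | j + 1 => SimpleGraph.fromRel (fun u v : Fin d ⊕ (Fin d × Vt d j) =>
      match u, v with
      | Sum.inl a, Sum.inl b => a.1 + 1 = b.1
      | Sum.inl b, Sum.inr (a, _) => b = a ∨ b.1 = a.1 + 1
      | Sum.inr (a, x), Sum.inr (b, y) => a = b ∧ (Gr j).Adj x y
      | Sum.inr _, Sum.inl _ => False)

noncomputable instance GrDecAdj (j : ℕ) : DecidableRel (Gr d j).Adj := Classical.decRel _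

variable {d}

lemma gr0_adj {a b : Fin d} :
    (Gr d 0).Adj a b ↔ (a.1 + 1 = b.1 ∨ b.1 + 1 = a.1) := by
  show (SimpleGraph.fromRel _).Adj a b ↔ _
  rw [SimpleGraph.fromRel_adj]
  constructor
  · rintro ⟨-, h⟩; exact h
  · rintro h
    refine ⟨?_, h⟩
    rintro rfl
    omega

lemma gr_adj_inl_inl {j : ℕ} {a b : Fin d} :
    (Gr d (j+1)).Adj (Sum.inl a) (Sum.inl b) ↔ (a.1 + 1 = b.1 ∨ b.1 + 1 = a.1) := by
  show (SimpleGraph.fromRel _).Adj _ _ ↔ _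
  rw [SimpleGraph.fromRel_adj]
  constructor
  · rintro ⟨-, h⟩; exact h
  · rintro h
    refine ⟨?_, h⟩
    intro hab
    rw [Sum.inl.injEq] at hab
    subst hab
    omega

lemma gr_adj_inl_inr {j : ℕ} {a b : Fin d} {x : Vt d j} :
    (Gr d (j+1)).Adj (Sum.inl b) (Sum.inr (a, x)) ↔ (b = a ∨ b.1 = a.1 + 1) := by
  show (SimpleGraph.fromRel _).Adj _ _ ↔ _
  rw [SimpleGraph.fromRel_adj]
  constructor
  · rintro ⟨-, h | h⟩
    · exact h
    · exact absurd h not_false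
  · intro h
    exact ⟨by simp, Or.inl h⟩

lemma gr_adj_inr_inl {j : ℕ} {a b : Fin d} {x : Vt d j} :
    (Gr d (j+1)).Adj (Sum.inr (a, x)) (Sum.inl b) ↔ (b = a ∨ b.1 = a.1 + 1) := by
  rw [SimpleGraph.adj_comm]; exact gr_adj_inl_inr

lemma gr_adj_inr_inr {j : ℕ} {a b : Fin d} {x y : Vt d j} :
    (Gr d (j+1)).Adj (Sum.inr (a, x)) (Sum.inr (b, y)) ↔ (a = b ∧ (Gr d j).Adj x y) := by
  show (SimpleGraph.fromRel _).Adj _ _ ↔ _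
  rw [SimpleGraph.fromRel_adj]
  constructor
  · rintro ⟨hne, ⟨rfl, h⟩ | ⟨rfl, h⟩⟩
    · exact ⟨rfl, h⟩
    · exact ⟨rfl, h.symm⟩
  · rintro ⟨rfl, h⟩
    refine ⟨?_, Or.inl ⟨rfl, h⟩⟩
    intro hxy
    rw [Sum.inr.injEq, Prod.mk.injEq] at hxy
    exact (Gr d j).loopless.irrefl x (hxy.2 ▸ h)

lemma gr_not_adj_inl_inl' {j : ℕ} {a b : Fin d} (h : a = b) :
    ¬ (Gr d (j+1)).Adj (Sum.inl a) (Sum.inl b) := by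
  subst h; simp

end Construction


/-! ### Traceability of the construction -/

section Ham

variable (d : ℕ)

/-- The list of vertices of a Hamiltonian path in `Gr d j`. -/
def hamList : ∀ j, List (Vt d j)
  | 0 => List.finRange d
  | j + 1 => (List.finRange d).flatMap
      (fun a => Sum.inl a :: (hamList j).map (fun x => Sum.inr (a, x)))

variable {d}

lemma mem_hamList (hd : 1 ≤ d) : ∀ j (v : Vt d j), v ∈ hamList d j
  | 0, v => List.mem_finRange v
  | j + 1, Sum.inl a => by
      simp only [hamList, List.mem_flatMap]
      exact ⟨a, List.mem_finRange a, by simp⟩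
  | j + 1, Sum.inr (a, x) => by
      simp only [hamList, List.mem_flatMap]
      refine ⟨a, List.mem_finRange a, List.mem_cons_of_mem _ ?_⟩
      exact List.mem_map_of_mem (mem_hamList hd j x)

lemma hamList_ne_nil (hd : 1 ≤ d) (j : ℕ) : hamList d j ≠ [] := by
  have : Nonempty (Vt d j) := by
    cases j with
    | zero => exact ⟨(⟨0, hd⟩ : Fin d)⟩
    | succ j => exact ⟨Sum.inl ⟨0, hd⟩⟩
  obtain ⟨v⟩ := this
  exact List.ne_nil_of_mem (mem_hamList hd j v)

lemma nodup_hamList (hd : 1 ≤ d) : ∀ j, (hamList d j).Nodup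
  | 0 => List.nodup_finRange d
  | j + 1 => by
      rw [hamList, List.nodup_flatMap]
      constructor
      · intro a _
        refine List.Nodup.cons ?_ ((nodup_hamList hd j).map ?_)
        · simp
        · intro x y hxy
          have := Sum.inr.inj hxy
          exact (Prod.ext_iff.mp this).2
      · refine List.Pairwise.imp ?_ (List.nodup_finRange d)
        intro a b hab
        rw [Function.onFun, List.disjoint_left]
        rintro v hv hv'
        simp only [List.mem_cons, List.mem_map] at hv hv'
        rcases hv with rfl | ⟨x, -, rfl⟩
        · rcases hv' with h | ⟨y, -, h⟩
          · exact hab (Sum.inl.inj h)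
          · exact absurd h (by simp)
        · rcases hv' with h | ⟨y, -, h⟩
          · exact absurd h (by simp)
          · have : (b, y) = (a, x) := Sum.inr.inj h
            exact hab (Prod.ext_iff.mp this).1.symm

lemma chain'_finRange : (List.finRange d).Chain' (fun a b : Fin d => a.1 + 1 = b.1) := by
  rw [List.Chain', List.isChain_iff_getElem]
  intro i h
  simp only [List.getElem_finRange, List.length_finRange, Fin.coe_cast] at *

lemma chain'_hamList (hd : 1 ≤ d) : ∀ j, (hamList d j).Chain' (Gr d j).Adj
  | 0 => List.IsChain.imp (fun a b h => gr0_adj.mpr (Or.inl h)) chain'_finRange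
  | j + 1 => by
      have key : ∀ (a : Fin d) (v : Vt d (j+1)),
          v ∈ Sum.inl a :: (hamList d j).map (fun x => Sum.inr (a, x)) →
          v = Sum.inl a ∨ ∃ x, v = Sum.inr (a, x) := by
        intro a v hv
        simp only [List.mem_cons, List.mem_map] at hv
        rcases hv with rfl | ⟨x, -, rfl⟩
        · exact Or.inl rfl
        · exact Or.inr ⟨x, rfl⟩
      rw [hamList, show ∀ (l : List (Fin d)) f, l.flatMap f = (l.map f).flatten from
        fun l f => rfl]
      rw [List.Chain', List.isChain_flatten (by simp)]
      constructor
      · rintro l hl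
        simp only [List.mem_map] at hl
        obtain ⟨a, -, rfl⟩ := hl
        rw [List.isChain_cons]
        constructor
        · intro y hy
          rw [List.head?_map] at hy
          obtain ⟨x, -, rfl⟩ := Option.map_eq_some_iff.mp hy
          exact gr_adj_inl_inr.mpr (Or.inl rfl)
        · rw [List.isChain_map]
          exact List.IsChain.imp (fun x y h => gr_adj_inr_inr.mpr ⟨rfl, h⟩)
            (chain'_hamList hd j)
      · rw [List.isChain_map]
        refine List.IsChain.imp ?_ chain'_finRange
        intro a b hab x hx y hy
        have hxm := List.mem_of_mem_getLast? hx
        have hyy : y = Sum.inl b := by simpa using hy.symm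
        subst hyy
        rcases key a x hxm with rfl | ⟨z, rfl⟩
        · exact gr_adj_inl_inl.mpr (Or.inl hab)
        · exact gr_adj_inr_inl.mpr (Or.inr hab.symm)

end Ham

lemma traceable_Gr (hd : 1 ≤ d) (j : ℕ) : Traceable (Gr d j) :=
  traceable_of_list (hamList d j) (hamList_ne_nil hd j) (chain'_hamList hd j)
    (nodup_hamList hd j) (mem_hamList hd j)

/-! ### Cardinalities -/

section Card

variable {d : ℕ}

lemma card_Vt_zero : Fintype.card (Vt d 0) = d := by
  show Fintype.card (Fin d) = d
  simp

lemma card_Vt_succ (j : ℕ) : Fintype.card (Vt d (j+1)) = d + d * Fintype.card (Vt d j) := by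
  show Fintype.card (Fin d ⊕ (Fin d × Vt d j)) = _
  simp [Fintype.card_sum, Fintype.card_prod]

lemma card_Vt (j : ℕ) : Fintype.card (Vt d j) = ∑ i ∈ Finset.Icc 1 (j+1), d ^ i := by
  induction j with
  | zero => simp [card_Vt_zero]
  | succ j ih =>
      rw [card_Vt_succ, ih]
      have h2 : ∀ m : ℕ, (∑ i ∈ Finset.Icc 1 (m+1), d ^ i) = d + d * ∑ i ∈ Finset.Icc 1 m, d ^ i := by
        intro m
        have h1 : Finset.Icc 1 (m+1) = (Finset.Icc 0 m).map (addRightEmbedding 1) := by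
          rw [Finset.map_add_right_Icc]
        have h3 : Finset.Icc 0 m = insert 0 (Finset.Icc 1 m) := by
          ext i
          simp only [Finset.mem_Icc, Finset.mem_insert]
          omega
        rw [h1, Finset.sum_map, h3, Finset.sum_insert (by simp)]
        simp only [addRightEmbedding_apply, pow_succ, zero_add, pow_zero, one_mul,
          Finset.mul_sum]
        congr 1
        exact Finset.sum_congr rfl (fun i _ => by ring)
      rw [h2 (j+1)]

lemma lt_card_Vt (hd : 1 ≤ d) (j : ℕ) : j < Fintype.card (Vt d j) := by
  induction j with
  | zero => rw [card_Vt_zero]; omega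
  | succ j ih =>
      rw [card_Vt_succ]
      have : Fintype.card (Vt d j) ≤ d * Fintype.card (Vt d j) := Nat.le_mul_of_pos_left _ hd
      omega

lemma pow_le_card_Vt (j : ℕ) : d ^ (j+1) ≤ Fintype.card (Vt d j) := by
  rw [card_Vt]
  exact Finset.single_le_sum (f := fun i => d ^ i) (fun i _ => Nat.zero_le _)
    (Finset.mem_Icc.mpr ⟨by omega, le_rfl⟩)

end Card

/-! ### Edge count -/

section Edges

variable {d : ℕ}

lemma degree_Gr0_le (v : Vt d 0) : (Gr d 0).degree v ≤ 2 := by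
  have h := Finset.card_le_card_of_injOn
    (f := fun u : Vt d 0 => decide ((v : Fin d).1 + 1 = (u : Fin d).1))
    (s := (Gr d 0).neighborFinset v) (t := (Finset.univ : Finset Bool))
    (fun _ _ => Finset.mem_univ _) ?_
  · simpa using h
  · intro u hu u' hu' hf
    simp only [Finset.mem_coe, SimpleGraph.mem_neighborFinset, gr0_adj] at hu hu'
    simp only [decide_eq_decide] at hf
    have : (u : Fin d).1 = (u' : Fin d).1 := by omega
    exact Fin.ext this

lemma degree_Gr_succ_inl_le {j : ℕ} (b : Fin d) :
    (Gr d (j+1)).degree (Sum.inl b) ≤ 2 + 2 * Fintype.card (Vt d j) := by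
  classical
  have h := Finset.card_le_card_of_injOn
    (f := fun u : Vt d (j+1) =>
      match u with
      | Sum.inl a => Sum.inl (decide (b.1 + 1 = a.1))
      | Sum.inr (a, x) => Sum.inr ((decide (b = a), x)))
    (s := (Gr d (j+1)).neighborFinset (Sum.inl b))
    (t := (Finset.univ : Finset (Bool ⊕ Bool × Vt d j)))
    (fun _ _ => Finset.mem_univ _) ?_
  · calc (Gr d (j+1)).degree (Sum.inl b) ≤ Fintype.card (Bool ⊕ Bool × Vt d j) := by
          simpa using h
      _ = 2 + 2 * Fintype.card (Vt d j) := by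
          simp [Fintype.card_sum, Fintype.card_prod]
  · intro u hu u' hu' hf
    simp only [Finset.mem_coe, SimpleGraph.mem_neighborFinset] at hu hu'
    match u, u', hf with
    | Sum.inl a, Sum.inl a', hf => 
        rw [gr_adj_inl_inl] at hu hu'
        simp only [Sum.inl.injEq, decide_eq_decide] at hf
        have : a.1 = a'.1 := by omega
        exact congrArg _ (Fin.ext this)
    | Sum.inl a, Sum.inr (a', x'), hf => simp at hf
    | Sum.inr (a, x), Sum.inl a', hf => simp at hf
    | Sum.inr (a, x), Sum.inr (a', x'), hf =>
        rw [gr_adj_inl_inr] at hu hu'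
        simp only [Sum.inr.injEq, Prod.mk.injEq, decide_eq_decide] at hf
        obtain ⟨hf1, rfl⟩ := hf
        have : a = a' := by
          by_cases hba : b = a
          · exact (hba ▸ hf1.mp hba) ▸ rfl
          · have h1 : b.1 = a.1 + 1 := hu.resolve_left hba
            have hba' : ¬ b = a' := fun hh => hba (hf1.mpr hh)
            have h2 : b.1 = a'.1 + 1 := hu'.resolve_left hba'
            exact Fin.ext (by omega)
        rw [this]

lemma degree_Gr_succ_inr_le {j : ℕ} (a : Fin d) (x : Vt d j) :
    (Gr d (j+1)).degree (Sum.inr (a, x)) ≤ 2 + (Gr d j).degree x := by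
  classical
  have h := Finset.card_le_card_of_injOn
    (f := fun u : Vt d (j+1) =>
      match u with
      | Sum.inl b => Sum.inl (decide (b = a))
      | Sum.inr (c, y) => Sum.inr y)
    (s := (Gr d (j+1)).neighborFinset (Sum.inr (a, x)))
    (t := (Finset.univ : Finset Bool).disjSum ((Gr d j).neighborFinset x)) ?_ ?_
  · calc (Gr d (j+1)).degree (Sum.inr (a, x))
        ≤ ((Finset.univ : Finset Bool).disjSum ((Gr d j).neighborFinset x)).card := h
      _ = 2 + (Gr d j).degree x := by
          rw [Finset.card_disjSum, Finset.card_univ, Fintype.card_bool]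
          rfl
  · intro u hu
    simp only [Finset.mem_coe, SimpleGraph.mem_neighborFinset] at hu
    refine Finset.mem_coe.mpr ?_
    match u, hu with
    | Sum.inl b, hu => exact Finset.inl_mem_disjSum.mpr (Finset.mem_univ _)
    | Sum.inr (c, y), hu => 
        rw [gr_adj_inr_inr] at hu
        refine Finset.inr_mem_disjSum.mpr ?_
        rw [SimpleGraph.mem_neighborFinset]
        exact hu.2
  · intro u hu u' hu' hf
    simp only [Finset.mem_coe, SimpleGraph.mem_neighborFinset] at hu hu'
    match u, u', hf with
    | Sum.inl b, Sum.inl b', hf =>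
        rw [gr_adj_inr_inl] at hu hu'
        simp only [Sum.inl.injEq, decide_eq_decide] at hf
        have : b = b' := by
          by_cases hba : b = a
          · exact hba.trans (hf.mp hba).symm
          · have h1 : b.1 = a.1 + 1 := hu.resolve_left hba
            have hba' : ¬ b' = a := fun hh => hba (hf.mpr hh)
            have h2 : b'.1 = a.1 + 1 := hu'.resolve_left hba'
            exact Fin.ext (by omega)
        rw [this]
    | Sum.inl b, Sum.inr (c', y'), hf => simp at hf
    | Sum.inr (c, y), Sum.inl b', hf => simp at hf
    | Sum.inr (c, y), Sum.inr (c', y'), hf =>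
        rw [gr_adj_inr_inr] at hu hu'
        simp only [Sum.inr.injEq] at hf
        rw [hu.1.symm.trans hu'.1, hf]

lemma edge_Gr_le : ∀ j, (Gr d j).edgeFinset.card ≤ 2 * (j+1) * Fintype.card (Vt d j) := by
  intro j
  induction j with
  | zero =>
      have hsum := SimpleGraph.sum_degrees_eq_twice_card_edges (Gr d 0)
      have hb : ∑ v : Vt d 0, (Gr d 0).degree v ≤ ∑ _v : Vt d 0, 2 :=
        Finset.sum_le_sum (fun v _ => degree_Gr0_le v)
      rw [Finset.sum_const, Finset.card_univ, smul_eq_mul] at hb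
      omega
  | succ j ih =>
      have hsum := SimpleGraph.sum_degrees_eq_twice_card_edges (Gr d (j+1))
      have hsplit : ∑ v : Vt d (j+1), (Gr d (j+1)).degree v
          = (∑ a : Fin d, (Gr d (j+1)).degree (Sum.inl a))
            + ∑ p : Fin d × Vt d j, (Gr d (j+1)).degree (Sum.inr p) :=
        Fintype.sum_sum_type _
      have h1 : ∑ a : Fin d, (Gr d (j+1)).degree (Sum.inl a)
          ≤ d * (2 + 2 * Fintype.card (Vt d j)) := by
        calc ∑ a : Fin d, (Gr d (j+1)).degree (Sum.inl a)
            ≤ ∑ _a : Fin d, (2 + 2 * Fintype.card (Vt d j)) :=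
              Finset.sum_le_sum (fun a _ => degree_Gr_succ_inl_le a)
          _ = d * (2 + 2 * Fintype.card (Vt d j)) := by
              rw [Finset.sum_const, Finset.card_univ, smul_eq_mul, Fintype.card_fin]
      have h2 : ∑ p : Fin d × Vt d j, (Gr d (j+1)).degree (Sum.inr p)
          ≤ d * (2 * Fintype.card (Vt d j) + 2 * (Gr d j).edgeFinset.card) := by
        calc ∑ p : Fin d × Vt d j, (Gr d (j+1)).degree (Sum.inr p)
            ≤ ∑ p : Fin d × Vt d j, (2 + (Gr d j).degree p.2) :=
              Finset.sum_le_sum (fun p _ => degree_Gr_succ_inr_le p.1 p.2)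
          _ = ∑ _a : Fin d, ∑ x : Vt d j, (2 + (Gr d j).degree x) := Fintype.sum_prod_type _
          _ = d * (2 * Fintype.card (Vt d j) + 2 * (Gr d j).edgeFinset.card) := by
              rw [Finset.sum_const, smul_eq_mul, Finset.card_univ, Fintype.card_fin]
              congr 1
              rw [Finset.sum_add_distrib, Finset.sum_const, Finset.card_univ, smul_eq_mul,
                mul_comm, SimpleGraph.sum_degrees_eq_twice_card_edges]
      have hcard := card_Vt_succ (d := d) j
      set E := (Gr d (j+1)).edgeFinset.card
      set Ej := (Gr d j).edgeFinset.card
      set N := Fintype.card (Vt d j)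
      rw [hsplit] at hsum
      rw [hcard]
      nlinarith [hsum, h1, h2, Nat.mul_le_mul_left d ih, Nat.zero_le N, Nat.zero_le d,
        Nat.zero_le (d * N), Nat.zero_le (j * d)]

end Edges


/-! ### Modular width : generic lemmas -/

section MW

lemma mwAux_succ {m f : ℕ} {V : Type} [Fintype V] [DecidableEq V] {G : SimpleGraph V} :
    MWleAux m (f+1) V G ↔
      (Fintype.card V ≤ 1 ∨
      ∃ P : Finpartition (Finset.univ : Finset V),
        2 ≤ P.parts.card ∧
        (∀ M ∈ P.parts, IsModule G (↑M : Set V)) ∧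
        (P.parts.card ≤ m ∨
          (∀ M ∈ P.parts, ∀ M' ∈ P.parts, M ≠ M' → ∀ u ∈ M, ∀ v ∈ M', G.Adj u v) ∨
          (∀ M ∈ P.parts, ∀ M' ∈ P.parts, M ≠ M' → ∀ u ∈ M, ∀ v ∈ M', ¬ G.Adj u v)) ∧
        (∀ M ∈ P.parts, MWleAux m f _ (G.induce (↑M : Set V)))) :=
  Iff.rfl

lemma mwAux_zero {m : ℕ} {V : Type} [Fintype V] [DecidableEq V] {G : SimpleGraph V} :
    MWleAux m 0 V G ↔ Fintype.card V ≤ 1 :=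
  Iff.rfl

lemma mwAux_of_card_le_one {m f : ℕ} {V : Type} [Fintype V] [DecidableEq V]
    {G : SimpleGraph V} (h : Fintype.card V ≤ 1) : MWleAux m f V G := by
  cases f with
  | zero => exact mwAux_zero.mpr h
  | succ f => exact mwAux_succ.mpr (Or.inl h)

variable {V W : Type} [Fintype V] [DecidableEq V] [Fintype W] [DecidableEq W]

omit [Fintype V] [DecidableEq V] [Fintype W] in
lemma mem_image_equiv' (e : V ≃ W) {s : Finset V} {w : W} :
    w ∈ s.image e ↔ e.symm w ∈ s := by
  constructor
  · intro h
    obtain ⟨a, ha, rfl⟩ := Finset.mem_image.mp h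
    simpa using ha
  · intro h
    refine Finset.mem_image.mpr ⟨e.symm w, h, by simp⟩

lemma parts_eq_part {α : Type*} [Fintype α] [DecidableEq α]
    (P : Finpartition (Finset.univ : Finset α)) {M : Finset α}
    (hM : M ∈ P.parts) : ∃ x, M = P.part x := by
  obtain ⟨x, hx⟩ := P.nonempty_of_mem_parts hM
  exact ⟨x, (P.part_eq_of_mem hM hx).symm⟩

/-- Setoid whose classes transport a finpartition of `univ` along an equivalence. -/
def pSetoid (e : V ≃ W) (P : Finpartition (Finset.univ : Finset V)) : Setoid W :=
  ⟨fun w w' => P.part (e.symm w) = P.part (e.symm w'), ⟨fun _ => rfl, Eq.symm, Eq.trans⟩⟩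

noncomputable instance pSetoidDec (e : V ≃ W) (P : Finpartition (Finset.univ : Finset V)) :
    DecidableRel (pSetoid e P).r := fun _ _ => Classical.dec _

/-- The transport of a finpartition of `univ` along an equivalence. -/
noncomputable def pTrans (e : V ≃ W) (P : Finpartition (Finset.univ : Finset V)) :
    Finpartition (Finset.univ : Finset W) :=
  Finpartition.ofSetoid (pSetoid e P)

lemma mem_pTrans_part (e : V ≃ W) (P : Finpartition (Finset.univ : Finset V)) {w b : W} :
    b ∈ (pTrans e P).part w ↔ P.part (e.symm w) = P.part (e.symm b) :=
  Finpartition.mem_part_ofSetoid_iff_rel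

lemma pTrans_parts (e : V ≃ W) (P : Finpartition (Finset.univ : Finset V)) :
    (pTrans e P).parts = P.parts.image (fun M => M.image e) := by
  ext M'
  constructor
  · intro hM'
    obtain ⟨w, rfl⟩ := parts_eq_part _ hM'
    refine Finset.mem_image.mpr ⟨P.part (e.symm w), P.part_mem.mpr (Finset.mem_univ _), ?_⟩
    ext b
    rw [mem_image_equiv', mem_pTrans_part,
      P.mem_part_iff_part_eq_part (Finset.mem_univ _) (Finset.mem_univ _)]
    exact eq_comm
  · intro h
    obtain ⟨M, hM, rfl⟩ := Finset.mem_image.mp h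
    obtain ⟨x, hx⟩ := parts_eq_part _ hM
    have key : M.image e = (pTrans e P).part (e x) := by
      ext b
      rw [mem_image_equiv', mem_pTrans_part, Equiv.symm_apply_apply, hx,
        P.mem_part_iff_part_eq_part (Finset.mem_univ _) (Finset.mem_univ _)]
      exact eq_comm
    rw [key]
    exact (pTrans e P).part_mem.mpr (Finset.mem_univ _)

/-- Transport of induced subgraphs along a graph isomorphism. -/
noncomputable def isoInduce {G : SimpleGraph V} {G' : SimpleGraph W} (e : G ≃g G')
    (M : Finset V) :
    G.induce ((M : Finset V) : Set V) ≃g G'.induce ((M.image e.toEquiv : Finset W) : Set W) where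
  toEquiv := e.toEquiv.subtypeEquiv (fun x => by
    simp only [Finset.mem_coe]
    constructor
    · exact fun h => Finset.mem_image_of_mem _ h
    · intro h
      have := (mem_image_equiv' e.toEquiv).mp h
      rwa [Equiv.symm_apply_apply] at this)
  map_rel_iff' := by
    intro a b
    simp only [Equiv.subtypeEquiv_apply, SimpleGraph.comap_adj, Function.Embedding.coe_subtype]
    exact e.map_adj_iff

lemma mwAux_iso {m : ℕ} : ∀ (f : ℕ) {V W : Type} [Fintype V] [DecidableEq V]
    [Fintype W] [DecidableEq W] {G : SimpleGraph V} {G' : SimpleGraph W}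
    (e : G ≃g G'), MWleAux m f V G → MWleAux m f W G'
  | 0 => by
      intro e h
      rw [mwAux_zero] at h ⊢
      rwa [← Fintype.card_congr e.toEquiv]
  | (f+1) => by
      intro e h
      rename_i V W iV dV iW dW G G'
      rw [mwAux_succ] at h ⊢
      rcases h with h | ⟨P, hP2, hPmod, hPq, hPrec⟩
      · exact Or.inl (by rwa [← Fintype.card_congr e.toEquiv])
      right
      have hinj : Function.Injective (Finset.image e.toEquiv) :=
        Finset.image_injective e.toEquiv.injective
      have hcard : (pTrans e.toEquiv P).parts.card = P.parts.card := by
        rw [pTrans_parts]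
        exact Finset.card_image_of_injective _ hinj
      refine ⟨pTrans e.toEquiv P, by rwa [hcard], ?_, ?_, ?_⟩
      · -- modules
        intro M' hM'
        rw [pTrans_parts] at hM'
        obtain ⟨M, hM, rfl⟩ := Finset.mem_image.mp hM'
        intro u hu v hv w hw
        have hu' : e.toEquiv.symm u ∈ (M : Set V) :=
          Finset.mem_coe.mpr ((mem_image_equiv' e.toEquiv).mp (Finset.mem_coe.mp hu))
        have hv' : e.toEquiv.symm v ∈ (M : Set V) :=
          Finset.mem_coe.mpr ((mem_image_equiv' e.toEquiv).mp (Finset.mem_coe.mp hv))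
        have hw' : e.toEquiv.symm w ∉ (M : Set V) := by
          intro hc
          exact hw (Finset.mem_coe.mpr ((mem_image_equiv' e.toEquiv).mpr (Finset.mem_coe.mp hc)))
        have key := hPmod M hM _ hu' _ hv' _ hw'
        have h1 : G'.Adj u w ↔ G.Adj (e.toEquiv.symm u) (e.toEquiv.symm w) :=
          (SimpleGraph.Iso.map_adj_iff e.symm).symm
        have h2 : G'.Adj v w ↔ G.Adj (e.toEquiv.symm v) (e.toEquiv.symm w) :=
          (SimpleGraph.Iso.map_adj_iff e.symm).symm
        rw [h1, h2]
        exact key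
      · -- quotient condition
        rcases hPq with h | h | h
        · exact Or.inl (by rwa [hcard])
        · refine Or.inr (Or.inl ?_)
          intro M' hM' M'' hM'' hne u hu v hv
          rw [pTrans_parts] at hM' hM''
          obtain ⟨M, hM, rfl⟩ := Finset.mem_image.mp hM'
          obtain ⟨Mb, hMb, rfl⟩ := Finset.mem_image.mp hM''
          have hne' : M ≠ Mb := fun hc => hne (by rw [hc])
          have hu' := (mem_image_equiv' e.toEquiv).mp hu
          have hv' := (mem_image_equiv' e.toEquiv).mp hv
          have key := h M hM Mb hMb hne' _ hu' _ hv'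
          exact (SimpleGraph.Iso.map_adj_iff e.symm).symm.mpr key
        · refine Or.inr (Or.inr ?_)
          intro M' hM' M'' hM'' hne u hu v hv
          rw [pTrans_parts] at hM' hM''
          obtain ⟨M, hM, rfl⟩ := Finset.mem_image.mp hM'
          obtain ⟨Mb, hMb, rfl⟩ := Finset.mem_image.mp hM''
          have hne' : M ≠ Mb := fun hc => hne (by rw [hc])
          have hu' := (mem_image_equiv' e.toEquiv).mp hu
          have hv' := (mem_image_equiv' e.toEquiv).mp hv
          have key := h M hM Mb hMb hne' _ hu' _ hv'
          intro hc
          exact key ((SimpleGraph.Iso.map_adj_iff e.symm).symm.mp hc)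
      · -- recursion
        intro M' hM'
        rw [pTrans_parts] at hM'
        obtain ⟨M, hM, rfl⟩ := Finset.mem_image.mp hM'
        exact mwAux_iso f (isoInduce e M) (hPrec M hM)

/-- The kernel partition of a map. -/
def kerSetoid {α β : Type*} (c : α → β) : Setoid α :=
  ⟨fun u v => c u = c v, ⟨fun _ => rfl, Eq.symm, Eq.trans⟩⟩

noncomputable instance kerSetoidDec {α β : Type*} (c : α → β) :
    DecidableRel (kerSetoid c).r := fun _ _ => Classical.dec _

noncomputable def kerPartition {α : Type*} [Fintype α] [DecidableEq α] {β : Type*}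
    (c : α → β) : Finpartition (Finset.univ : Finset α) :=
  Finpartition.ofSetoid (kerSetoid c)

lemma mem_kerPartition_part {α : Type*} [Fintype α] [DecidableEq α] {β : Type*}
    {c : α → β} {u b : α} : b ∈ (kerPartition c).part u ↔ c u = c b :=
  Finpartition.mem_part_ofSetoid_iff_rel

lemma kerPartition_parts_card_le {α : Type*} [Fintype α] [DecidableEq α] {β : Type*}
    [Fintype β] [DecidableEq β] (c : α → β) :
    (kerPartition c).parts.card ≤ Fintype.card β := by
  have hsub : (kerPartition c).parts ⊆
      Finset.univ.image (fun i : β => Finset.univ.filter (fun b => i = c b)) := by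
    intro M hM
    obtain ⟨u, rfl⟩ := parts_eq_part _ hM
    refine Finset.mem_image.mpr ⟨c u, Finset.mem_univ _, ?_⟩
    ext b
    rw [Finset.mem_filter, mem_kerPartition_part]
    simp
  calc (kerPartition c).parts.card ≤ _ := Finset.card_le_card hsub
    _ ≤ (Finset.univ : Finset β).card := Finset.card_image_le
    _ = Fintype.card β := Finset.card_univ

lemma kerPartition_two_le {α : Type*} [Fintype α] [DecidableEq α] {β : Type*}
    {c : α → β} {u v : α} (h : c u ≠ c v) : 2 ≤ (kerPartition c).parts.card := by
  rw [show (2 : ℕ) = 1 + 1 by rfl]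
  rw [Nat.add_one_le_iff]
  rw [Finset.one_lt_card]
  refine ⟨(kerPartition c).part u, (kerPartition c).part_mem.mpr (Finset.mem_univ _),
    (kerPartition c).part v, (kerPartition c).part_mem.mpr (Finset.mem_univ _), ?_⟩
  intro hc
  have hu : u ∈ (kerPartition c).part v := hc ▸ (kerPartition c).mem_part (Finset.mem_univ u)
  exact h (mem_kerPartition_part.mp hu).symm

lemma mwAux_of_card_le {m f : ℕ} {V : Type} [Fintype V] [DecidableEq V]
    (G : SimpleGraph V) (h2 : 2 ≤ Fintype.card V) (hm : Fintype.card V ≤ m) :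
    MWleAux m (f+1) V G := by
  rw [mwAux_succ]
  right
  have hpart : ∀ M ∈ (kerPartition (id : V → V)).parts, ∃ x : V, M = {x} := by
    intro M hM
    obtain ⟨x, rfl⟩ := parts_eq_part _ hM
    refine ⟨x, ?_⟩
    ext b
    rw [mem_kerPartition_part, Finset.mem_singleton]
    exact ⟨fun h => h.symm, fun h => h.symm⟩
  obtain ⟨u, v, huv⟩ := Fintype.exists_pair_of_one_lt_card (α := V) (by omega)
  refine ⟨kerPartition (id : V → V),
    kerPartition_two_le (c := (id : V → V)) (by simpa using huv), ?_, ?_, ?_⟩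
  · intro M hM
    obtain ⟨x, rfl⟩ := hpart M hM
    intro a ha b hb w hw
    simp only [Finset.mem_coe, Finset.mem_singleton] at ha hb
    rw [ha, hb]
  · exact Or.inl (le_trans (kerPartition_parts_card_le (id : V → V)) hm)
  · intro M hM
    obtain ⟨x, rfl⟩ := hpart M hM
    apply mwAux_of_card_le_one
    rw [Fintype.card_le_one_iff]
    intro a b
    have ha : (a : V) ∈ ({x} : Finset V) := a.2
    have hb : (b : V) ∈ ({x} : Finset V) := b.2
    rw [Finset.mem_singleton] at ha hb
    exact Subtype.ext (ha.trans hb.symm)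

end MW

/-! ### Modular width of the construction -/

section MWGr

variable {d : ℕ}

/-- The classifying map at a successor level. -/
def cmap (d j : ℕ) : Vt d (j+1) → Fin d ⊕ Fin d :=
  fun u => match u with
  | Sum.inl a => Sum.inl a
  | Sum.inr (a, _) => Sum.inr a

def vdef (hd : 0 < d) : ∀ j, Vt d j
  | 0 => (⟨0, hd⟩ : Fin d)
  | _ + 1 => Sum.inl ⟨0, hd⟩

def extract (hd : 0 < d) (j : ℕ) : Vt d (j+1) → Vt d j
  | Sum.inl _ => vdef hd j
  | Sum.inr (_, p) => p

noncomputable def partIso (hd : 0 < d) {j : ℕ} {u : Vt d (j+1)} {a : Fin d}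
    (hu : cmap d j u = Sum.inr a) :
    Gr d j ≃g (Gr d (j+1)).induce
      (((kerPartition (cmap d j)).part u : Finset (Vt d (j+1))) : Set (Vt d (j+1))) where
  toFun p := ⟨Sum.inr (a, p), Finset.mem_coe.mpr (mem_kerPartition_part.mpr (by rw [hu]; rfl))⟩
  invFun z := extract hd j z.1
  left_inv p := rfl
  right_inv z := by
    obtain ⟨w, hw⟩ := z
    have hm := mem_kerPartition_part.mp (Finset.mem_coe.mp hw)
    rw [hu] at hm
    match w, hm with
    | Sum.inl b, hm => exact absurd hm (by simp [cmap])
    | Sum.inr (b, p), hm =>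
        have hab : a = b := Sum.inr.inj hm
        subst hab
        rfl
  map_rel_iff' := by
    intro p q
    show (Gr d (j+1)).Adj (Sum.inr (a, p)) (Sum.inr (a, q)) ↔ _
    rw [gr_adj_inr_inr]
    simp

lemma mw_Gr (hd : 2 ≤ d) : ∀ j f, j < f → MWleAux (2*d) f (Vt d j) (Gr d j)
  | 0, f, hf => by
      obtain ⟨f', rfl⟩ : ∃ f', f = f' + 1 := ⟨f - 1, by omega⟩
      apply mwAux_of_card_le
      · rw [card_Vt_zero]; omega
      · rw [card_Vt_zero]; omega
  | (j+1), f, hf => by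
      obtain ⟨f', rfl⟩ : ∃ f', f = f' + 1 := ⟨f - 1, by omega⟩
      rw [mwAux_succ]
      right
      have hpart : ∀ M ∈ (kerPartition (cmap d j)).parts,
          ∃ u, M = (kerPartition (cmap d j)).part u := fun M hM => parts_eq_part _ hM
      refine ⟨kerPartition (cmap d j), ?_, ?_, ?_, ?_⟩
      · refine kerPartition_two_le (c := cmap d j) (u := Sum.inl ⟨0, by omega⟩)
          (v := Sum.inl ⟨1, by omega⟩) ?_
        intro hc
        have : (⟨0, by omega⟩ : Fin d) = ⟨1, by omega⟩ := Sum.inl.inj hc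
        have := Fin.mk.injEq 0 (by omega : (0:ℕ) < d) 1 (by omega) ▸ this
        simp at this
      · -- modules
        intro M hM
        obtain ⟨u, rfl⟩ := hpart M hM
        intro x hx y hy w hw
        simp only [Finset.mem_coe] at hx hy hw
        rw [mem_kerPartition_part] at hx hy
        have hxy : cmap d j x = cmap d j y := hx.symm.trans hy
        have hwx : cmap d j x ≠ cmap d j w := fun hc =>
          hw (mem_kerPartition_part.mpr (hx.trans hc))
        clear hx hy hw hM
        match x, y, w, hxy, hwx with
        | Sum.inl a, Sum.inl b, w, hxy, hwx =>
            have hab : a = b := Sum.inl.inj hxy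
            subst hab
            exact Iff.rfl
        | Sum.inl a, Sum.inr (b, q), w, hxy, hwx => exact absurd hxy (by simp [cmap])
        | Sum.inr (a, p), Sum.inl b, w, hxy, hwx => exact absurd hxy (by simp [cmap])
        | Sum.inr (a, p), Sum.inr (b, q), Sum.inl c, hxy, hwx =>
            have hab : a = b := Sum.inr.inj hxy
            subst hab
            rw [gr_adj_inr_inl, gr_adj_inr_inl]
        | Sum.inr (a, p), Sum.inr (b, q), Sum.inr (c, z), hxy, hwx =>
            have hab : a = b := Sum.inr.inj hxy
            subst hab
            have hca : ¬ (a = c) := fun hc => hwx (by simp [cmap, hc])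
            rw [gr_adj_inr_inr, gr_adj_inr_inr]
            constructor
            · rintro ⟨hc, -⟩; exact absurd hc hca
            · rintro ⟨hc, -⟩; exact absurd hc hca
      · -- quotient condition: at most 2d parts
        refine Or.inl ?_
        calc (kerPartition (cmap d j)).parts.card
            ≤ Fintype.card (Fin d ⊕ Fin d) := kerPartition_parts_card_le _
          _ = 2 * d := by simp [Fintype.card_sum]; omega
      · -- recursion
        intro M hM
        obtain ⟨u, rfl⟩ := hpart M hM
        cases hc : cmap d j u with
        | inl b =>
            apply mwAux_of_card_le_one
            rw [Fintype.card_le_one_iff]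
            have key : ∀ t : Vt d (j+1), t ∈ (kerPartition (cmap d j)).part u →
                t = Sum.inl b := by
              intro t ht
              have hm := mem_kerPartition_part.mp ht
              rw [hc] at hm
              match t, hm with
              | Sum.inl a, hm => exact congrArg Sum.inl (Sum.inl.inj hm).symm
              | Sum.inr (a, p), hm => exact absurd hm (by simp [cmap])
            intro z z'
            exact Subtype.ext ((key z.1 (Finset.mem_coe.mp z.2)).trans
              (key z'.1 (Finset.mem_coe.mp z'.2)).symm)
        | inr a =>
            exact mwAux_iso f' (partIso (by omega) hc) (mw_Gr hd j f' (by omega))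

end MWGr

end Stmt7Aux

/-- For every `d ≥ 2` and `k ≥ 1`, there is a traceable graph on `n = d + d² + ⋯ + d^k`
vertices with modular-width at most `2d` and at most `2·n·log_d n` edges. -/
theorem stmt_7 (d : ℕ) (hd : 2 ≤ d) (k : ℕ) (hk : 1 ≤ k) (n : ℕ)
    (hn : n = ∑ i ∈ Finset.Icc 1 k, d ^ i) :
    ∃ G : SimpleGraph (Fin n), Traceable G ∧ MWle (2 * d) (Fin n) G ∧
      (G.edgeSet.ncard : ℝ) ≤ 2 * (n : ℝ) * Real.logb d (n : ℝ) := by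
  classical
  open Stmt7Aux in
  obtain ⟨j, rfl⟩ : ∃ j, k = j + 1 := ⟨k - 1, by omega⟩
  have hcard : Fintype.card (Vt d j) = n := by rw [card_Vt, hn]
  let e : Vt d j ≃ Fin n := (Fintype.equivFin (Vt d j)).trans (finCongr hcard)
  let G' : SimpleGraph (Fin n) :=
    { Adj := fun x y => (Gr d j).Adj (e.symm x) (e.symm y)
      symm := ⟨fun x y h => (Gr d j).adj_symm h⟩
      loopless := ⟨fun x h => (Gr d j).irrefl h⟩ }
  have iso : Gr d j ≃g G' := ⟨e, by intro u v; simp [G']⟩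
  refine ⟨G', traceable_iso iso (traceable_Gr (by omega) j), ?_, ?_⟩
  · -- modular width
    show MWleAux (2*d) (Fintype.card (Fin n)) (Fin n) G'
    refine mwAux_iso _ iso (mw_Gr hd j _ ?_)
    rw [Fintype.card_fin, ← hcard]
    exact lt_card_Vt (by omega) j
  · -- edge bound
    have hE : G'.edgeSet.ncard = (Gr d j).edgeFinset.card := by
      rw [← Nat.card_coe_set_eq, SimpleGraph.edgeFinset_card, ← Nat.card_eq_fintype_card]
      exact Nat.card_congr iso.mapEdgeSet.symm
    have hEn : (Gr d j).edgeFinset.card ≤ 2 * (j+1) * n := by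
      rw [← hcard]
      exact edge_Gr_le j
    have hn1 : 1 ≤ n := by
      have := lt_card_Vt (show 1 ≤ d by omega) j
      omega
    have hdn : (d : ℝ) ^ (j+1) ≤ (n : ℝ) := by
      have := pow_le_card_Vt (d := d) j
      rw [hcard] at this
      exact_mod_cast this
    have hd1 : (1 : ℝ) < (d : ℝ) := by exact_mod_cast (by omega : 1 < d)
    have hlogb : ((j:ℝ)+1) ≤ Real.logb d n := by
      have h1 : Real.logb d ((d:ℝ) ^ (j+1)) ≤ Real.logb d n :=
        Real.logb_le_logb_of_le hd1 (by positivity) hdn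
      rw [Real.logb_pow, Real.logb_self_eq_one hd1, mul_one] at h1
      exact_mod_cast h1
    calc (G'.edgeSet.ncard : ℝ) = ((Gr d j).edgeFinset.card : ℝ) := by rw [hE]
      _ ≤ 2 * ((j:ℝ)+1) * n := by exact_mod_cast hEn
      _ = 2 * (n:ℝ) * ((j:ℝ)+1) := by ring
      _ ≤ 2 * (n:ℝ) * Real.logb d n := by
          have hn0 : (0:ℝ) ≤ 2 * (n:ℝ) := by positivity
          exact mul_le_mul_of_nonneg_left hlogb hn0
end

section
/- Let m ≥ 2 and d ≥ 1 be integers, and let G be a traceable simple graph on n ≥ 2 vertices that admits a (d,m)-tree-model. Then G has at least (1/(16m))·n^(1 + 1/(2^d − 1)) edges. -/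
set_option linter.unusedSectionVars false
set_option linter.unusedVariables false
set_option maxHeartbeats 1000000
open Finset


/-- A `(d,m)`-tree-model of a graph `G`: a rooted tree whose leaves are exactly the
vertices of `G`, with every root-to-leaf path of length exactly `d`, each leaf coloured
by one of `m` colours, together with a signature `S ⊆ [m]² × [d]`, symmetric in the two
colours, such that two distinct vertices `u` (coloured `i`) and `v` (coloured `j`) at
tree-distance `2ℓ` are adjacent in `G` iff `(i,j,ℓ) ∈ S`.

The tree is encoded by ancestor maps: `anc t v` is the ancestor of the leaf `v` at
depth `t` (nodes at each fixed depth being identified with natural numbers); the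
depth of the deepest common ancestor of two leaves `u ≠ v` is
`Nat.findGreatest (fun t => anc t u = anc t v) d`, and their tree-distance is twice
`d` minus this depth. -/
structure TreeModel {V : Type*} (G : SimpleGraph V) (d m : ℕ) where
  /-- the ancestor of leaf `v` at depth `t` -/
  anc : ℕ → V → ℕ
  /-- all leaves have the same ancestor at depth `0` (the root) -/
  root_eq : ∀ u v : V, anc 0 u = anc 0 v
  /-- distinct vertices of `G` are distinct leaves (the nodes at depth `d`) -/
  leaf_inj : Function.Injective (anc d)
  /-- coherence: two leaves with the same ancestor at depth `t + 1` have the same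
  ancestor at depth `t` -/
  anc_refine : ∀ t < d, ∀ u v : V, anc (t + 1) u = anc (t + 1) v → anc t u = anc t v
  /-- the colour assigned to each leaf -/
  colour : V → Fin m
  /-- the signature -/
  sig : Set (Fin m × Fin m × ℕ)
  /-- the signature is symmetric in the colours -/
  sig_symm : ∀ i j ℓ, (i, j, ℓ) ∈ sig → (j, i, ℓ) ∈ sig
  /-- the third coordinate of the signature ranges in `[d]` -/
  sig_mem : ∀ i j ℓ, (i, j, ℓ) ∈ sig → 1 ≤ ℓ ∧ ℓ ≤ d
  /-- two distinct vertices at tree-distance `2ℓ` are adjacent iff the signature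
  contains their colours together with `ℓ` -/
  adj_iff : ∀ u v : V, u ≠ v →
    (G.Adj u v ↔
      (colour u, colour v, d - Nat.findGreatest (fun t => anc t u = anc t v) d) ∈ sig)


namespace Stmt8Proof


/-- Radon's inequality (Hölder form). -/
lemma radon {ι : Type*} (s : Finset ι) (a b : ι → ℝ) (κ : ℝ) (hκ : 0 < κ)
    (ha : ∀ i ∈ s, 0 ≤ a i) (hb : ∀ i ∈ s, 1 ≤ b i) (hs : s.Nonempty) :
    (∑ i ∈ s, a i) ^ (1+κ) ≤ (∑ i ∈ s, (a i) ^ (1+κ) / (b i) ^ κ) * (∑ i ∈ s, b i) ^ κ := by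
  have hbpos : ∀ i ∈ s, (0:ℝ) < b i := fun i hi => lt_of_lt_of_le one_pos (hb i hi)
  have hSb : (0:ℝ) < ∑ i ∈ s, b i := Finset.sum_pos hbpos hs
  set S := ∑ i ∈ s, b i with hS
  have key := Real.rpow_arith_mean_le_arith_mean_rpow s (fun i => b i / S)
      (fun i => a i / b i)
      (fun i hi => div_nonneg (hbpos i hi).le hSb.le)
      (by rw [← Finset.sum_div]; field_simp; exact hS.symm)
      (fun i hi => div_nonneg (ha i hi) (hbpos i hi).le)
      (p := 1 + κ) (by linarith)
  have h1 : (∑ i ∈ s, b i / S * (a i / b i)) = (∑ i ∈ s, a i) / S := by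
    rw [Finset.sum_div]
    apply Finset.sum_congr rfl
    intro i hi
    have := (hbpos i hi).ne'
    field_simp
  rw [h1] at key
  have h2 : ∀ i ∈ s, b i / S * (a i / b i) ^ (1+κ) = (a i ^ (1+κ) / b i ^ κ) / S := by
    intro i hi
    have hbi := hbpos i hi
    have hai := ha i hi
    rw [Real.div_rpow hai hbi.le]
    have hb1 : b i ^ (1+κ) = b i ^ κ * b i := by
      rw [add_comm, Real.rpow_add hbi, Real.rpow_one]
    rw [hb1]
    have h2a : b i ^ κ ≠ 0 := by positivity
    field_simp
  rw [Finset.sum_congr rfl h2, ← Finset.sum_div] at key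
  have h3 : ((∑ i ∈ s, a i) / S) ^ (1+κ) = (∑ i ∈ s, a i) ^ (1+κ) / S ^ (1+κ) :=
    Real.div_rpow (Finset.sum_nonneg ha) hSb.le _
  rw [h3] at key
  have h4 : S ^ (1+κ) = S ^ κ * S := by rw [add_comm, Real.rpow_add hSb, Real.rpow_one]
  rw [div_le_div_iff₀ (Real.rpow_pos_of_pos hSb _) hSb, h4, ← mul_assoc] at key
  exact (mul_le_mul_iff_of_pos_right hSb).mp key


lemma claim_poly (m B y : ℝ) (hm : 1 ≤ m) (hB1 : 1 ≤ B) (hBint : B = 1 ∨ 2 ≤ B)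
    (h4 : 4*m*B ≤ y) : (y - 4*m*B)^2 ≤ B*y^2 - B^2*y := by
  have hy : 4*m ≤ y := by nlinarith
  rcases hBint with hBeq | hB2
  · subst hBeq; nlinarith
  · have hBpos : (0:ℝ) < B := by linarith
    have hypos : (0:ℝ) < y := by nlinarith
    nlinarith [mul_nonneg (mul_nonneg (by linarith : (0:ℝ) ≤ B - 2) hypos.le) hypos.le,
      mul_nonneg (mul_nonneg (mul_nonneg hBpos.le hBpos.le) hypos.le) (by linarith : (0:ℝ) ≤ 2*m - 1),
      mul_nonneg (mul_nonneg (by nlinarith : (0:ℝ) ≤ 8*m*B) hBpos.le) (by linarith : (0:ℝ) ≤ y - 4*m*B),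
      mul_nonneg (mul_nonneg hBpos.le hypos.le) (by linarith : (0:ℝ) ≤ y - 4*m*B)]

lemma quad_ineq (m B y τ : ℝ) (hm : 1 ≤ m) (hB1 : 1 ≤ B) (hBint : B = 1 ∨ 2 ≤ B)
    (hτ : 0 ≤ τ) (hyB : B ≤ y) : (y/B) * (τ - (y - B)) ≤ 4*m*τ + τ^2/4 := by
  have hBpos : (0:ℝ) < B := by linarith
  have hypos : (0:ℝ) < y := by linarith
  rw [div_mul_eq_mul_div, div_le_iff₀ hBpos]
  by_cases h4 : y ≤ 4*m*B
  · nlinarith [mul_nonneg hτ (by linarith : (0:ℝ) ≤ 4*m*B - y),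
      mul_nonneg hypos.le (by linarith : (0:ℝ) ≤ y - B),
      mul_nonneg (mul_nonneg hτ hτ) hBpos.le]
  · push_neg at h4
    have hcp := claim_poly m B y hm hB1 hBint h4.le
    nlinarith [hcp, sq_nonneg (B*τ/2 - (y - 4*m*B)), hBpos, hτ]

lemma star6 (m N B τ κ : ℝ) (hm : 1 ≤ m) (hN : 1 ≤ N) (hB1 : 1 ≤ B) (hBN : B ≤ N)
    (hBint : B = 1 ∨ 2 ≤ B) (hτ : 0 ≤ τ) (hκ : 0 < κ) (hκ1 : κ ≤ 1) :
    N ^ (1 + κ/(2+κ)) / B ^ (κ/(2+κ)) ≤ N ^ (1+κ) / (B+τ) ^ κ + (4*m*τ + τ^2/4) := by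
  have hNpos : (0:ℝ) < N := lt_of_lt_of_le one_pos hN
  have hBpos : (0:ℝ) < B := lt_of_lt_of_le one_pos hB1
  have h2κ : (0:ℝ) < 2 + κ := by linarith
  set ε := κ/(2+κ) with hε
  have hεpos : 0 < ε := div_pos hκ h2κ
  set R := N ^ (1+ε) / B ^ ε with hR
  have hRpos : 0 < R := div_pos (Real.rpow_pos_of_pos hNpos _) (Real.rpow_pos_of_pos hBpos _)
  have hRB : B ≤ R := by
    have h1 : B ^ (1+ε) ≤ N ^ (1+ε) := Real.rpow_le_rpow hBpos.le hBN (by linarith)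
    have h2 : B ^ (1+ε) = B ^ ε * B := by
      rw [add_comm, Real.rpow_add hBpos, Real.rpow_one]
    rw [hR, le_div_iff₀ (Real.rpow_pos_of_pos hBpos _)]
    calc B * B ^ ε = B ^ (1+ε) := by rw [h2]; ring
      _ ≤ N ^ (1+ε) := h1
  set x₀ := Real.sqrt (R * B) with hx₀
  have hx₀pos : 0 < x₀ := Real.sqrt_pos.mpr (by positivity)
  have hx₀sq : x₀ ^ 2 = R * B := Real.sq_sqrt (by positivity)
  have hx₀B : B ≤ x₀ := by nlinarith [hx₀sq, hRB, hx₀pos, hBpos]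
  have hkey : x₀ ^ κ * R = N ^ (1+κ) := by
    have hp1 : (0:ℝ) < x₀ ^ κ * R := mul_pos (Real.rpow_pos_of_pos hx₀pos _) hRpos
    have hp2 : (0:ℝ) < N ^ (1+κ) := Real.rpow_pos_of_pos hNpos _
    have hlog : Real.log (x₀ ^ κ * R) = Real.log (N ^ (1+κ)) := by
      rw [Real.log_mul (by positivity) (by positivity), Real.log_rpow hx₀pos,
        Real.log_rpow hNpos, hx₀, Real.log_sqrt (by positivity),
        Real.log_mul hRpos.ne' hBpos.ne', hR,
        Real.log_div (by positivity) (by positivity), Real.log_rpow hNpos,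
        Real.log_rpow hBpos, hε]
      field_simp
      ring
    have := congrArg Real.exp hlog
    rwa [Real.exp_log hp1, Real.exp_log hp2] at this
  set x := B + τ with hx
  have hxpos : (0:ℝ) < x := by linarith
  by_cases hcase : x ≤ x₀
  · have h1 : x ^ κ ≤ x₀ ^ κ := Real.rpow_le_rpow hxpos.le hcase hκ.le
    have h2 : R ≤ N ^ (1+κ) / x ^ κ := by
      rw [le_div_iff₀ (Real.rpow_pos_of_pos hxpos _), ← hkey]
      exact (mul_le_mul_of_nonneg_left h1 hRpos.le).trans_eq (by ring)
    have h3 : 0 ≤ 4*m*τ := mul_nonneg (by linarith) hτ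
    have h4 : 0 ≤ τ^2/4 := by positivity
    linarith
  · push_neg at hcase
    have hxx : (0:ℝ) < x₀ / x := div_pos hx₀pos hxpos
    have hxx1 : x₀ / x ≤ 1 := by rw [div_le_one hxpos]; linarith
    have ht : x₀ / x ≤ (x₀/x) ^ κ := by
      calc x₀/x = (x₀/x) ^ (1:ℝ) := (Real.rpow_one _).symm
        _ ≤ (x₀/x) ^ κ := Real.rpow_le_rpow_of_exponent_ge hxx hxx1 hκ1
    have hmain : R * (x₀/x) ≤ N ^ (1+κ) / x ^ κ := by
      have hxκ : x ^ κ ≠ 0 := by positivity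
      have e1 : N ^ (1+κ) / x ^ κ = R * (x₀/x) ^ κ := by
        rw [← hkey, Real.div_rpow hx₀pos.le hxpos.le]
        field_simp
      rw [e1]
      exact mul_le_mul_of_nonneg_left ht hRpos.le
    have hsuff : R - R * (x₀/x) ≤ 4*m*τ + τ^2/4 := by
      have hKR : R / x₀ = x₀ / B := by
        rw [div_eq_div_iff hx₀pos.ne' hBpos.ne', ← sq]
        linarith [hx₀sq]
      have e2 : R - R * (x₀/x) = R * ((x - x₀)/x) := by field_simp
      have e3 : R * ((x - x₀)/x) ≤ R * ((x - x₀)/x₀) := by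
        apply mul_le_mul_of_nonneg_left _ hRpos.le
        apply div_le_div_of_nonneg_left (by linarith) hx₀pos (by linarith)
      have e4 : R * ((x - x₀)/x₀) = (x₀/B) * (τ - (x₀ - B)) := by
        rw [mul_comm R, div_mul_eq_mul_div, mul_comm _ R, ← div_mul_eq_mul_div, hKR]
        rw [hx]; ring
      have quad := quad_ineq m B x₀ τ hm hB1 hBint hτ hx₀B
      calc R - R * (x₀/x) = R * ((x - x₀)/x) := e2
        _ ≤ R * ((x - x₀)/x₀) := e3
        _ = (x₀/B) * (τ - (x₀ - B)) := e4
        _ ≤ 4*m*τ + τ^2/4 := quad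
    linarith [hmain, hsuff]


section Abstract
attribute [local instance] Classical.propDecidable
variable {V : Type*} [DecidableEq V]

/-- Abstract double-counting lemma: if no part holds more than twice the outside-W mass,
then the total cross-count is at least |U|²/8. -/
lemma abstract_count (U W : Finset V) (f : V → ℕ)
    (hyp1 : ∀ a, (U.filter (fun u => f u = a)).card ≤ 2 * ((W.filter (fun y => f y ≠ a)).card))
    (hyp2 : U.card ≤ 2 * W.card) :
    U.card ^ 2 ≤ 8 * ∑ u ∈ U, ((W.filter (fun y => f y ≠ f u)).card) := by
  rcases U.eq_empty_or_nonempty with hU | hU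
  · simp [hU]
  rcases W.eq_empty_or_nonempty with hW | hW
  · have : U.card = 0 := by have := hyp2; rw [hW] at this; simpa using this
    simp [this]
  set C := W.card with hC
  set c : ℕ → ℕ := fun a => (W.filter (fun y => f y = a)).card with hc
  have hcC : ∀ a, c a ≤ C := fun a => Finset.card_le_card (Finset.filter_subset _ _)
  have hneg : ∀ a, (W.filter (fun y => f y ≠ a)).card = C - c a := by
    intro a
    have h := Finset.card_filter_add_card_filter_not (s := W) (p := fun y => f y = a)
    simp only [ne_eq, hc, hC]
    omega
  -- the maximizing part
  obtain ⟨ahat, hahatmem, hahatmax⟩ := Finset.exists_max_image (W.image f) c (hW.image f)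
  set chat := c ahat with hchat
  have hmax : ∀ a, c a ≤ chat := by
    intro a
    by_cases ha : a ∈ W.image f
    · exact hahatmax a ha
    · have he : W.filter (fun y => f y = a) = ∅ := by
        rw [Finset.filter_eq_empty_iff]
        intro y hy hya
        exact ha (Finset.mem_image.mpr ⟨y, hy, hya⟩)
      have : c a = 0 := by rw [hc]; simp only [he, Finset.card_empty]
      omega
  have hother : ∀ a, a ≠ ahat → c a ≤ C - chat := by
    intro a ha
    have hsub : W.filter (fun y => f y = a) ⊆ W.filter (fun y => f y ≠ ahat) := by
      intro y hy
      obtain ⟨hyW, hya⟩ := Finset.mem_filter.mp hy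
      exact Finset.mem_filter.mpr ⟨hyW, by rw [hya]; exact ha⟩
    have h2 := Finset.card_le_card hsub
    rw [hneg] at h2
    have : c a = (W.filter (fun y => f y = a)).card := by rw [hc]
    omega
  have hsum : ∀ u ∈ U, (W.filter (fun y => f y ≠ f u)).card = C - c (f u) := fun u _ => hneg _
  rw [Finset.sum_congr rfl hsum]
  obtain ⟨x, hx⟩ : ∃ x, x = C - chat := ⟨_, rfl⟩
  have hchatC : chat ≤ C := hcC ahat
  by_cases hcase : 2 * chat ≤ C
  · have hCx : C ≤ 2 * x := by omega
    have h1 : ∀ u ∈ U, x ≤ C - c (f u) := by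
      intro u _
      have := hmax (f u); omega
    have h2 : U.card * x ≤ ∑ u ∈ U, (C - c (f u)) := by
      calc U.card * x = ∑ _u ∈ U, x := by rw [Finset.sum_const, smul_eq_mul]
        _ ≤ _ := Finset.sum_le_sum h1
    have hUC : U.card ≤ 2 * C := hyp2
    nlinarith [h2, hCx, hUC]
  · push_neg at hcase
    set Uin := U.filter (fun u => f u = ahat) with hUin
    set Uout := U.filter (fun u => ¬ f u = ahat) with hUout
    have hab : Uin.card + Uout.card = U.card :=
      Finset.card_filter_add_card_filter_not (p := fun u => f u = ahat)
    have hsplit : ∑ u ∈ U, (C - c (f u))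
        = ∑ u ∈ Uin, (C - c (f u)) + ∑ u ∈ Uout, (C - c (f u)) :=
      (Finset.sum_filter_add_sum_filter_not U (fun u => f u = ahat) _).symm
    have hin : ∑ u ∈ Uin, (C - c (f u)) = Uin.card * x := by
      rw [Finset.sum_congr rfl (fun u hu => ?_), Finset.sum_const, smul_eq_mul]
      rw [(Finset.mem_filter.mp hu).2, ← hchat, ← hx]
    have hout : Uout.card * chat ≤ ∑ u ∈ Uout, (C - c (f u)) := by
      calc Uout.card * chat = ∑ _u ∈ Uout, chat := by rw [Finset.sum_const, smul_eq_mul]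
        _ ≤ _ := Finset.sum_le_sum (fun u hu => by
            have h5 := hother (f u) (Finset.mem_filter.mp hu).2
            have h6 := hcC (f u)
            omega)
    have ha2 : Uin.card ≤ 2 * x := by
      have h7 := hyp1 ahat
      rw [hneg] at h7
      have h8 : Uin.card = (U.filter (fun u => f u = ahat)).card := by rw [hUin]
      omega
    have hCchat : C ≤ 2 * chat := hcase.le
    have hUC : U.card ≤ 2 * C := hyp2
    have hfin : Uin.card * x + Uout.card * chat ≤ ∑ u ∈ U, (C - c (f u)) := by
      rw [hsplit, hin]; omega
    nlinarith [hfin, ha2, hCchat, hUC, hab, sq_nonneg (2 * Uin.card - U.card),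
      Nat.zero_le Uout.card, Nat.zero_le Uin.card]
end Abstract


section OrderInfra
attribute [local instance] Classical.propDecidable
variable {V : Type*} [Fintype V] [DecidableEq V] (G : SimpleGraph V) (pos : V → ℕ)

/-- `u` has a successor within `Q` w.r.t. the linear order `pos`. -/
def consR (Q : Finset V) (u w : V) : Prop :=
  u ∈ Q ∧ w ∈ Q ∧ pos u < pos w ∧ ∀ x ∈ Q, pos x ≤ pos u ∨ pos w ≤ pos x

def hasN (Q : Finset V) (u : V) : Prop := ∃ w, consR pos Q u w

noncomputable def nxt (Q : Finset V) (u : V) : V :=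
  if h : hasN pos Q u then h.choose else u

variable (hinj : Function.Injective pos)
include hinj

lemma consR_right_unique {Q : Finset V} {u w w' : V} (h : consR pos Q u w)
    (h' : consR pos Q u w') : w = w' := by
  obtain ⟨hu, hw, hlt, hmin⟩ := h
  obtain ⟨hu', hw', hlt', hmin'⟩ := h'
  rcases hmin w' hw' with h1 | h1
  · omega
  · rcases hmin' w hw with h2 | h2
    · omega
    · exact hinj (by omega)

lemma consR_left_unique {Q : Finset V} {u u' w : V} (h : consR pos Q u w)
    (h' : consR pos Q u' w) : u = u' := by
  obtain ⟨hu, hw, hlt, hmin⟩ := h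
  obtain ⟨hu', hw', hlt', hmin'⟩ := h'
  rcases hmin u' hu' with h1 | h1
  · rcases hmin' u hu with h2 | h2
    · exact hinj (by omega)
    · omega
  · omega

omit hinj in
lemma consR_exists {Q : Finset V} {u x : V} (hu : u ∈ Q) (hx : x ∈ Q)
    (hlt : pos u < pos x) : hasN pos Q u := by
  have hne : (Q.filter (fun y => pos u < pos y)).Nonempty :=
    ⟨x, Finset.mem_filter.mpr ⟨hx, hlt⟩⟩
  obtain ⟨w, hw, hmin⟩ := Finset.exists_min_image _ pos hne
  rw [Finset.mem_filter] at hw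
  refine ⟨w, hu, hw.1, hw.2, fun y hy => ?_⟩
  by_cases hc : pos u < pos y
  · exact Or.inr (hmin y (Finset.mem_filter.mpr ⟨hy, hc⟩))
  · omega

omit hinj in
lemma nxt_spec {Q : Finset V} {u : V} (h : hasN pos Q u) :
    consR pos Q u (nxt pos Q u) := by
  rw [nxt, dif_pos h]
  exact h.choose_spec

lemma consR_nxt_eq {Q : Finset V} {u w : V} (h : consR pos Q u w) :
    nxt pos Q u = w :=
  consR_right_unique pos hinj (nxt_spec pos ⟨w, h⟩) h

/-- breaks, keyed by their left element -/
noncomputable def brkF (Q : Finset V) : Finset V :=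
  Q.filter (fun u => hasN pos Q u ∧ ¬ G.Adj u (nxt pos Q u))

/-- non-break consecutive pairs, keyed by left element -/
noncomputable def goodF (Q : Finset V) : Finset V :=
  Q.filter (fun u => hasN pos Q u ∧ G.Adj u (nxt pos Q u))

/-- transitions (for a part-function f), keyed by left element -/
noncomputable def trnF (Q : Finset V) (f : V → ℕ) : Finset V :=
  Q.filter (fun u => hasN pos Q u ∧ G.Adj u (nxt pos Q u) ∧ f u ≠ f (nxt pos Q u))

noncomputable def lastF (Q : Finset V) : Finset V :=
  Q.filter (fun u => ¬ hasN pos Q u)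

lemma lastF_card_le_one (Q : Finset V) : (lastF pos Q).card ≤ 1 := by
  rw [Finset.card_le_one]
  intro a ha b hb
  rw [lastF, Finset.mem_filter] at ha hb
  by_contra hab
  rcases Nat.lt_or_ge (pos a) (pos b) with h | h
  · exact ha.2 (consR_exists pos ha.1 hb.1 h)
  · have : pos b < pos a := lt_of_le_of_ne h (fun hc => hab (hinj hc.symm))
    exact hb.2 (consR_exists pos hb.1 ha.1 this)

omit hinj in
lemma lastF_nonempty {Q : Finset V} (hQ : Q.Nonempty) : (lastF pos Q).Nonempty := by
  obtain ⟨u, hu, hmax⟩ := Finset.exists_max_image Q pos hQ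
  refine ⟨u, Finset.mem_filter.mpr ⟨hu, ?_⟩⟩
  rintro ⟨w, h1, hw, hlt, -⟩
  exact absurd (hmax w hw) (by omega)

omit hinj in
lemma Q_partition (Q : Finset V) :
    Q.card = (brkF G pos Q).card + (goodF G pos Q).card + (lastF pos Q).card := by
  have h1 : Q.card = (Q.filter (fun u => hasN pos Q u)).card + (lastF pos Q).card := by
    rw [lastF]
    exact (Finset.card_filter_add_card_filter_not (p := fun u => hasN pos Q u)).symm
  have h2 : (Q.filter (fun u => hasN pos Q u)).card
      = (goodF G pos Q).card + (brkF G pos Q).card := by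
    rw [goodF, brkF]
    rw [← Finset.filter_filter (fun u => hasN pos Q u) (fun u => G.Adj u (nxt pos Q u)) Q,
      ← Finset.filter_filter (fun u => hasN pos Q u) (fun u => ¬ G.Adj u (nxt pos Q u)) Q]
    exact (Finset.card_filter_add_card_filter_not
      (p := fun u => G.Adj u (nxt pos Q u))).symm
  omega

omit hinj in
lemma brk_add_one_le {Q : Finset V} (hQ : Q.Nonempty) :
    (brkF G pos Q).card + 1 ≤ Q.card := by
  have h := Q_partition G pos Q
  have h2 := lastF_nonempty pos hQ
  have h3 : 1 ≤ (lastF pos Q).card := Finset.card_pos.mpr h2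
  omega

noncomputable def EoF (Q : Finset V) : Finset (V × V) :=
  (Q ×ˢ Q).filter (fun p => G.Adj p.1 p.2)

noncomputable def XoF (Q : Finset V) (f : V → ℕ) : Finset (V × V) :=
  (Q ×ˢ Q).filter (fun p => G.Adj p.1 p.2 ∧ f p.1 ≠ f p.2)

omit hinj in
lemma double_pairs {Q : Finset V} (S : Finset V) (hS : S ⊆ Q)
    (hgood : ∀ u ∈ S, hasN pos Q u ∧ G.Adj u (nxt pos Q u))
    (T : Finset (V × V)) (hT : ∀ u ∈ S, (u, nxt pos Q u) ∈ T ∧ (nxt pos Q u, u) ∈ T) :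
    2 * S.card ≤ T.card := by
  classical
  set g1 : V → V × V := fun u => (u, nxt pos Q u) with hg1
  set g2 : V → V × V := fun u => (nxt pos Q u, u) with hg2
  have hinj1 : Function.Injective g1 := fun a b h => congrArg Prod.fst h
  have hinj2 : Function.Injective g2 := fun a b h => congrArg Prod.snd h
  have hc1 : (S.image g1).card = S.card := Finset.card_image_of_injective S hinj1
  have hc2 : (S.image g2).card = S.card := Finset.card_image_of_injective S hinj2
  have hd : Disjoint (S.image g1) (S.image g2) := by
    rw [Finset.disjoint_left]
    rintro p hp1 hp2
    obtain ⟨u, hu, rfl⟩ := Finset.mem_image.mp hp1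
    obtain ⟨v, hv, hveq⟩ := Finset.mem_image.mp hp2
    have h1 := (nxt_spec pos (hgood u hu).1).2.2.1
    have h2 := (nxt_spec pos (hgood v hv).1).2.2.1
    rw [hg1, hg2, Prod.ext_iff] at hveq
    obtain ⟨e1, e2⟩ := hveq
    simp only at e1 e2
    rw [e1] at h2; rw [← e2] at h1; omega
  have hsub : S.image g1 ∪ S.image g2 ⊆ T := by
    intro p hp
    rcases Finset.mem_union.mp hp with hp | hp
    · obtain ⟨u, hu, rfl⟩ := Finset.mem_image.mp hp
      exact (hT u hu).1
    · obtain ⟨u, hu, rfl⟩ := Finset.mem_image.mp hp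
      exact (hT u hu).2
  calc 2 * S.card = (S.image g1).card + (S.image g2).card := by omega
    _ = (S.image g1 ∪ S.image g2).card := (Finset.card_union_of_disjoint hd).symm
    _ ≤ T.card := Finset.card_le_card hsub

omit hinj in
lemma good_pairs (Q : Finset V) : 2 * (goodF G pos Q).card ≤ (EoF G Q).card := by
  apply double_pairs G pos (goodF G pos Q) (Finset.filter_subset _ _)
  · intro u hu; exact (Finset.mem_filter.mp hu).2
  · intro u hu
    obtain ⟨huQ, hN, hAdj⟩ := Finset.mem_filter.mp hu
    have hc := nxt_spec pos hN
    constructor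
    · exact Finset.mem_filter.mpr ⟨Finset.mem_product.mpr ⟨hc.1, hc.2.1⟩, hAdj⟩
    · exact Finset.mem_filter.mpr ⟨Finset.mem_product.mpr ⟨hc.2.1, hc.1⟩, hAdj.symm⟩

omit hinj in
lemma trn_pairs (Q : Finset V) (f : V → ℕ) :
    2 * (trnF G pos Q f).card ≤ (XoF G Q f).card := by
  apply double_pairs G pos (trnF G pos Q f) (Finset.filter_subset _ _)
  · intro u hu
    obtain ⟨huQ, hN, hAdj, hne⟩ := Finset.mem_filter.mp hu
    exact ⟨hN, hAdj⟩
  · intro u hu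
    obtain ⟨huQ, hN, hAdj, hne⟩ := Finset.mem_filter.mp hu
    have hc := nxt_spec pos hN
    constructor
    · exact Finset.mem_filter.mpr ⟨Finset.mem_product.mpr ⟨hc.1, hc.2.1⟩, hAdj, hne⟩
    · exact Finset.mem_filter.mpr ⟨Finset.mem_product.mpr ⟨hc.2.1, hc.1⟩, hAdj.symm, fun h => hne h.symm⟩

omit hinj in
lemma edge_partition (Q : Finset V) (f : V → ℕ) :
    (EoF G Q).card
      = ∑ a ∈ Q.image f, (EoF G (Q.filter (fun v => f v = a))).card
        + (XoF G Q f).card := by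
  classical
  have hsplit : (EoF G Q).card
      = ((EoF G Q).filter (fun p => f p.1 = f p.2)).card
        + ((EoF G Q).filter (fun p => ¬ f p.1 = f p.2)).card :=
    (Finset.card_filter_add_card_filter_not (p := fun p : V × V => f p.1 = f p.2)).symm
  have hX : (EoF G Q).filter (fun p => ¬ f p.1 = f p.2) = XoF G Q f := by
    rw [EoF, XoF, Finset.filter_filter]
  have hsame : ((EoF G Q).filter (fun p => f p.1 = f p.2))
      = (Q.image f).biUnion (fun a => EoF G (Q.filter (fun v => f v = a))) := by
    ext p
    constructor
    · intro hp
      obtain ⟨hpE, hpf⟩ := Finset.mem_filter.mp hp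
      obtain ⟨hpQ, hadj⟩ := Finset.mem_filter.mp hpE
      obtain ⟨hx, hy⟩ := Finset.mem_product.mp hpQ
      refine Finset.mem_biUnion.mpr ⟨f p.1, Finset.mem_image_of_mem f hx, ?_⟩
      refine Finset.mem_filter.mpr ⟨Finset.mem_product.mpr ⟨?_, ?_⟩, hadj⟩
      · exact Finset.mem_filter.mpr ⟨hx, rfl⟩
      · exact Finset.mem_filter.mpr ⟨hy, hpf.symm⟩
    · intro hp
      obtain ⟨a, ha, hpa⟩ := Finset.mem_biUnion.mp hp
      obtain ⟨hpQ, hadj⟩ := Finset.mem_filter.mp hpa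
      obtain ⟨hx, hy⟩ := Finset.mem_product.mp hpQ
      obtain ⟨hx1, hx2⟩ := Finset.mem_filter.mp hx
      obtain ⟨hy1, hy2⟩ := Finset.mem_filter.mp hy
      refine Finset.mem_filter.mpr ⟨Finset.mem_filter.mpr
        ⟨Finset.mem_product.mpr ⟨hx1, hy1⟩, hadj⟩, by rw [hx2, hy2]⟩
  have hcard : ((EoF G Q).filter (fun p => f p.1 = f p.2)).card
      = ∑ a ∈ Q.image f, (EoF G (Q.filter (fun v => f v = a))).card := by
    rw [hsame]
    apply Finset.card_biUnion
    intro a ha b hb hab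
    rw [Function.onFun_apply, Finset.disjoint_left]
    intro p hpa hpb
    obtain ⟨hpQ, _⟩ := Finset.mem_filter.mp hpa
    obtain ⟨hx, _⟩ := Finset.mem_product.mp hpQ
    obtain ⟨_, hxa⟩ := Finset.mem_filter.mp hx
    obtain ⟨hpQ', _⟩ := Finset.mem_filter.mp hpb
    obtain ⟨hx', _⟩ := Finset.mem_product.mp hpQ'
    obtain ⟨_, hxb⟩ := Finset.mem_filter.mp hx'
    exact hab (hxa ▸ hxb ▸ rfl)
  rw [hX] at hsplit
  omega

lemma sum_BB_le (Q : Finset V) (f : V → ℕ) :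
    ∑ a ∈ Q.image f, ((brkF G pos (Q.filter (fun v => f v = a))).card + 1)
      ≤ ((brkF G pos Q).card + 1) + (trnF G pos Q f).card := by
  classical
  set D := Q.filter (fun u =>
    (hasN pos (Q.filter (fun v => f v = f u)) u
      ∧ ¬ G.Adj u (nxt pos (Q.filter (fun v => f v = f u)) u))
    ∨ ¬ hasN pos (Q.filter (fun v => f v = f u)) u) with hD
  have stepA : ∑ a ∈ Q.image f, ((brkF G pos (Q.filter (fun v => f v = a))).card + 1)
      = D.card := by
    rw [Finset.card_eq_sum_card_fiberwise (f := f) (t := Q.image f)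
      (fun u hu => Finset.mem_image_of_mem f (Finset.mem_filter.mp hu).1)]
    apply Finset.sum_congr rfl
    intro a ha
    set P := Q.filter (fun v => f v = a) with hP
    have hPne : P.Nonempty := by
      obtain ⟨u, hu, hfu⟩ := Finset.mem_image.mp ha
      exact ⟨u, Finset.mem_filter.mpr ⟨hu, hfu⟩⟩
    have hfib : D.filter (fun u => f u = a) = brkF G pos P ∪ lastF pos P := by
      ext u
      constructor
      · intro h
        obtain ⟨hD', hfa⟩ := Finset.mem_filter.mp h
        obtain ⟨huQ, hcond⟩ := Finset.mem_filter.mp hD'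
        have e : Q.filter (fun v => f v = f u) = P := by rw [hP, hfa]
        rw [e] at hcond
        have huP : u ∈ P := Finset.mem_filter.mpr ⟨huQ, hfa⟩
        rcases hcond with hbr | hl
        · exact Finset.mem_union.mpr (Or.inl (Finset.mem_filter.mpr ⟨huP, hbr⟩))
        · exact Finset.mem_union.mpr (Or.inr (Finset.mem_filter.mpr ⟨huP, hl⟩))
      · intro h
        have huP : u ∈ P ∧ ((hasN pos P u ∧ ¬ G.Adj u (nxt pos P u)) ∨ ¬ hasN pos P u) := by
          rcases Finset.mem_union.mp h with h' | h'
          · exact ⟨(Finset.mem_filter.mp h').1, Or.inl (Finset.mem_filter.mp h').2⟩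
          · exact ⟨(Finset.mem_filter.mp h').1, Or.inr (Finset.mem_filter.mp h').2⟩
        obtain ⟨huP, hcond⟩ := huP
        obtain ⟨huQ, hfa⟩ := Finset.mem_filter.mp huP
        have e : Q.filter (fun v => f v = f u) = P := by rw [hP, hfa]
        refine Finset.mem_filter.mpr ⟨Finset.mem_filter.mpr ⟨huQ, ?_⟩, hfa⟩
        rw [e]
        exact hcond
    rw [hfib]
    have hdisj : Disjoint (brkF G pos P) (lastF pos P) := by
      rw [Finset.disjoint_left]
      intro u hu hu'
      exact (Finset.mem_filter.mp hu').2 (Finset.mem_filter.mp hu).2.1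
    rw [Finset.card_union_of_disjoint hdisj]
    have hlast : (lastF pos P).card = 1 :=
      le_antisymm (lastF_card_le_one pos hinj P) (Finset.card_pos.mpr (lastF_nonempty pos hPne))
    omega
  have stepB : D ⊆ brkF G pos Q ∪ trnF G pos Q f ∪ lastF pos Q := by
    intro u hu
    obtain ⟨huQ, hcond⟩ := Finset.mem_filter.mp hu
    simp only [Finset.mem_union]
    by_cases hN : hasN pos Q u
    · have hc := nxt_spec pos hN
      set w := nxt pos Q u with hw
      by_cases hAdj : G.Adj u w
      · left; right
        refine Finset.mem_filter.mpr ⟨huQ, hN, hAdj, ?_⟩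
        intro hfeq
        set P := Q.filter (fun v => f v = f u) with hP
        have huP : u ∈ P := Finset.mem_filter.mpr ⟨huQ, rfl⟩
        have hwP : w ∈ P := Finset.mem_filter.mpr ⟨hc.2.1, hfeq.symm⟩
        have hcP : consR pos P u w :=
          ⟨huP, hwP, hc.2.2.1, fun x hx => hc.2.2.2 x (Finset.mem_filter.mp hx).1⟩
        have hNP : hasN pos P u := ⟨w, hcP⟩
        have hnxtP : nxt pos P u = w := consR_nxt_eq pos hinj hcP
        rcases hcond with ⟨_, hnadj⟩ | hnN
        · rw [hnxtP] at hnadj; exact hnadj hAdj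
        · exact hnN hNP
      · left; left
        exact Finset.mem_filter.mpr ⟨huQ, hN, hAdj⟩
    · right
      exact Finset.mem_filter.mpr ⟨huQ, hN⟩
  have stepC : D.card ≤ (brkF G pos Q).card + (trnF G pos Q f).card + 1 := by
    calc D.card ≤ (brkF G pos Q ∪ trnF G pos Q f ∪ lastF pos Q).card :=
          Finset.card_le_card stepB
      _ ≤ (brkF G pos Q ∪ trnF G pos Q f).card + (lastF pos Q).card :=
          Finset.card_union_le _ _
      _ ≤ (brkF G pos Q).card + (trnF G pos Q f).card + (lastF pos Q).card := by
          have := Finset.card_union_le (brkF G pos Q) (trnF G pos Q f)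
          omega
      _ ≤ _ := by have := lastF_card_le_one pos hinj Q; omega
  omega

noncomputable def prv (Q : Finset V) (w : V) : V :=
  if h : ∃ u, consR pos Q u w then h.choose else w

lemma nbr_card_le_two (Q : Finset V) (w : V) :
    (Q.filter (fun u => consR pos Q u w ∨ consR pos Q w u)).card ≤ 2 := by
  have hsub : Q.filter (fun u => consR pos Q u w ∨ consR pos Q w u)
      ⊆ {prv pos Q w, nxt pos Q w} := by
    intro u hu
    obtain ⟨-, h⟩ := Finset.mem_filter.mp hu
    rcases h with h | h
    · have hex : ∃ u', consR pos Q u' w := ⟨u, h⟩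
      have he : u = prv pos Q w := by
        rw [prv, dif_pos hex]
        exact consR_left_unique pos hinj h hex.choose_spec
      rw [Finset.mem_insert]
      exact Or.inl he
    · have he : u = nxt pos Q w := (consR_nxt_eq pos hinj h).symm
      rw [Finset.mem_insert, Finset.mem_singleton]
      exact Or.inr he
  calc (Q.filter (fun u => consR pos Q u w ∨ consR pos Q w u)).card
      ≤ ({prv pos Q w, nxt pos Q w} : Finset V).card := Finset.card_le_card hsub
    _ ≤ 2 := Finset.card_insert_le _ _ |>.trans (by simp)

lemma cross_count (Q : Finset V) (f : V → ℕ) {m : ℕ} (colour : V → Fin m)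
    (hcross : ∀ u v w, u ∈ Q → v ∈ Q → w ∈ Q → f u ≠ f v → f u ≠ f w →
      colour v = colour w → G.Adj u v → G.Adj u w) :
    ((trnF G pos Q f).card : ℝ)^2 ≤ 8 * m * ((XoF G Q f).card : ℝ) := by
  classical
  set Dp : Fin m → V → V → Prop := fun j u w =>
    (consR pos Q u w ∨ consR pos Q w u) ∧ G.Adj u w ∧ f u ≠ f w ∧ colour w = j with hDp
  set UF : Fin m → Finset V := fun j => Q.filter (fun u => ∃ w, Dp j u w) with hUF
  set WF : Fin m → Finset V := fun j => Q.filter (fun w => ∃ u, Dp j u w) with hWF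
  -- τ ≤ Σ_j |UF j|
  have hτ : (trnF G pos Q f).card ≤ ∑ j, (UF j).card := by
    have hsub : trnF G pos Q f ⊆ Finset.univ.biUnion UF := by
      intro u hu
      obtain ⟨huQ, hN, hAdj, hne⟩ := Finset.mem_filter.mp hu
      refine Finset.mem_biUnion.mpr ⟨colour (nxt pos Q u), Finset.mem_univ _, ?_⟩
      rw [hUF]
      exact Finset.mem_filter.mpr ⟨huQ, ⟨nxt pos Q u,
        Or.inl (nxt_spec pos hN), hAdj, hne, rfl⟩⟩
    calc (trnF G pos Q f).card ≤ (Finset.univ.biUnion UF).card := Finset.card_le_card hsub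
      _ ≤ ∑ j, (UF j).card := Finset.card_biUnion_le
  -- witness function
  set wj : Fin m → V → V := fun j u => if h : ∃ w, Dp j u w then h.choose else u with hwj
  have hwjspec : ∀ j u, (∃ w, Dp j u w) → Dp j u (wj j u) := by
    intro j u h
    rw [hwj]
    simp only [dif_pos h]
    exact h.choose_spec
  have hmemQ : ∀ j u w, Dp j u w → u ∈ Q ∧ w ∈ Q := by
    intro j u w hd
    rcases hd.1 with h | h
    · exact ⟨h.1, h.2.1⟩
    · exact ⟨h.2.1, h.1⟩
  -- generic image bound
  have himg : ∀ (j : Fin m) (S : Finset V), S ⊆ UF j →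
      S.card ≤ 2 * (S.image (wj j)).card := by
    intro j S hS
    apply Finset.card_le_mul_card_image
    intro b hb
    obtain ⟨u0, hu0, hu0b⟩ := Finset.mem_image.mp hb
    have hfib : S.filter (fun a => wj j a = b)
        ⊆ Q.filter (fun u => consR pos Q u b ∨ consR pos Q b u) := by
      intro u hu
      obtain ⟨huS, hub⟩ := Finset.mem_filter.mp hu
      have huU := hS huS
      obtain ⟨huQ, hex⟩ := Finset.mem_filter.mp huU
      have hd := hwjspec j u hex
      rw [hub] at hd
      exact Finset.mem_filter.mpr ⟨huQ, hd.1⟩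
    calc (S.filter (fun a => wj j a = b)).card
        ≤ (Q.filter (fun u => consR pos Q u b ∨ consR pos Q b u)).card :=
          Finset.card_le_card hfib
      _ ≤ 2 := nbr_card_le_two pos hinj Q b
  -- abstract count per colour
  have hkey : ∀ j : Fin m, (UF j).card ^ 2
      ≤ 8 * ∑ u ∈ UF j, ((WF j).filter (fun y => f y ≠ f u)).card := by
    intro j
    apply abstract_count
    · intro a
      set S := (UF j).filter (fun u => f u = a) with hS
      have hSsub : S ⊆ UF j := Finset.filter_subset _ _
      have h1 := himg j S hSsub
      have h2 : S.image (wj j) ⊆ (WF j).filter (fun y => f y ≠ a) := by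
        intro b hb
        obtain ⟨u, hu, hub⟩ := Finset.mem_image.mp hb
        obtain ⟨huU, hfa⟩ := Finset.mem_filter.mp hu
        obtain ⟨huQ, hex⟩ := Finset.mem_filter.mp huU
        have hd := hwjspec j u hex
        rw [hub] at hd
        have hbQ := (hmemQ j u b hd).2
        refine Finset.mem_filter.mpr ⟨?_, ?_⟩
        · rw [hWF]; exact Finset.mem_filter.mpr ⟨hbQ, ⟨u, hd⟩⟩
        · rw [← hfa]; exact fun h => hd.2.2.1 h.symm
      calc S.card ≤ 2 * (S.image (wj j)).card := h1
        _ ≤ 2 * ((WF j).filter (fun y => f y ≠ a)).card :=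
            Nat.mul_le_mul_left 2 (Finset.card_le_card h2)
    · have h1 := himg j (UF j) (le_refl _)
      have h2 : (UF j).image (wj j) ⊆ WF j := by
        intro b hb
        obtain ⟨u, hu, hub⟩ := Finset.mem_image.mp hb
        obtain ⟨huQ, hex⟩ := Finset.mem_filter.mp hu
        have hd := hwjspec j u hex
        rw [hub] at hd
        have hbQ := (hmemQ j u b hd).2
        rw [hWF]; exact Finset.mem_filter.mpr ⟨hbQ, ⟨u, hd⟩⟩
      calc (UF j).card ≤ 2 * ((UF j).image (wj j)).card := h1
        _ ≤ 2 * (WF j).card := Nat.mul_le_mul_left 2 (Finset.card_le_card h2)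
  -- the witness sets in XoF
  set Tj : Fin m → Finset (V × V) := fun j =>
    (UF j).biUnion (fun u => {u} ×ˢ ((WF j).filter (fun y => f y ≠ f u))) with hTj
  have hTcard : ∀ j, (Tj j).card = ∑ u ∈ UF j, ((WF j).filter (fun y => f y ≠ f u)).card := by
    intro j
    rw [hTj]
    rw [Finset.card_biUnion ?hdisj]
    · apply Finset.sum_congr rfl
      intro u hu
      rw [Finset.card_product, Finset.card_singleton, one_mul]
    case hdisj =>
      intro u hu v hv huv
      rw [Function.onFun_apply, Finset.disjoint_left]
      intro p hp1 hp2
      have e1 : p.1 = u := by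
        have := (Finset.mem_product.mp hp1).1
        simpa using this
      have e2 : p.1 = v := by
        have := (Finset.mem_product.mp hp2).1
        simpa using this
      exact huv (e1 ▸ e2 ▸ rfl)
  have hTsub : ∀ j, Tj j ⊆ XoF G Q f := by
    intro j p hp
    rw [hTj] at hp
    obtain ⟨u, hu, hp⟩ := Finset.mem_biUnion.mp hp
    obtain ⟨hp1, hp2⟩ := Finset.mem_product.mp hp
    have e1 : p.1 = u := by simpa using hp1
    obtain ⟨hyW, hyne⟩ := Finset.mem_filter.mp hp2
    obtain ⟨huQ, hex⟩ := Finset.mem_filter.mp hu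
    obtain ⟨w, hd⟩ := hex
    obtain ⟨hyQ, hexy⟩ := Finset.mem_filter.mp hyW
    obtain ⟨u', hd'⟩ := hexy
    have hwQ := (hmemQ j u w hd).2
    have hcol : colour w = colour p.2 := by rw [hd.2.2.2, hd'.2.2.2]
    have hadj : G.Adj u p.2 := by
      apply hcross u w p.2 huQ hwQ hyQ hd.2.2.1 _ hcol hd.2.1
      exact fun h => hyne h.symm
    have hpp : p = (u, p.2) := Prod.ext e1 rfl
    rw [hpp]
    exact Finset.mem_filter.mpr ⟨Finset.mem_product.mpr ⟨huQ, hyQ⟩, hadj, fun h => hyne h.symm⟩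
  have hTdisj : ∀ (j j' : Fin m), j ≠ j' → Disjoint (Tj j) (Tj j') := by
    intro j j' hjj
    rw [Finset.disjoint_left]
    intro p hp hp'
    have hcol : ∀ (k : Fin m), p ∈ Tj k → colour p.2 = k := by
      intro k hk
      rw [hTj] at hk
      obtain ⟨u, hu, hpk⟩ := Finset.mem_biUnion.mp hk
      obtain ⟨-, hp2⟩ := Finset.mem_product.mp hpk
      obtain ⟨hyW, -⟩ := Finset.mem_filter.mp hp2
      obtain ⟨-, ⟨u', hd'⟩⟩ := Finset.mem_filter.mp hyW
      exact hd'.2.2.2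
    exact hjj ((hcol j hp) ▸ (hcol j' hp') ▸ rfl)
  have hXsum : ∑ j, (Tj j).card ≤ (XoF G Q f).card := by
    rw [← Finset.card_biUnion (fun j _ j' _ h => hTdisj j j' h)]
    apply Finset.card_le_card
    intro p hp
    obtain ⟨j, -, hj⟩ := Finset.mem_biUnion.mp hp
    exact hTsub j hj
  -- final real arithmetic
  have hCS : ((∑ j, ((UF j).card : ℝ)))^2 ≤ (m : ℝ) * ∑ j, ((UF j).card : ℝ)^2 := by
    have := sq_sum_le_card_mul_sum_sq (s := (Finset.univ : Finset (Fin m)))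
      (f := fun j => ((UF j).card : ℝ))
    simpa using this
  have hc1 : ((trnF G pos Q f).card : ℝ) ≤ ∑ j, ((UF j).card : ℝ) := by
    exact_mod_cast hτ
  have hc2 : ∀ j, ((UF j).card : ℝ)^2 ≤ 8 * ((Tj j).card : ℝ) := by
    intro j
    have := hkey j
    rw [← hTcard j] at this
    exact_mod_cast this
  have hc3 : ∑ j, ((Tj j).card : ℝ) ≤ ((XoF G Q f).card : ℝ) := by exact_mod_cast hXsum
  have hτnn : (0:ℝ) ≤ ((trnF G pos Q f).card : ℝ) := Nat.cast_nonneg _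
  have hsumnn : (0:ℝ) ≤ ∑ j, ((UF j).card : ℝ) :=
    Finset.sum_nonneg (fun j _ => Nat.cast_nonneg _)
  calc ((trnF G pos Q f).card : ℝ)^2 ≤ (∑ j, ((UF j).card : ℝ))^2 := by
        apply pow_le_pow_left₀ hτnn hc1
    _ ≤ (m : ℝ) * ∑ j, ((UF j).card : ℝ)^2 := hCS
    _ ≤ (m : ℝ) * ∑ j, (8 * ((Tj j).card : ℝ)) := by
        apply mul_le_mul_of_nonneg_left (Finset.sum_le_sum (fun j _ => hc2 j)) (Nat.cast_nonneg m)
    _ = 8 * m * ∑ j, ((Tj j).card : ℝ) := by rw [← Finset.mul_sum]; ring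
    _ ≤ 8 * m * ((XoF G Q f).card : ℝ) := by
        apply mul_le_mul_of_nonneg_left hc3 (by positivity)


lemma base_count (Q : Finset V) {m : ℕ} (colour : V → Fin m) (H : Fin m → Fin m → Prop)
    (Hsymm : ∀ i j, H i j → H j i)
    (hsame : ∀ u v, u ∈ Q → v ∈ Q → u ≠ v → (G.Adj u v ↔ H (colour u) (colour v))) :
    Q.card ^ 2 ≤ m * (((brkF G pos Q).card + 1) * Q.card + (EoF G Q).card) := by
  classical
  set B := (brkF G pos Q).card + 1 with hB
  set cl : Fin m → Finset V := fun i => Q.filter (fun v => colour v = i) with hcl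
  -- the per-colour edge sets
  set O : Fin m → Finset (V × V) := fun i =>
    if H i i then (cl i).offDiag
    else ((((cl i).filter (fun u => hasN pos Q u ∧ G.Adj u (nxt pos Q u))).image
      (fun u => nxt pos Q u)) ×ˢ (cl i)) with hO
  have hclQ : ∀ i, cl i ⊆ Q := fun i => Finset.filter_subset _ _
  have hclcol : ∀ i v, v ∈ cl i → colour v = i := fun i v hv => (Finset.mem_filter.mp hv).2
  -- each O i is a set of adjacent pairs in Q with snd of colour i
  have hOsub : ∀ i, O i ⊆ EoF G Q := by
    intro i p hp
    simp only [hO] at hp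
    by_cases hii : H i i
    · rw [if_pos hii] at hp
      obtain ⟨h1, h2, h3⟩ := Finset.mem_offDiag.mp hp
      refine Finset.mem_filter.mpr ⟨Finset.mem_product.mpr ⟨hclQ i h1, hclQ i h2⟩, ?_⟩
      rw [hsame p.1 p.2 (hclQ i h1) (hclQ i h2) h3, hclcol i _ h1, hclcol i _ h2]
      exact hii
    · rw [if_neg hii] at hp
      obtain ⟨hp1, hp2⟩ := Finset.mem_product.mp hp
      obtain ⟨u, hu, hup⟩ := Finset.mem_image.mp hp1
      obtain ⟨hucl, hN, hAdj⟩ := Finset.mem_filter.mp hu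
      have huQ : u ∈ Q := hclQ i hucl
      have hc := nxt_spec pos hN
      have hwQ : nxt pos Q u ∈ Q := hc.2.1
      have huw : u ≠ nxt pos Q u := by
        intro he
        have := hc.2.2.1
        rw [← he] at this
        omega
      have hHuw : H (colour u) (colour (nxt pos Q u)) :=
        (hsame u _ huQ hwQ huw).mp hAdj
      have hHiw : H i (colour (nxt pos Q u)) := by
        rw [← hclcol i u hucl]
        exact hHuw
      have hwncl : colour (nxt pos Q u) ≠ i := by
        intro he
        rw [he] at hHiw
        exact hii hHiw
      have hyQ : p.2 ∈ Q := hclQ i hp2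
      have hwy : nxt pos Q u ≠ p.2 := by
        intro he
        apply hwncl
        rw [he]
        exact hclcol i _ hp2
      have hadj : G.Adj (nxt pos Q u) p.2 := by
        rw [hsame _ _ hwQ hyQ hwy, hclcol i _ hp2]
        exact Hsymm _ _ hHiw
      have hpp : p = (nxt pos Q u, p.2) := Prod.ext hup.symm rfl
      rw [hpp]
      exact Finset.mem_filter.mpr ⟨Finset.mem_product.mpr ⟨hwQ, hyQ⟩, hadj⟩
  have hOcol : ∀ i p, p ∈ O i → colour p.2 = i := by
    intro i p hp
    simp only [hO] at hp
    by_cases hii : H i i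
    · rw [if_pos hii] at hp
      exact hclcol i _ (Finset.mem_offDiag.mp hp).2.1
    · rw [if_neg hii] at hp
      exact hclcol i _ (Finset.mem_product.mp hp).2
  -- per-colour inequality
  have hpercol : ∀ i, (cl i).card ^ 2 ≤ B * (cl i).card + (O i).card := by
    intro i
    simp only [hO]
    by_cases hii : H i i
    · rw [if_pos hii]
      rw [Finset.offDiag_card, pow_two]
      have h2 : (cl i).card ≤ B * (cl i).card := Nat.le_mul_of_pos_left _ (by omega)
      omega
    · rw [if_neg hii]
      set goodU := (cl i).filter (fun u => hasN pos Q u ∧ G.Adj u (nxt pos Q u)) with hgu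
      have hcover : cl i ⊆ goodU ∪ (brkF G pos Q ∪ lastF pos Q) := by
        intro u hu
        rw [Finset.mem_union, Finset.mem_union]
        by_cases hN : hasN pos Q u
        · by_cases hAdj : G.Adj u (nxt pos Q u)
          · exact Or.inl (Finset.mem_filter.mpr ⟨hu, hN, hAdj⟩)
          · exact Or.inr (Or.inl (Finset.mem_filter.mpr ⟨hclQ i hu, hN, hAdj⟩))
        · exact Or.inr (Or.inr (Finset.mem_filter.mpr ⟨hclQ i hu, hN⟩))
      have h1 : (cl i).card ≤ goodU.card + B := by
        have h2 := Finset.card_le_card hcover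
        have h3 := Finset.card_union_le goodU (brkF G pos Q ∪ lastF pos Q)
        have h4 := Finset.card_union_le (brkF G pos Q) (lastF pos Q)
        have h5 := lastF_card_le_one pos hinj Q
        omega
      have himg : ((goodU.image (fun u => nxt pos Q u))).card = goodU.card := by
        apply Finset.card_image_of_injOn
        intro u hu v hv huv
        obtain ⟨-, hNu, -⟩ := Finset.mem_filter.mp hu
        obtain ⟨-, hNv, -⟩ := Finset.mem_filter.mp hv
        have hcu := nxt_spec pos hNu
        have hcv := nxt_spec pos hNv
        have huv' : nxt pos Q u = nxt pos Q v := huv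
        rw [huv'] at hcu
        exact consR_left_unique pos hinj hcu hcv
      rw [Finset.card_product, himg]
      nlinarith [h1, Nat.zero_le (cl i).card, Nat.zero_le goodU.card]
  -- sum up
  have hsumcl : ∑ i, (cl i).card = Q.card := by
    rw [hcl]
    exact (Finset.card_eq_sum_card_fiberwise (fun u hu => Finset.mem_univ (colour u))).symm
  have hsumO : ∑ i, (O i).card ≤ (EoF G Q).card := by
    have hdisj : ∀ i ∈ (Finset.univ : Finset (Fin m)), ∀ j ∈ Finset.univ, i ≠ j →
        Disjoint (O i) (O j) := by
      intro i _ j _ hij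
      rw [Finset.disjoint_left]
      intro p hpi hpj
      exact hij ((hOcol i p hpi) ▸ (hOcol j p hpj) ▸ rfl)
    have he : ∑ i, (O i).card = (Finset.univ.biUnion O).card :=
      (Finset.card_biUnion hdisj).symm
    rw [he]
    apply Finset.card_le_card
    intro p hp
    obtain ⟨i, -, hi⟩ := Finset.mem_biUnion.mp hp
    exact hOsub i hi
  -- Cauchy-Schwarz over colours, in ℝ
  have hCS : ((Q.card : ℝ))^2 ≤ (m:ℝ) * ∑ i, ((cl i).card : ℝ)^2 := by
    have h := sq_sum_le_card_mul_sum_sq (s := (Finset.univ : Finset (Fin m)))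
      (f := fun i => ((cl i).card : ℝ))
    have e : ∑ i, ((cl i).card : ℝ) = (Q.card : ℝ) := by
      rw [← hsumcl]; push_cast; rfl
    rw [e] at h
    simpa using h
  have hsum2 : ∑ i, ((cl i).card : ℝ)^2 ≤ (B : ℝ) * Q.card + (EoF G Q).card := by
    calc ∑ i, ((cl i).card : ℝ)^2 ≤ ∑ i, ((B * (cl i).card + (O i).card : ℕ) : ℝ) := by
          apply Finset.sum_le_sum
          intro i _
          exact_mod_cast hpercol i
      _ = (B:ℝ) * (∑ i, ((cl i).card:ℝ)) + ∑ i, ((O i).card : ℝ) := by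
          push_cast
          rw [Finset.sum_add_distrib, Finset.mul_sum]
      _ ≤ (B : ℝ) * Q.card + (EoF G Q).card := by
          have e : ∑ i, ((cl i).card : ℝ) = (Q.card : ℝ) := by
            rw [← hsumcl]; push_cast; rfl
          rw [e]
          have : ∑ i, ((O i).card : ℝ) ≤ ((EoF G Q).card : ℝ) := by exact_mod_cast hsumO
          linarith
  have final : ((Q.card:ℝ))^2 ≤ (m:ℝ) * ((B:ℝ) * Q.card + (EoF G Q).card) := by
    calc ((Q.card:ℝ))^2 ≤ (m:ℝ) * ∑ i, ((cl i).card : ℝ)^2 := hCS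
      _ ≤ (m:ℝ) * ((B : ℝ) * Q.card + (EoF G Q).card) := by
          apply mul_le_mul_of_nonneg_left hsum2 (Nat.cast_nonneg m)
  exact_mod_cast final


end OrderInfra

section Model
attribute [local instance] Classical.propDecidable
variable {V : Type*} [Fintype V] [DecidableEq V] {G : SimpleGraph V} {d m : ℕ}

noncomputable def eps (r : ℕ) : ℝ := 1/(2^r - 1)

lemma two_pow_sub_one_pos {r : ℕ} (hr : 1 ≤ r) : (0:ℝ) < 2^r - 1 := by
  have h : (2:ℝ)^1 ≤ 2^r := pow_le_pow_right₀ (by norm_num) hr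
  norm_num at h
  linarith

lemma eps_pos {r : ℕ} (hr : 1 ≤ r) : 0 < eps r :=
  div_pos one_pos (two_pow_sub_one_pos hr)

lemma eps_le_one {r : ℕ} (hr : 1 ≤ r) : eps r ≤ 1 := by
  rw [eps, div_le_one (two_pow_sub_one_pos hr)]
  have h : (2:ℝ)^1 ≤ 2^r := pow_le_pow_right₀ (by norm_num) hr
  norm_num at h
  linarith

lemma eps_one : eps 1 = 1 := by norm_num [eps]

lemma eps_succ {r : ℕ} (hr : 1 ≤ r) : eps (r+1) = eps r / (2 + eps r) := by
  have h1 := two_pow_sub_one_pos hr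
  have h2 := two_pow_sub_one_pos (le_trans hr (Nat.le_succ r))
  have h3 : (2:ℝ)^r - 1 ≠ 0 := h1.ne'
  have h4 : (2:ℝ)^(r+1) - 1 ≠ 0 := h2.ne'
  unfold eps
  rw [pow_succ] at h4 ⊢
  have h5 : 2 + 1/((2:ℝ)^r - 1) ≠ 0 := by
    have := eps_pos hr
    unfold eps at this
    positivity
  field_simp
  ring

lemma anc_mono (M : TreeModel G d m) : ∀ (k : ℕ), k ≤ d → ∀ (j : ℕ), j ≤ k →
    ∀ u v : V, M.anc k u = M.anc k v → M.anc j u = M.anc j v := by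
  intro k
  induction k with
  | zero =>
    intro _ j hj u v h
    have : j = 0 := Nat.le_zero.mp hj
    rw [this]; exact h
  | succ n ih =>
    intro hk j hj u v h
    rcases Nat.lt_or_ge j (n+1) with hlt | hge
    · have h' : M.anc n u = M.anc n v := M.anc_refine n (by omega) u v h
      exact ih (by omega) j (by omega) u v h'
    · have hje : j = n+1 := by omega
      rw [hje]; exact h

lemma part_adj (M : TreeModel G d m) {t : ℕ} (ht : t < d) {u v : V}
    (hanc : M.anc t u = M.anc t v) (hne : M.anc (t+1) u ≠ M.anc (t+1) v) :
    (G.Adj u v ↔ (M.colour u, M.colour v, d - t) ∈ M.sig) := by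
  have huv : u ≠ v := fun he => hne (he ▸ rfl)
  have hfg : Nat.findGreatest (fun s => M.anc s u = M.anc s v) d = t := by
    rw [Nat.findGreatest_eq_iff]
    refine ⟨ht.le, fun _ => hanc, fun n hn hnd hP => ?_⟩
    exact hne (anc_mono M n hnd (t+1) (by omega) u v hP)
  rw [M.adj_iff u v huv, hfg]

lemma main_ih (M : TreeModel G d m) (pos : V → ℕ) (hinj : Function.Injective pos)
    (hm : 1 ≤ m) :
    ∀ r, 1 ≤ r → r ≤ d → ∀ a : ℕ,
      ((Finset.univ.filter (fun v => M.anc (d - r) v = a)).card : ℝ) ^ (1 + eps r)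
        / ((((brkF G pos (Finset.univ.filter (fun v => M.anc (d - r) v = a))).card + 1 : ℕ)) : ℝ) ^ (eps r)
      - ((Finset.univ.filter (fun v => M.anc (d - r) v = a)).card : ℝ)
      ≤ 4 * m * ((EoF G (Finset.univ.filter (fun v => M.anc (d - r) v = a))).card : ℝ) := by
  intro r hr
  induction r, hr using Nat.le_induction with
  | base =>
    intro hd1 a
    set Q := Finset.univ.filter (fun v => M.anc (d - 1) v = a) with hQdef
    rcases Finset.eq_empty_or_nonempty Q with hQ | hQ
    · rw [hQ]
      simp only [Finset.card_empty, Nat.cast_zero]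
      have h0 : ((0:ℝ)) ^ (1 + eps 1) = 0 := by
        apply Real.zero_rpow
        have := eps_pos (le_refl 1)
        positivity
      rw [h0, zero_div]
      simp only [sub_zero, zero_sub, neg_nonpos]
      positivity
    · -- base case, Q nonempty
      have hN1 : 1 ≤ Q.card := Finset.card_pos.mpr hQ
      set Bn := (brkF G pos Q).card + 1 with hBn
      have hBN : Bn ≤ Q.card := brk_add_one_le G pos hQ
      have hB1 : 1 ≤ Bn := by omega
      have hsame : ∀ u v, u ∈ Q → v ∈ Q → u ≠ v →
          (G.Adj u v ↔ (M.colour u, M.colour v, 1) ∈ M.sig) := by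
        intro u v hu hv huv
        have ht : d - 1 < d := by omega
        have h1 : M.anc (d-1) u = M.anc (d-1) v := by
          rw [(Finset.mem_filter.mp hu).2, (Finset.mem_filter.mp hv).2]
        have h2 : M.anc ((d-1)+1) u ≠ M.anc ((d-1)+1) v := by
          rw [show d - 1 + 1 = d from by omega]
          exact fun he => huv (M.leaf_inj he)
        have h3 := part_adj M ht h1 h2
        rw [show d - (d-1) = 1 from by omega] at h3
        exact h3
      have hbc := base_count G pos hinj Q M.colour (fun i j => (i,j,1) ∈ M.sig)
        (fun i j h => M.sig_symm i j 1 h) hsame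
      have hEg : 2 * (Q.card - Bn) ≤ (EoF G Q).card := by
        have hpart := Q_partition G pos Q
        have hgp := good_pairs G pos Q
        have hl := lastF_card_le_one pos hinj Q
        omega
      -- pass to reals
      have hexp : (1:ℝ) + eps 1 = ((2:ℕ):ℝ) := by rw [eps_one]; norm_num
      rw [hexp, Real.rpow_natCast, eps_one, Real.rpow_one]
      set Nr := (Q.card : ℝ) with hNr
      set Br := (Bn : ℝ) with hBr
      set Er := ((EoF G Q).card : ℝ) with hEr
      have hNr1 : (1:ℝ) ≤ Nr := by rw [hNr]; exact_mod_cast hN1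
      have hBr1 : (1:ℝ) ≤ Br := by rw [hBr]; exact_mod_cast hB1
      have hBrN : Br ≤ Nr := by rw [hBr, hNr]; exact_mod_cast hBN
      have hBr0 : (0:ℝ) < Br := by linarith
      have hmr : (1:ℝ) ≤ (m:ℝ) := by exact_mod_cast hm
      have hEg' : 2 * (Nr - Br) ≤ Er := by
        have h' : ((2 * (Q.card - Bn) : ℕ) : ℝ) ≤ Er := by
          rw [hEr]; exact_mod_cast hEg
        rw [Nat.cast_mul, Nat.cast_sub hBN] at h'
        rw [hNr, hBr]
        push_cast at h' ⊢
        linarith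
      have hbc2 : Q.card^2 ≤ m * (Bn * Q.card + (EoF G Q).card) := by
        rw [hBn]; exact hbc
      have hbc' : Nr^2 ≤ m * (Br * Nr + Er) := by
        rw [hNr, hBr, hEr]
        exact_mod_cast hbc2
      rw [div_sub' hBr0.ne', div_le_iff₀ hBr0]
      by_cases hcase : Nr ≤ 8 * m * Br
      · nlinarith [hEg', mul_nonneg (mul_nonneg (by linarith : (0:ℝ) ≤ 8*(m:ℝ)) (by linarith : (0:ℝ) ≤ Br)) (by linarith : (0:ℝ) ≤ Nr - Br),
          mul_nonneg (by linarith : (0:ℝ) ≤ 8*(m:ℝ)*Br - Nr) (by linarith : (0:ℝ) ≤ Nr - Br),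
          mul_nonneg (by linarith : (0:ℝ) ≤ (m:ℝ)) (by linarith : (0:ℝ) ≤ Er)]
      · push_neg at hcase
        nlinarith [hbc', mul_nonneg (by linarith : (0:ℝ) ≤ (m:ℝ)) (by linarith : (0:ℝ) ≤ Er),
          mul_pos hBr0 (by linarith : (0:ℝ) < Nr),
          mul_le_mul_of_nonneg_right hBrN (by linarith : (0:ℝ) ≤ Nr),
          mul_nonneg (mul_nonneg (by linarith : (0:ℝ) ≤ (m:ℝ)) (by linarith : (0:ℝ) ≤ Er)) (by linarith : (0:ℝ) ≤ Br - 1)]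
  | succ r hr ih =>
    intro hd a
    have hrd : r ≤ d := by omega
    have htd : d - (r+1) < d := by omega
    have ht1 : (d - (r+1)) + 1 = d - r := by omega
    set t := d - (r+1) with htdef
    set f : V → ℕ := M.anc (d - r) with hf
    set Q := Finset.univ.filter (fun v => M.anc t v = a) with hQdef
    rcases Finset.eq_empty_or_nonempty Q with hQ | hQ
    · rw [hQ]
      simp only [Finset.card_empty, Nat.cast_zero]
      have h0 : ((0:ℝ)) ^ (1 + eps (r+1)) = 0 := by
        apply Real.zero_rpow
        have := eps_pos (show 1 ≤ r+1 by omega)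
        positivity
      rw [h0, zero_div]
      simp only [sub_zero, zero_sub, neg_nonpos]
      positivity
    · have hN1 : 1 ≤ Q.card := Finset.card_pos.mpr hQ
      set Bn := (brkF G pos Q).card + 1 with hBn
      have hBN : Bn ≤ Q.card := brk_add_one_le G pos hQ
      have hB1 : 1 ≤ Bn := by omega
      set τn := (trnF G pos Q f).card with hτn
      -- subparts are full parts
      have hpart : ∀ c ∈ Q.image f, Q.filter (fun v => f v = c)
          = Finset.univ.filter (fun v => M.anc (d - r) v = c) := by
        intro c hc
        obtain ⟨u, huQ, hfu⟩ := Finset.mem_image.mp hc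
        ext v
        constructor
        · intro hv
          obtain ⟨hvQ, hvf⟩ := Finset.mem_filter.mp hv
          exact Finset.mem_filter.mpr ⟨Finset.mem_univ v, hvf⟩
        · intro hv
          have hvf : f v = c := (Finset.mem_filter.mp hv).2
          refine Finset.mem_filter.mpr ⟨?_, hvf⟩
          have h1 : M.anc (t+1) v = M.anc (t+1) u := by
            rw [ht1]
            show f v = f u
            rw [hvf, hfu]
          have h2 : M.anc t v = M.anc t u := M.anc_refine t htd v u h1
          have h3 : M.anc t u = a := (Finset.mem_filter.mp huQ).2
          exact Finset.mem_filter.mpr ⟨Finset.mem_univ v, h2.trans h3⟩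
      -- the IH for subparts
      have hIHc : ∀ c ∈ Q.image f,
          ((Q.filter (fun v => f v = c)).card : ℝ) ^ (1 + eps r)
            / ((((brkF G pos (Q.filter (fun v => f v = c))).card + 1 : ℕ)) : ℝ) ^ (eps r)
          - ((Q.filter (fun v => f v = c)).card : ℝ)
          ≤ 4 * m * ((EoF G (Q.filter (fun v => f v = c))).card : ℝ) := by
        intro c hc
        rw [hpart c hc]
        exact ih hrd c
      -- cross adjacency is colour-determined
      have hcross : ∀ u v w, u ∈ Q → v ∈ Q → w ∈ Q → f u ≠ f v → f u ≠ f w →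
          M.colour v = M.colour w → G.Adj u v → G.Adj u w := by
        intro u v w hu hv hw huv huw hcol hadj
        have hancu : ∀ x, x ∈ Q → M.anc t x = a := fun x hx => (Finset.mem_filter.mp hx).2
        have h1 : M.anc t u = M.anc t v := by rw [hancu u hu, hancu v hv]
        have h2 : M.anc t u = M.anc t w := by rw [hancu u hu, hancu w hw]
        have hne1 : M.anc (t+1) u ≠ M.anc (t+1) v := by rw [ht1]; exact huv
        have hne2 : M.anc (t+1) u ≠ M.anc (t+1) w := by rw [ht1]; exact huw
        have hiff1 := part_adj M htd h1 hne1
        have hiff2 := part_adj M htd h2 hne2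
        rw [hiff2, ← hcol]
        exact hiff1.mp hadj
      have hcc := cross_count G pos hinj Q f M.colour hcross
      have hXτ := trn_pairs G pos Q f
      have hEp := edge_partition G Q f
      have hBB := sum_BB_le G pos hinj Q f
      -- Radon
      set κ := eps r with hκ
      have hκpos : 0 < κ := eps_pos hr
      have hκ1 : κ ≤ 1 := eps_le_one hr
      set ι := Q.image f with hι
      have hιne : ι.Nonempty := hQ.image f
      set aR : ℕ → ℝ := fun c => ((Q.filter (fun v => f v = c)).card : ℝ) with haR
      set bR : ℕ → ℝ := fun c => (((brkF G pos (Q.filter (fun v => f v = c))).card + 1 : ℕ) : ℝ) with hbR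
      have haRnn : ∀ c ∈ ι, 0 ≤ aR c := fun c _ => Nat.cast_nonneg _
      have hbR1 : ∀ c ∈ ι, 1 ≤ bR c := by
        intro c _
        show (1:ℝ) ≤ (((brkF G pos (Q.filter (fun v => f v = c))).card + 1 : ℕ) : ℝ)
        exact_mod_cast Nat.le_add_left 1 _
      have hradon := radon ι aR bR κ hκpos haRnn hbR1 hιne
      have hsumA : ∑ c ∈ ι, aR c = (Q.card : ℝ) := by
        rw [haR]
        rw [← Nat.cast_sum]
        congr 1
        exact (Finset.card_eq_sum_card_fiberwise
          (fun u hu => Finset.mem_image_of_mem f hu)).symm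
      have hsumBle : ∑ c ∈ ι, bR c ≤ (Bn : ℝ) + (τn : ℝ) := by
        rw [hbR, ← Nat.cast_sum]
        have : ((∑ c ∈ ι, ((brkF G pos (Q.filter (fun v => f v = c))).card + 1) : ℕ) : ℝ)
            ≤ ((Bn + τn : ℕ) : ℝ) := by exact_mod_cast hBB
        push_cast at this ⊢
        linarith
      have hsumBpos : (0:ℝ) < ∑ c ∈ ι, bR c := by
        apply Finset.sum_pos (fun c hc => lt_of_lt_of_le one_pos (hbR1 c hc)) hιne
      -- reals
      set Nr := (Q.card : ℝ) with hNr
      set Br := (Bn : ℝ) with hBr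
      set τr := (τn : ℝ) with hτr
      have hNr1 : (1:ℝ) ≤ Nr := by rw [hNr]; exact_mod_cast hN1
      have hBr1 : (1:ℝ) ≤ Br := by rw [hBr]; exact_mod_cast hB1
      have hBrN : Br ≤ Nr := by rw [hBr, hNr]; exact_mod_cast hBN
      have hτr0 : (0:ℝ) ≤ τr := by rw [hτr]; exact Nat.cast_nonneg _
      have hmr : (1:ℝ) ≤ (m:ℝ) := by exact_mod_cast hm
      have hBint : Br = 1 ∨ 2 ≤ Br := by
        rcases Nat.eq_zero_or_pos (brkF G pos Q).card with h | h
        · left; rw [hBr, hBn, h]; norm_num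
        · right; rw [hBr, hBn]; exact_mod_cast by omega
      -- the sum of subpart bounds
      have hsub1 : ∑ c ∈ ι, (aR c ^ (1+κ) / bR c ^ κ) - Nr
          ≤ 4 * m * ((∑ c ∈ ι, (EoF G (Q.filter (fun v => f v = c))).card : ℕ) : ℝ) := by
        rw [← hsumA]
        push_cast
        rw [Finset.mul_sum, ← Finset.sum_sub_distrib]
        apply Finset.sum_le_sum
        intro c hc
        have h := hIHc c hc
        have e : bR c = (((brkF G pos (Q.filter (fun v => f v = c))).card + 1 : ℕ) : ℝ) := rfl
        calc aR c ^ (1+κ) / bR c ^ κ - aR c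
            ≤ 4 * m * ((EoF G (Q.filter (fun v => f v = c))).card : ℝ) := h
          _ = _ := by norm_num
      -- Radon gives the Hölder bound
      have hrad2 : Nr ^ (1+κ) / ((Br + τr) ^ κ) ≤ ∑ c ∈ ι, (aR c ^ (1+κ) / bR c ^ κ) := by
        have h1 : Nr ^ (1+κ) ≤ (∑ c ∈ ι, (aR c ^ (1+κ) / bR c ^ κ)) * (∑ c ∈ ι, bR c) ^ κ := by
          rw [← hsumA]
          exact hradon
        have h2 : (∑ c ∈ ι, bR c) ^ κ ≤ (Br + τr) ^ κ :=
          Real.rpow_le_rpow hsumBpos.le hsumBle hκpos.le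
        have h3 : (0:ℝ) < (Br + τr) ^ κ := Real.rpow_pos_of_pos (by linarith) _
        have h4 : (0:ℝ) ≤ ∑ c ∈ ι, (aR c ^ (1+κ) / bR c ^ κ) := by
          apply Finset.sum_nonneg
          intro c hc
          apply div_nonneg (Real.rpow_nonneg (haRnn c hc) _) (Real.rpow_nonneg (by linarith [hbR1 c hc]) _)
        rw [div_le_iff₀ h3]
        calc Nr ^ (1+κ) ≤ (∑ c ∈ ι, (aR c ^ (1+κ) / bR c ^ κ)) * (∑ c ∈ ι, bR c) ^ κ := h1
          _ ≤ (∑ c ∈ ι, (aR c ^ (1+κ) / bR c ^ κ)) * (Br + τr) ^ κ :=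
              mul_le_mul_of_nonneg_left h2 h4
      -- cross bound
      have hXo : 4 * (m:ℝ) * ((XoF G Q f).card : ℝ) ≥ 4 * m * τr + τr^2/4 := by
        have h1 : 2 * τn ≤ (XoF G Q f).card := by rw [hτn]; exact hXτ
        have h1' : 2 * τr ≤ ((XoF G Q f).card : ℝ) := by rw [hτr]; exact_mod_cast h1
        have h2' : τr^2 ≤ 8 * m * ((XoF G Q f).card : ℝ) := by rw [hτr, hτn]; exact hcc
        have hmnn : (0:ℝ) ≤ 2*(m:ℝ) := by linarith
        have ha := mul_le_mul_of_nonneg_left h1' hmnn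
        linarith [ha, h2']
      -- star6
      have hstar := star6 (m:ℝ) Nr Br τr κ hmr hNr1 hBr1 hBrN hBint hτr0 hκpos hκ1
      have hεe : eps (r+1) = κ / (2 + κ) := eps_succ hr
      -- put everything together
      have hEo : ((EoF G Q).card : ℝ)
          = ((∑ c ∈ ι, (EoF G (Q.filter (fun v => f v = c))).card : ℕ) : ℝ)
            + ((XoF G Q f).card : ℝ) := by
        rw [← Nat.cast_add]
        exact_mod_cast congrArg (Nat.cast : ℕ → ℝ) hEp
      rw [hεe]
      calc Nr ^ (1 + κ/(2+κ)) / Br ^ (κ/(2+κ)) - Nr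
          ≤ (Nr ^ (1+κ) / (Br + τr) ^ κ + (4*m*τr + τr^2/4)) - Nr := by
            have := hstar
            linarith
        _ ≤ (∑ c ∈ ι, (aR c ^ (1+κ) / bR c ^ κ) + (4*m*τr + τr^2/4)) - Nr := by
            linarith [hrad2]
        _ ≤ 4 * m * ((∑ c ∈ ι, (EoF G (Q.filter (fun v => f v = c))).card : ℕ) : ℝ)
            + 4 * m * ((XoF G Q f).card : ℝ) := by
            linarith [hsub1, hXo]
        _ = 4 * m * ((EoF G Q).card : ℝ) := by rw [hEo]; ring

end Model

section Final
attribute [local instance] Classical.propDecidable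
variable {V : Type*} [Fintype V] [DecidableEq V] {G : SimpleGraph V}

lemma exists_pos (hG : ∃ (u v : V) (p : G.Walk u v), p.IsHamiltonian) :
    ∃ pos : V → ℕ, Function.Injective pos ∧ (∀ v : V, pos v < Fintype.card V) ∧
      (∀ k, k < Fintype.card V → ∃ v, pos v = k) ∧
      (∀ u w : V, pos w = pos u + 1 → G.Adj u w) := by
  obtain ⟨a, b, p, hp⟩ := hG
  set L := p.support with hL
  have hnodup : L.Nodup := by
    rw [List.nodup_iff_count_le_one]
    intro v
    rw [hp v]
  have hmem : ∀ v : V, v ∈ L := fun v => hp.mem_support v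
  have hchain : List.IsChain G.Adj L := p.isChain_adj_support
  have hlen : L.length = Fintype.card V := by
    have h1 : L.toFinset = Finset.univ := by
      ext v; simp [hmem v]
    have h2 := List.toFinset_card_of_nodup hnodup
    rw [h1, Finset.card_univ] at h2
    omega
  refine ⟨fun v => L.idxOf v, ?_, ?_, ?_, ?_⟩
  · intro u v h
    exact (List.idxOf_inj (hmem u)).mp h
  · intro v; rw [← hlen]; exact List.idxOf_lt_length_iff.mpr (hmem v)
  · intro k hk
    rw [← hlen] at hk
    exact ⟨L.get ⟨k, hk⟩, List.get_idxOf hnodup _⟩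
  · intro u w h
    simp only at h
    have hu : L.idxOf u < L.length := List.idxOf_lt_length_iff.mpr (hmem u)
    have hw : L.idxOf w < L.length := List.idxOf_lt_length_iff.mpr (hmem w)
    have hlt : L.idxOf u < L.length - 1 := by omega
    have hch := List.isChain_iff_getElem.mp hchain (L.idxOf u) (by omega)
    rw [List.getElem_idxOf hu] at hch
    have e : L.get ⟨L.idxOf u + 1, by omega⟩ = w := by
      have e2 := List.idxOf_get hw
      have e3 : (⟨L.idxOf u + 1, by omega⟩ : Fin L.length) = ⟨L.idxOf w, hw⟩ := by
        apply Fin.ext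
        simp only
        omega
      rw [e3]
      exact e2
    rw [List.get_eq_getElem] at e
    rwa [e] at hch

lemma brk_univ_empty (pos : V → ℕ) (hlt : ∀ v, pos v < Fintype.card V)
    (hsurj : ∀ k, k < Fintype.card V → ∃ v, pos v = k)
    (hadj : ∀ u w : V, pos w = pos u + 1 → G.Adj u w) :
    brkF G pos (Finset.univ : Finset V) = ∅ := by
  rw [Finset.eq_empty_iff_forall_notMem]
  intro u hu
  obtain ⟨-, hN, hnadj⟩ := Finset.mem_filter.mp hu
  have hc := nxt_spec pos hN
  have hkey : pos (nxt pos Finset.univ u) = pos u + 1 := by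
    by_contra hne
    have h1 : pos u < pos (nxt pos Finset.univ u) := hc.2.2.1
    have h2 : pos u + 1 < pos (nxt pos Finset.univ u) := by omega
    have h3 : pos u + 1 < Fintype.card V := by
      have := hlt (nxt pos Finset.univ u)
      omega
    obtain ⟨x, hx⟩ := hsurj (pos u + 1) h3
    rcases hc.2.2.2 x (Finset.mem_univ x) with h | h <;> omega
  exact hnadj (hadj u _ hkey)

lemma Eo_univ_eq :
    (EoF G (Finset.univ : Finset V)).card = 2 * G.edgeFinset.card := by
  have h1 : Fintype.card G.Dart = 2 * G.edgeFinset.card :=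
    G.dart_card_eq_twice_card_edges
  have h2 : Fintype.card G.Dart = Fintype.card {p : V × V // G.Adj p.1 p.2} := by
    apply Fintype.card_congr
    exact ⟨fun dd => ⟨dd.toProd, dd.adj⟩, fun x => ⟨x.1, x.2⟩,
      fun _ => rfl, fun _ => rfl⟩
  have h3 : Fintype.card {p : V × V // G.Adj p.1 p.2}
      = (Finset.univ.filter (fun p : V × V => G.Adj p.1 p.2)).card :=
    Fintype.card_subtype _
  have h4 : EoF G (Finset.univ : Finset V)
      = Finset.univ.filter (fun p : V × V => G.Adj p.1 p.2) := by
    rw [EoF, Finset.univ_product_univ]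
  rw [h4, ← h3, ← h2, h1]

end Final

end Stmt8Proof

/-- A traceable graph on `n ≥ 2` vertices admitting a `(d,m)`-tree-model (`m ≥ 2`, `d ≥ 1`)
has at least `(1/(16m))·n^(1 + 1/(2^d − 1))` edges. -/
theorem stmt_8 {V : Type*} [Fintype V] [DecidableEq V] (G : SimpleGraph V)
    (d m : ℕ) (hm : 2 ≤ m) (hd : 1 ≤ d)
    (hmodel : Nonempty (TreeModel G d m)) (hG : Traceable G)
    (hn : 2 ≤ Fintype.card V) :
    (1 / (16 * m) : ℝ) * (Fintype.card V : ℝ) ^ (1 + 1 / (2 ^ d - 1) : ℝ) ≤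
      (G.edgeSet.ncard : ℝ) := by
  classical
  obtain ⟨M⟩ := hmodel
  obtain ⟨pos, hinj, hlt, hsurj, hadj⟩ := Stmt8Proof.exists_pos hG
  have hm1 : 1 ≤ m := by omega
  have hn0 : 0 < Fintype.card V := by omega
  obtain ⟨v₀⟩ : Nonempty V := Fintype.card_pos_iff.mp hn0
  have hQu : (Finset.univ.filter (fun v => M.anc (d - d) v = M.anc 0 v₀))
      = (Finset.univ : Finset V) := by
    rw [Nat.sub_self]
    ext v
    simp only [Finset.mem_filter, Finset.mem_univ, true_and, iff_true]
    exact M.root_eq v v₀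
  have hbrk : Stmt8Proof.brkF G pos (Finset.univ : Finset V) = ∅ :=
    Stmt8Proof.brk_univ_empty pos hlt hsurj hadj
  have hmain : ((Fintype.card V : ℕ):ℝ)^(1 + Stmt8Proof.eps d) - (Fintype.card V : ℕ)
      ≤ 4*m*((Stmt8Proof.EoF G (Finset.univ:Finset V)).card : ℝ) := by
    have h := Stmt8Proof.main_ih M pos hinj hm1 d hd (le_refl d) (M.anc 0 v₀)
    rw [hQu, hbrk] at h
    simp only [Finset.card_empty, Finset.card_univ, zero_add, Nat.cast_one,
      Real.one_rpow, div_one] at h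
    exact h
  have hEo := Stmt8Proof.Eo_univ_eq (G := G)
  have hncard : G.edgeSet.ncard = G.edgeFinset.card := by
    rw [← SimpleGraph.coe_edgeFinset, Set.ncard_coe_finset]
  have hE2 : ((Stmt8Proof.EoF G (Finset.univ:Finset V)).card : ℝ)
      = 2 * (G.edgeSet.ncard : ℝ) := by
    rw [hEo, hncard]; push_cast; ring
  have hlow : Fintype.card V - 1 ≤ G.edgeSet.ncard := by
    have hpart := Stmt8Proof.Q_partition G pos (Finset.univ : Finset V)
    rw [hbrk] at hpart
    have hl := Stmt8Proof.lastF_card_le_one pos hinj (Finset.univ : Finset V)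
    have hgp := Stmt8Proof.good_pairs G pos (Finset.univ : Finset V)
    rw [hEo] at hgp
    rw [Finset.card_univ, Finset.card_empty] at hpart
    rw [hncard]
    omega
  have hnR1 : (1:ℝ) ≤ (Fintype.card V : ℝ) := by exact_mod_cast (by omega : 1 ≤ Fintype.card V)
  have hnR2 : (2:ℝ) ≤ (Fintype.card V : ℝ) := by exact_mod_cast hn
  have hmR : (2:ℝ) ≤ (m:ℝ) := by exact_mod_cast hm
  have hεpos := Stmt8Proof.eps_pos hd
  have hnpos : (0:ℝ) < (Fintype.card V : ℝ) := by linarith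
  have hsplit : ((Fintype.card V : ℕ):ℝ)^(1+Stmt8Proof.eps d)
      = (Fintype.card V : ℝ) * ((Fintype.card V : ℕ):ℝ)^(Stmt8Proof.eps d) := by
    rw [Real.rpow_add hnpos, Real.rpow_one]
  have hgoal : (1 / (16 * m) : ℝ) * ((Fintype.card V : ℕ) : ℝ) ^ (1 + Stmt8Proof.eps d)
      ≤ (G.edgeSet.ncard : ℝ) := by
    set E := (G.edgeSet.ncard : ℝ) with hEdef
    have hmainE : ((Fintype.card V : ℕ):ℝ)^(1 + Stmt8Proof.eps d) - (Fintype.card V:ℝ)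
        ≤ 8*m*E := by
      rw [hE2] at hmain
      rw [hEdef]
      linarith
    have hEnn : (0:ℝ) ≤ E := by rw [hEdef]; exact Nat.cast_nonneg _
    have h16 : (0:ℝ) < 16*(m:ℝ) := by linarith
    rw [div_mul_eq_mul_div, div_le_iff₀ h16, one_mul]
    by_cases hcase : (2:ℝ) ≤ ((Fintype.card V : ℕ):ℝ)^(Stmt8Proof.eps d)
    · have h2n : 2*(Fintype.card V:ℝ) ≤ ((Fintype.card V : ℕ):ℝ)^(1+Stmt8Proof.eps d) := by
        rw [hsplit]; nlinarith
      nlinarith [hmainE, h2n]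
    · push_neg at hcase
      have hElow : (Fintype.card V : ℝ) - 1 ≤ E := by
        have h' : ((Fintype.card V - 1 : ℕ) : ℝ) ≤ E := by
          rw [hEdef]; exact_mod_cast hlow
        rw [Nat.cast_sub (by omega)] at h'
        simpa using h'
      have hub : ((Fintype.card V : ℕ):ℝ)^(1+Stmt8Proof.eps d) < 2*(Fintype.card V:ℝ) := by
        rw [hsplit]
        nlinarith [Real.rpow_pos_of_pos hnpos (Stmt8Proof.eps d)]
      nlinarith [hElow, hub, mul_nonneg (show (0:ℝ) ≤ 16*(m:ℝ)-32 by linarith) hEnn, hnR2]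
  have hexp : (1 + 1 / (2 ^ d - 1) : ℝ) = 1 + Stmt8Proof.eps d := by
    rw [Stmt8Proof.eps]
  rw [hexp]
  exact hgoal
end

section
/- Define γ_1 = 1 and γ_d = 4·γ_{d−1} + 32 for d ≥ 2 (so γ_d = (35·4^d − 128)/12). For every integer d ≥ 1 and every integer n ≥ 1, there exists a traceable simple graph G on exactly n vertices admitting a (d, 2^(d−1))-tree-model with at most γ_d · n^(1 + 1/(2^d − 1)) edges. -/

lemma findGreatest_congr {P Q : ℕ → Prop} [DecidablePred P] [DecidablePred Q]
    (h : ∀ t, P t ↔ Q t) : ∀ k, Nat.findGreatest P k = Nat.findGreatest Q k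
  | 0 => rfl
  | k+1 => by
    rw [Nat.findGreatest_succ, Nat.findGreatest_succ, findGreatest_congr h k]
    by_cases hp : P (k+1)
    · rw [if_pos hp, if_pos ((h _).1 hp)]
    · rw [if_neg hp, if_neg (fun hq => hp ((h _).2 hq))]

lemma exists_walk_of_chain {V : Type*} (G : SimpleGraph V) :
    ∀ (l : List V), l.Chain' G.Adj → l ≠ [] → ∃ (u v : V) (p : G.Walk u v), p.support = l
  | [], _, h => absurd rfl h
  | [a], _, _ => ⟨a, a, SimpleGraph.Walk.nil, rfl⟩
  | a :: b :: t, hc, _ => by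
    obtain ⟨u, v, p, hp⟩ :=
      exists_walk_of_chain G (b :: t) (List.isChain_cons_cons.mp hc).2 (by simp)
    have hu : u = b := by
      have h2 := p.support_eq_cons
      rw [h2] at hp
      exact (List.cons_eq_cons.mp hp).1
    subst hu
    exact ⟨a, v, SimpleGraph.Walk.cons (List.isChain_cons_cons.mp hc).1 p, by simp [hp]⟩

lemma ncard_iUnion_le' {α ι : Type*} [Fintype ι] [DecidableEq α] (f : ι → Set α)
    (hf : ∀ i, (f i).Finite) : (⋃ i, f i).ncard ≤ ∑ i : ι, (f i).ncard := by
  have h1 : (⋃ i, f i) = ↑(Finset.univ.biUnion fun i => (hf i).toFinset) := by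
    ext x; simp
  rw [h1, Set.ncard_coe_finset]
  refine Finset.card_biUnion_le.trans (Finset.sum_le_sum fun i _ => ?_)
  rw [Set.ncard_eq_toFinset_card _ (hf i)]

lemma ncard_range_le {α ι : Type*} (f : ι → α) (h : (Set.univ : Set ι).Finite) :
    (Set.range f).ncard ≤ Nat.card ι := by
  rw [← Set.image_univ, ← Set.ncard_univ]
  exact Set.ncard_image_le h

open Real Set

noncomputable def expo (d : ℕ) : ℝ := 1 + 1 / (2 ^ d - 1)

def Ppred (γ : ℕ → ℝ) (d : ℕ) : Prop :=
  ∃ S : Set (Fin (2 ^ (d - 1)) × Fin (2 ^ (d - 1)) × ℕ),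
    (∀ i j ℓ, (i, j, ℓ) ∈ S → (j, i, ℓ) ∈ S) ∧
    (∀ i j ℓ, (i, j, ℓ) ∈ S → 1 ≤ ℓ ∧ ℓ ≤ d) ∧
    ∀ n : ℕ, 1 ≤ n → ∃ G : SimpleGraph (Fin n),
      (List.finRange n).Chain' G.Adj ∧
      (∃ M : TreeModel G d (2 ^ (d - 1)), M.sig = S) ∧
      (G.edgeSet.ncard : ℝ) ≤ γ d * (n : ℝ) ^ expo d

lemma ppred_one (γ : ℕ → ℝ) (hγ1 : γ 1 = 1) : Ppred γ 1 := by
  refine ⟨{(0, 0, 1)}, ?_, ?_, fun n hn => ?_⟩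
  · intro i j ℓ h
    simp only [Set.mem_singleton_iff, Prod.mk.injEq] at h ⊢
    tauto
  · intro i j ℓ h
    simp only [Set.mem_singleton_iff, Prod.mk.injEq] at h
    omega
  refine ⟨⊤, ?_, ⟨⟨fun t x => if t = 0 then 0 else x.val, fun u v => rfl, ?_, ?_,
      fun _ => 0, {(0, 0, 1)}, ?_, ?_, ?_⟩, rfl⟩, ?_⟩
  · -- chain'
    change List.IsChain _ _
    rw [List.isChain_iff_getElem]
    intro i h
    rw [List.getElem_finRange, List.getElem_finRange]
    simp only [SimpleGraph.top_adj, ne_eq]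
    intro hcon
    have := congrArg Fin.val hcon
    simp at this
  · -- leaf_inj
    intro u v h
    simp only [one_ne_zero, if_false] at h
    exact Fin.ext h
  · -- anc_refine
    intro t ht u v _
    interval_cases t
    simp
  · intro i j ℓ h
    simp only [Set.mem_singleton_iff, Prod.mk.injEq] at h ⊢
    tauto
  · intro i j ℓ h
    simp only [Set.mem_singleton_iff, Prod.mk.injEq] at h
    omega
  · -- adj_iff
    intro u v huv
    have hfg : Nat.findGreatest (fun t => (if t = 0 then (0:ℕ) else u.val) =
        (if t = 0 then 0 else v.val)) 1 = 0 := by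
      rw [Nat.findGreatest_eq_zero_iff]
      intro t ht ht1 hP
      interval_cases t
      simp only [one_ne_zero, if_false] at hP
      exact huv (Fin.ext hP)
    simp only [hfg, Nat.sub_zero]
    exact iff_of_true huv (by simp [Subsingleton.elim (0 : Fin 1) 0,
      Subsingleton.elim ((fun _ => (0 : Fin 1)) u) 0])
  · -- edge bound
    have h1 : (⊤ : SimpleGraph (Fin n)).edgeSet.ncard ≤ n * n := by
      calc (⊤ : SimpleGraph (Fin n)).edgeSet.ncard
          ≤ (Set.univ : Set (Sym2 (Fin n))).ncard :=
            Set.ncard_le_ncard (Set.subset_univ _) (Set.toFinite _)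
        _ = Fintype.card (Sym2 (Fin n)) := by rw [Set.ncard_univ, Nat.card_eq_fintype_card]
        _ = n * (n + 1) / 2 := by
            rw [Sym2.card, Fintype.card_fin, Nat.choose_two_right, Nat.add_sub_cancel,
              Nat.mul_comm]
        _ ≤ (2 * (n * n)) / 2 := Nat.div_le_div_right (by nlinarith)
        _ = n * n := by omega
    have h2 : (n : ℝ) ^ expo 1 = (n : ℝ) * n := by
      have h3 : expo 1 = 2 := by norm_num [expo]
      rw [h3, show ((2 : ℝ) = ((2 : ℕ) : ℝ)) by norm_num, Real.rpow_natCast]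
      ring
    rw [hγ1, one_mul, h2]
    calc ((⊤ : SimpleGraph (Fin n)).edgeSet.ncard : ℝ) ≤ (n * n : ℕ) := by exact_mod_cast h1
      _ = (n : ℝ) * n := by push_cast; ring

def connP (n b : ℕ) (x : Fin n) : Prop :=
  x.val % b = 0 ∨ x.val % b = b - 1 ∨ x.val = n - 1

instance (n b : ℕ) (x : Fin n) : Decidable (connP n b x) := by
  unfold connP; infer_instance

lemma ppred_step (γ : ℕ → ℝ) (d : ℕ) (hd : 1 ≤ d) (hγd : 1 ≤ γ d)
    (hγs : γ (d + 1) = 4 * γ d + 32) (IH : Ppred γ d) : Ppred γ (d + 1) := by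
  classical
  obtain ⟨S, Ssym, Smem, hS⟩ := IH
  have hM'pos : 0 < 2 ^ (d - 1) := Nat.pow_pos (by norm_num)
  have h2M : (2 : ℕ) ^ d = 2 ^ (d - 1) + 2 ^ (d - 1) := by
    have : (2:ℕ) ^ d = 2 ^ (d - 1 + 1) := by congr 1; omega
    rw [this, pow_succ]; ring
  set S' : Set (Fin (2 ^ d) × Fin (2 ^ d) × ℕ) :=
    {x | (x.2.2 ≤ d ∧ ((⟨x.1.val % 2 ^ (d - 1), Nat.mod_lt _ hM'pos⟩ : Fin (2 ^ (d - 1))),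
            (⟨x.2.1.val % 2 ^ (d - 1), Nat.mod_lt _ hM'pos⟩ : Fin (2 ^ (d - 1))), x.2.2) ∈ S)
      ∨ (x.2.2 = d + 1 ∧ 2 ^ (d - 1) ≤ x.1.val ∧ 2 ^ (d - 1) ≤ x.2.1.val)} with hS'def
  have hS'mem : ∀ (i j : Fin (2 ^ d)) (ℓ : ℕ), ((i, j, ℓ) ∈ S') ↔
      ((ℓ ≤ d ∧ ((⟨i.val % 2 ^ (d - 1), Nat.mod_lt _ hM'pos⟩ : Fin (2 ^ (d - 1))),
            (⟨j.val % 2 ^ (d - 1), Nat.mod_lt _ hM'pos⟩ : Fin (2 ^ (d - 1))), ℓ) ∈ S)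
      ∨ (ℓ = d + 1 ∧ 2 ^ (d - 1) ≤ i.val ∧ 2 ^ (d - 1) ≤ j.val)) := by
    intro i j ℓ
    rw [hS'def]
    simp only [Set.mem_setOf_eq]
  refine ⟨S', ?_, ?_, ?_⟩
  · intro i j ℓ h
    rw [hS'mem] at h ⊢
    rcases h with ⟨h1, h2⟩ | ⟨h1, h2, h3⟩
    · exact Or.inl ⟨h1, Ssym _ _ _ h2⟩
    · exact Or.inr ⟨h1, h3, h2⟩
  · intro i j ℓ h
    rw [hS'mem] at h
    rcases h with ⟨h1, h2⟩ | ⟨h1, h2, h3⟩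
    · have := Smem _ _ _ h2; omega
    · omega
  intro n hn
  -- real number setup
  have hν1 : (1 : ℝ) ≤ n := by exact_mod_cast hn
  have hν0 : (0 : ℝ) < n := by linarith
  have h2d : (2 : ℝ) ≤ 2 ^ d := by
    calc (2:ℝ) = 2 ^ (1:ℕ) := by norm_num
    _ ≤ 2 ^ d := by exact pow_le_pow_right₀ (by norm_num) hd
  have h2d1 : (1 : ℝ) ≤ 2 ^ d - 1 := by linarith
  have h2d1' : (0 : ℝ) < 2 ^ d - 1 := by linarith
  have h2D : (2 : ℝ) ^ (d + 1) = 2 * 2 ^ d := by rw [pow_succ]; ring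
  have h2D1 : (0 : ℝ) < 2 ^ (d + 1) - 1 := by rw [h2D]; linarith
  set β : ℝ := (2 ^ d - 1) / (2 ^ (d + 1) - 1) with hβdef
  have hβ0 : 0 ≤ β := le_of_lt (div_pos h2d1' h2D1)
  have hβ1 : β ≤ 1 := by
    rw [hβdef, div_le_one h2D1, h2D]; linarith
  have hexpo_d : expo d - 1 = 1 / (2 ^ d - 1) := by rw [expo]; ring
  have hed1 : 0 ≤ expo d - 1 := by rw [hexpo_d]; positivity
  have hed2 : expo d - 1 ≤ 1 := by rw [hexpo_d, div_le_one h2d1']; exact h2d1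
  have hkey : 1 + β * (expo d - 1) = expo (d + 1) := by
    rw [hexpo_d, hβdef, expo]
    field_simp
  have hkey2 : (1 - β) + (1 - β) = expo (d + 1) := by
    have hne1 : (2:ℝ) ^ (d+1) - 1 ≠ 0 := h2D1.ne'
    rw [hβdef, expo]
    field_simp
    rw [h2D]
    ring
  -- block size b and number of blocks k
  set b : ℕ := ⌈(n : ℝ) ^ β⌉₊ with hbdef
  have hbR : (n : ℝ) ^ β ≤ b := Nat.le_ceil _
  have hβn1 : (1:ℝ) ≤ (n : ℝ) ^ β := Real.one_le_rpow hν1 hβ0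
  have hb1 : 1 ≤ b := by
    rw [hbdef]
    exact Nat.one_le_ceil_iff.mpr (by positivity)
  have hbu : (b : ℝ) ≤ 2 * (n : ℝ) ^ β := by
    have h1 : (b : ℝ) < (n : ℝ) ^ β + 1 :=
      Nat.ceil_lt_add_one (by positivity)
    linarith
  set k : ℕ := (n - 1) / b + 1 with hkdef
  have hk1 : 1 ≤ k := by rw [hkdef]; exact Nat.succ_le_succ (Nat.zero_le _)
  have hik : ∀ i, i < k → b * i < n := by
    intro i hi
    have h1 : i ≤ (n - 1) / b := by omega
    have h2 : b * i ≤ b * ((n - 1) / b) := Nat.mul_le_mul_left _ h1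
    have h3 : b * ((n - 1) / b) ≤ n - 1 := by
      calc b * ((n-1)/b) = (n-1)/b * b := by ring
      _ ≤ n - 1 := Nat.div_mul_le_self _ _
    omega
  have hkb : n ≤ b * k := by
    have h1 := Nat.div_add_mod (n - 1) b
    have h2 : (n - 1) % b < b := Nat.mod_lt _ (by omega)
    have h3 : b * k = b * ((n - 1) / b) + b := by rw [hkdef, Nat.mul_add, Nat.mul_one]
    omega
  set s : ℕ → ℕ := fun i => min (b * (i + 1)) n - b * i with hsdef
  have hmineq : ∀ i, i < k → b * i + s i = min (b * (i + 1)) n := by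
    intro i hi
    have h0 : b * (i + 1) = b * i + b := by ring
    have h1 := hik i hi
    simp only [hsdef]
    omega
  have hsl : ∀ i, i < k → 1 ≤ s i := by
    intro i hi
    have h0 : b * (i + 1) = b * i + b := by ring
    have h1 := hik i hi
    have h2 := hmineq i hi
    omega
  have hsu : ∀ i, s i ≤ b := by
    intro i
    have h0 : b * (i + 1) = b * i + b := by ring
    simp only [hsdef]
    omega
  have hqlt : ∀ x : Fin n, x.val / b < k := by
    intro x
    have h1 : x.val ≤ n - 1 := by omega
    have h2 : x.val / b ≤ (n - 1) / b := Nat.div_le_div_right h1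
    omega
  have hposx : ∀ x : Fin n, x.val % b < s (x.val / b) := by
    intro x
    have h1 := Nat.div_add_mod x.val b
    have h2 : x.val % b < b := Nat.mod_lt _ (by omega)
    have h3 := hmineq _ (hqlt x)
    have h4 : b * (x.val / b + 1) = b * (x.val / b) + b := by ring
    have h5 : x.val < n := x.2
    omega
  -- children
  have hchild : ∀ i : Fin k, ∃ G : SimpleGraph (Fin (s i.val)),
      (List.finRange (s i.val)).Chain' G.Adj ∧
      (∃ M : TreeModel G d (2 ^ (d - 1)), M.sig = S) ∧
      ((G.edgeSet.ncard : ℝ) ≤ γ d * (s i.val : ℝ) ^ expo d) :=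
    fun i => hS (s i.val) (hsl i.val i.2)
  choose Gc hGchain hGM hGbound using hchild
  choose Mc hMc using hGM
  have hcons : ∀ (i : Fin k) (r : ℕ) (h : r + 1 < s i.val),
      (Gc i).Adj ⟨r, by omega⟩ ⟨r + 1, h⟩ := by
    intro i r h
    have hc := hGchain i
    change List.IsChain _ _ at hc
    rw [List.isChain_iff_getElem] at hc
    have h2 := hc r (by simp only [List.length_finRange]; omega)
    rw [List.getElem_finRange, List.getElem_finRange] at h2
    exact h2
  -- ℕ-level wrappers
  set A : ℕ → ℕ → ℕ → ℕ := fun i t r =>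
    if h : i < k ∧ r < s i then (Mc ⟨i, h.1⟩).anc t ⟨r, h.2⟩ else 0 with hAdef
  set colW : ℕ → ℕ → ℕ := fun i r =>
    if h : i < k ∧ r < s i then ((Mc ⟨i, h.1⟩).colour ⟨r, h.2⟩).val else 0 with hcolWdef
  set AdjW : ℕ → ℕ → ℕ → Prop := fun i p q =>
    ∃ (hi : i < k) (hp : p < s i) (hq : q < s i),
      (Gc ⟨i, hi⟩).Adj ⟨p, hp⟩ ⟨q, hq⟩ with hAdjWdef
  have hA : ∀ (i t r) (hi : i < k) (hr : r < s i),
      A i t r = (Mc ⟨i, hi⟩).anc t ⟨r, hr⟩ := by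
    intro i t r hi hr
    simp only [hAdef]
    rw [dif_pos ⟨hi, hr⟩]
  have hcol : ∀ (i r) (hi : i < k) (hr : r < s i),
      colW i r = ((Mc ⟨i, hi⟩).colour ⟨r, hr⟩).val := by
    intro i r hi hr
    simp only [hcolWdef]
    rw [dif_pos ⟨hi, hr⟩]
  have hcolW_lt : ∀ i r, colW i r < 2 ^ (d - 1) := by
    intro i r
    simp only [hcolWdef]
    split
    · exact (_ : Fin (2 ^ (d-1))).isLt
    · exact hM'pos
  -- the graph
  set G : SimpleGraph (Fin n) := {
    Adj := fun x y => x ≠ y ∧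
      ((x.val / b = y.val / b ∧ AdjW (x.val / b) (x.val % b) (y.val % b)) ∨
       (x.val / b ≠ y.val / b ∧ connP n b x ∧ connP n b y)),
    symm := ⟨by
      rintro x y ⟨hxy, (⟨hq, hw⟩ | ⟨hq, hcx, hcy⟩)⟩
      · refine ⟨Ne.symm hxy, Or.inl ⟨hq.symm, ?_⟩⟩
        rw [← hq]
        obtain ⟨hi, hp, hq2, hadj⟩ := hw
        exact ⟨hi, hq2, hp, hadj.symm⟩
      · exact ⟨Ne.symm hxy, Or.inr ⟨Ne.symm hq, hcy, hcx⟩⟩⟩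
    loopless := ⟨fun x h => h.1 rfl⟩ } with hGdef
  refine ⟨G, ?_, ?_, ?_⟩
  · -- Hamiltonian chain
    change List.IsChain _ _
    rw [List.isChain_iff_getElem]
    intro j hj
    simp only [List.length_finRange] at hj
    rw [List.getElem_finRange, List.getElem_finRange]
    have hjn : j < n := by omega
    have hj1n : j + 1 < n := by omega
    have hne : (⟨j, by omega⟩ : Fin n) ≠ (⟨j + 1, by omega⟩ : Fin n) := by
      intro hcon
      have := congrArg Fin.val hcon
      simp only at this
      omega
    show (⟨j, by omega⟩ : Fin n) ≠ ⟨j + 1, by omega⟩ ∧ _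
    refine ⟨hne, ?_⟩
    have hdm1 := Nat.div_add_mod j b
    have hdm2 := Nat.div_add_mod (j + 1) b
    have hm1 : j % b < b := Nat.mod_lt _ (by omega)
    have hm2 : (j + 1) % b < b := Nat.mod_lt _ (by omega)
    by_cases hsame : (j + 1) / b = j / b
    · left
      refine ⟨hsame.symm, ?_⟩
      have hmod : (j + 1) % b = j % b + 1 := by
        rw [hsame] at hdm2
        omega
      have hx : (⟨j, hjn⟩ : Fin n).val = j := rfl
      have h1 : j / b < k := hqlt ⟨j, hjn⟩
      have h2 : j % b < s (j / b) := hposx ⟨j, hjn⟩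
      have h3 : j % b + 1 < s (j / b) := by
        have h4 := hposx ⟨j + 1, hj1n⟩
        simp only at h4
        rw [hsame, hmod] at h4
        omega
      show AdjW (j / b) (j % b) ((j + 1) % b)
      rw [hmod]
      exact ⟨h1, h2, h3, hcons ⟨j / b, h1⟩ (j % b) h3⟩
    · right
      refine ⟨fun h => hsame h.symm, ?_, ?_⟩
      · -- conn ⟨j⟩ : j % b = b - 1
        have hr : j % b = b - 1 := by
          by_contra hr
          have hrlt : j % b + 1 < b := by omega
          have : (j + 1) / b = j / b := by
            conv_lhs => rw [show j + 1 = (j % b + 1) + b * (j / b) by omega]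
            rw [Nat.add_mul_div_left _ _ (by omega : 0 < b), Nat.div_eq_of_lt hrlt, zero_add]
          exact hsame this
        exact Or.inr (Or.inl hr)
      · -- conn ⟨j+1⟩ : (j+1) % b = 0
        have hr : j % b = b - 1 := by
          by_contra hr
          have hrlt : j % b + 1 < b := by omega
          have : (j + 1) / b = j / b := by
            conv_lhs => rw [show j + 1 = (j % b + 1) + b * (j / b) by omega]
            rw [Nat.add_mul_div_left _ _ (by omega : 0 < b), Nat.div_eq_of_lt hrlt, zero_add]
          exact hsame this
        have : (j + 1) % b = 0 := by
          have h5 : j + 1 = b * (j / b + 1) := by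
            rw [Nat.mul_add, Nat.mul_one]
            omega
          rw [h5]
          exact Nat.mul_mod_right _ _
        exact Or.inl this
  · -- tree model
    have h2M' : (2:ℕ) ^ (d + 1 - 1) = 2 ^ (d - 1) + 2 ^ (d - 1) := by
      simp only [Nat.add_sub_cancel]; exact h2M
    refine ⟨⟨fun t x => if t = 0 then 0
        else Nat.pair (x.val / b) (A (x.val / b) (t - 1) (x.val % b)),
      fun u v => rfl, ?_, ?_,
      fun x => ⟨colW (x.val / b) (x.val % b) + (if connP n b x then 2 ^ (d - 1) else 0), by
        have h1 := hcolW_lt (x.val / b) (x.val % b)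
        split <;> omega⟩,
      S', ?_, ?_, ?_⟩, rfl⟩
    · -- leaf_inj
      intro u v h
      simp only [Nat.succ_ne_zero, if_false, Nat.add_sub_cancel] at h
      rw [Nat.pair_eq_pair] at h
      obtain ⟨hqe, hAe⟩ := h
      have hv2 : v.val % b < s (u.val / b) := by rw [hqe]; exact hposx v
      rw [← hqe] at hAe
      rw [hA _ _ _ (hqlt u) (hposx u), hA _ _ _ (hqlt u) hv2] at hAe
      have h3 := (Mc ⟨u.val / b, hqlt u⟩).leaf_inj hAe
      have hval : u.val % b = v.val % b := by
        have h4 := congrArg Fin.val h3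
        simpa using h4
      have h1 := Nat.div_add_mod u.val b
      have h2 := Nat.div_add_mod v.val b
      refine Fin.ext ?_
      rw [← h1, hqe, hval]
      exact h2
    · -- anc_refine
      rintro t ht u v h
      rcases t with _ | t'
      · simp
      · simp only [Nat.succ_ne_zero, if_false, Nat.add_sub_cancel] at h ⊢
        rw [Nat.pair_eq_pair] at h ⊢
        obtain ⟨hqe, hAe⟩ := h
        refine ⟨hqe, ?_⟩
        have hv2 : v.val % b < s (u.val / b) := by rw [hqe]; exact hposx v
        rw [← hqe] at hAe ⊢
        rw [hA _ _ _ (hqlt u) (hposx u), hA _ _ _ (hqlt u) hv2] at hAe ⊢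
        exact (Mc _).anc_refine t' (by omega) _ _ hAe
    · -- sig_symm
      intro i j ℓ h
      rw [hS'mem] at h ⊢
      rcases h with ⟨h1, h2⟩ | ⟨h1, h2, h3⟩
      · exact Or.inl ⟨h1, Ssym _ _ _ h2⟩
      · exact Or.inr ⟨h1, h3, h2⟩
    · -- sig_mem
      intro i j ℓ h
      rw [hS'mem] at h
      rcases h with ⟨h1, h2⟩ | ⟨h1, h2, h3⟩
      · have := Smem _ _ _ h2; omega
      · omega
    · -- adj_iff
      intro u v huv
      by_cases hqe : u.val / b = v.val / b
      · -- same block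
        have hv2 : v.val % b < s (u.val / b) := by rw [hqe]; exact hposx v
        have hpne : (⟨u.val % b, hposx u⟩ : Fin (s (u.val / b))) ≠ ⟨v.val % b, hv2⟩ := by
          intro hcon
          have h3 : u.val % b = v.val % b := by
            have h4 := congrArg Fin.val hcon
            simpa using h4
          have h1 := Nat.div_add_mod u.val b
          have h2 := Nat.div_add_mod v.val b
          refine huv (Fin.ext ?_)
          rw [← h1, hqe, h3]
          exact h2
        have hchild := (Mc ⟨u.val / b, hqlt u⟩).adj_iff _ _ hpne
        rw [hMc] at hchild
        set jC := Nat.findGreatest (fun t =>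
          (Mc ⟨u.val / b, hqlt u⟩).anc t ⟨u.val % b, hposx u⟩ =
          (Mc ⟨u.val / b, hqlt u⟩).anc t ⟨v.val % b, hv2⟩) d with hjCdef
        have hjCle : jC ≤ d := Nat.findGreatest_le d
        have hgj : (Mc ⟨u.val / b, hqlt u⟩).anc jC ⟨u.val % b, hposx u⟩ =
            (Mc ⟨u.val / b, hqlt u⟩).anc jC ⟨v.val % b, hv2⟩ := by
          rcases Nat.eq_zero_or_pos jC with h0 | hpos0
          · rw [h0]; exact (Mc _).root_eq _ _
          · exact (Nat.findGreatest_eq_iff.1 hjCdef.symm).2.1 hpos0.ne'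
        have hgt : ∀ t, jC < t → t ≤ d → ¬ ((Mc ⟨u.val / b, hqlt u⟩).anc t ⟨u.val % b, hposx u⟩ =
            (Mc ⟨u.val / b, hqlt u⟩).anc t ⟨v.val % b, hv2⟩) :=
          fun t h1 h2 => (Nat.findGreatest_eq_iff.1 hjCdef.symm).2.2 h1 h2
        have hfg : Nat.findGreatest (fun t =>
            (if t = 0 then 0 else Nat.pair (u.val / b) (A (u.val / b) (t - 1) (u.val % b))) =
            (if t = 0 then 0 else Nat.pair (v.val / b) (A (v.val / b) (t - 1) (v.val % b))))
            (d + 1) = jC + 1 := by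
          rw [Nat.findGreatest_eq_iff]
          refine ⟨by omega, fun _ => ?_, ?_⟩
          · simp only [Nat.succ_ne_zero, if_false, Nat.add_sub_cancel]
            rw [Nat.pair_eq_pair]
            refine ⟨hqe, ?_⟩
            rw [← hqe]
            rw [hA _ _ _ (hqlt u) (hposx u), hA _ _ _ (hqlt u) hv2]
            exact hgj
          · intro t hlt hle
            rcases t with _ | t'
            · omega
            simp only [Nat.succ_ne_zero, if_false, Nat.add_sub_cancel]
            rw [Nat.pair_eq_pair]
            rintro ⟨-, hAe⟩
            rw [← hqe] at hAe
            rw [hA _ _ _ (hqlt u) (hposx u), hA _ _ _ (hqlt u) hv2] at hAe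
            exact hgt t' (by omega) (by omega) hAe
        rw [hfg]
        have hsub : d + 1 - (jC + 1) = d - jC := by omega
        rw [hsub, hS'mem]
        have hAdjuv : G.Adj u v ↔
            (Gc ⟨u.val / b, hqlt u⟩).Adj ⟨u.val % b, hposx u⟩ ⟨v.val % b, hv2⟩ := by
          constructor
          · rintro ⟨-, (⟨-, hw⟩ | ⟨hne, -, -⟩)⟩
            · obtain ⟨hi, hp, hq2, had⟩ := hw
              exact had
            · exact absurd hqe hne
          · intro had
            exact ⟨huv, Or.inl ⟨hqe, hqlt u, hposx u, hv2, had⟩⟩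
        rw [hAdjuv, hchild]
        have hcueq : ∀ (x : Fin n) (hxq : x.val / b = u.val / b)
            (hx2 : x.val % b < s (u.val / b)),
            (⟨(colW (x.val / b) (x.val % b) + (if connP n b x then 2 ^ (d - 1) else 0))
                % 2 ^ (d - 1), Nat.mod_lt _ hM'pos⟩ : Fin (2 ^ (d - 1)))
              = (Mc ⟨u.val / b, hqlt u⟩).colour ⟨x.val % b, hx2⟩ := by
          intro x hxq hx2
          apply Fin.ext
          show (colW (x.val / b) (x.val % b) + _) % 2 ^ (d - 1) = _
          rw [hxq]
          rw [hcol (u.val / b) (x.val % b) (hqlt u) hx2]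
          have hlt : ((Mc ⟨u.val / b, hqlt u⟩).colour ⟨x.val % b, hx2⟩).val < 2 ^ (d - 1) :=
            Fin.isLt _
          split
          · rw [Nat.add_mod_right, Nat.mod_eq_of_lt hlt]
          · rw [Nat.add_zero, Nat.mod_eq_of_lt hlt]
        rw [hcueq u rfl (hposx u), hcueq v hqe.symm hv2]
        constructor
        · intro hmem
          exact Or.inl ⟨Nat.sub_le _ _, hmem⟩
        · rintro (⟨-, hmem⟩ | ⟨habs, -⟩)
          · exact hmem
          · omega
      · -- different blocks
        have hfg0 : Nat.findGreatest (fun t =>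
            (if t = 0 then 0 else Nat.pair (u.val / b) (A (u.val / b) (t - 1) (u.val % b))) =
            (if t = 0 then 0 else Nat.pair (v.val / b) (A (v.val / b) (t - 1) (v.val % b))))
            (d + 1) = 0 := by
          rw [Nat.findGreatest_eq_zero_iff]
          intro t ht htle hP
          rcases t with _ | t'
          · omega
          · simp only [Nat.succ_ne_zero, if_false, Nat.add_sub_cancel] at hP
            rw [Nat.pair_eq_pair] at hP
            exact hqe hP.1
        rw [hfg0, Nat.sub_zero, hS'mem]
        have hadj : G.Adj u v ↔ (connP n b u ∧ connP n b v) := by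
          constructor
          · rintro ⟨-, (⟨h, -⟩ | ⟨-, h1, h2⟩)⟩
            · exact absurd h hqe
            · exact ⟨h1, h2⟩
          · rintro ⟨h1, h2⟩
            exact ⟨huv, Or.inr ⟨hqe, h1, h2⟩⟩
        rw [hadj]
        constructor
        · rintro ⟨h1, h2⟩
          refine Or.inr ⟨rfl, ?_, ?_⟩
          · show 2 ^ (d - 1) ≤ colW (u.val / b) (u.val % b) +
              (if connP n b u then 2 ^ (d - 1) else 0)
            rw [if_pos h1]
            exact Nat.le_add_left _ _
          · show 2 ^ (d - 1) ≤ colW (v.val / b) (v.val % b) +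
              (if connP n b v then 2 ^ (d - 1) else 0)
            rw [if_pos h2]
            exact Nat.le_add_left _ _
        · rintro (⟨habs, -⟩ | ⟨-, h1, h2⟩)
          · omega
          · have h1' : 2 ^ (d - 1) ≤ colW (u.val / b) (u.val % b) +
                (if connP n b u then 2 ^ (d - 1) else 0) := h1
            have h2' : 2 ^ (d - 1) ≤ colW (v.val / b) (v.val % b) +
                (if connP n b v then 2 ^ (d - 1) else 0) := h2
            constructor
            · by_contra hcu
              rw [if_neg hcu, Nat.add_zero] at h1'
              exact absurd h1' (Nat.not_le.2 (hcolW_lt _ _))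
            · by_contra hcv
              rw [if_neg hcv, Nat.add_zero] at h2'
              exact absurd h2' (Nat.not_le.2 (hcolW_lt _ _))
  · -- edge bound
    have hemb : ∀ i : Fin k, ∀ p : Fin (s i.val), b * i.val + p.val < n := by
      intro i p
      have h2 := hmineq i.val i.2
      have h3 : p.val < s i.val := p.2
      have h4 : min (b * (i.val + 1)) n ≤ n := Nat.min_le_right _ _
      omega
    set emb : ∀ i : Fin k, Fin (s i.val) ↪ Fin n := fun i =>
      ⟨fun p => ⟨b * i.val + p.val, hemb i p⟩, by
        intro p q h
        have h1 : b * i.val + p.val = b * i.val + q.val := by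
          have := congrArg Fin.val h
          simpa using this
        exact Fin.ext (by omega)⟩ with hembdef
    set Gcross : SimpleGraph (Fin n) := {
      Adj := fun x y => x.val / b ≠ y.val / b ∧ connP n b x ∧ connP n b y,
      symm := ⟨by rintro x y ⟨h1, h2, h3⟩; exact ⟨Ne.symm h1, h3, h2⟩⟩,
      loopless := ⟨fun x h => h.1 rfl⟩ } with hGcrossdef
    have hGle : G ≤ (⨆ i : Fin k, (Gc i).map (emb i)) ⊔ Gcross := by
      rintro x y ⟨hxy, (⟨hq, hw⟩ | ⟨hq, hcx, hcy⟩)⟩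
      · obtain ⟨hi, hp, hq2, had⟩ := hw
        refine Or.inl (SimpleGraph.iSup_adj.mpr ⟨⟨x.val / b, hi⟩, ?_⟩)
        rw [SimpleGraph.map_adj]
        refine ⟨⟨x.val % b, hp⟩, ⟨y.val % b, hq2⟩, had, ?_, ?_⟩
        · exact Fin.ext (Nat.div_add_mod x.val b)
        · refine Fin.ext ?_
          show b * (x.val / b) + y.val % b = y.val
          rw [hq]
          exact Nat.div_add_mod y.val b
      · exact Or.inr ⟨hq, hcx, hcy⟩
    have hcount : G.edgeSet.ncard ≤ (∑ i : Fin k, (Gc i).edgeSet.ncard) + 4 * (k * k) := by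
      have h1 : G.edgeSet ⊆ ((⨆ i : Fin k, (Gc i).map (emb i)) ⊔ Gcross).edgeSet :=
        SimpleGraph.edgeSet_mono hGle
      rw [SimpleGraph.edgeSet_sup] at h1
      have h2 := Set.ncard_le_ncard h1 (Set.toFinite _)
      refine h2.trans ((Set.ncard_union_le _ _).trans ?_)
      refine Nat.add_le_add ?_ ?_
      · have h3 : (⨆ i : Fin k, (Gc i).map (emb i)).edgeSet ⊆
            ⋃ i : Fin k, ((Gc i).map (emb i)).edgeSet := by
          intro e
          induction e using Sym2.ind with
          | _ x y =>
            intro he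
            rw [SimpleGraph.mem_edgeSet, SimpleGraph.iSup_adj] at he
            obtain ⟨i, hi⟩ := he
            exact Set.mem_iUnion.2 ⟨i, (SimpleGraph.mem_edgeSet _).2 hi⟩
        refine (Set.ncard_le_ncard h3 (Set.toFinite _)).trans ?_
        refine (ncard_iUnion_le' _ (fun i => Set.toFinite _)).trans ?_
        refine Finset.sum_le_sum fun i _ => ?_
        have h4 : ((Gc i).map (emb i)).edgeSet ⊆ Sym2.map (emb i) '' (Gc i).edgeSet := by
          intro e
          induction e using Sym2.ind with
          | _ x y =>
            intro he
            rw [SimpleGraph.mem_edgeSet, SimpleGraph.map_adj] at he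
            obtain ⟨p, q, had, hp, hq⟩ := he
            exact ⟨s(p, q), (SimpleGraph.mem_edgeSet _).2 had, by
              rw [Sym2.map_pair_eq, hp, hq]⟩
        refine (Set.ncard_le_ncard h4 (Set.toFinite _)).trans ?_
        exact Set.ncard_image_le (Set.toFinite _)
      · have hf1 : ∀ i : Fin k, b * i.val < n := fun i => hik i.val i.2
        set f1 : Fin k → Fin n := fun i => ⟨b * i.val, hf1 i⟩ with hf1def
        have hf2 : ∀ i : Fin k, min (b * (i.val + 1)) n - 1 < n := by
          intro i
          have := Nat.min_le_right (b * (i.val + 1)) n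
          omega
        set f2 : Fin k → Fin n := fun i => ⟨min (b * (i.val + 1)) n - 1, hf2 i⟩ with hf2def
        have hconn_im : ∀ x : Fin n, connP n b x → ∃ c : Bool,
            x = (bif c then f1 ⟨x.val / b, hqlt x⟩ else f2 ⟨x.val / b, hqlt x⟩) := by
          intro x hc
          have h1 := Nat.div_add_mod x.val b
          have h2 : x.val % b < b := Nat.mod_lt _ (by omega)
          have h3 := hmineq (x.val / b) (hqlt x)
          have h4 : b * (x.val / b + 1) = b * (x.val / b) + b := by ring
          have h5 : x.val < n := x.2
          have h6 : x.val % b < s (x.val / b) := hposx x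
          rcases hc with h | h | h
          · exact ⟨true, Fin.ext (by simp only [hf1def, Bool.cond_true]; omega)⟩
          · exact ⟨false, Fin.ext (by simp only [hf2def, Bool.cond_false]; omega)⟩
          · exact ⟨false, Fin.ext (by simp only [hf2def, Bool.cond_false]; omega)⟩
        have hsub : Gcross.edgeSet ⊆ Set.range (fun z : (Fin k × Fin k) × Bool × Bool =>
            (Sym2.mk (bif z.2.1 then f1 z.1.1 else f2 z.1.1)
              (bif z.2.2 then f1 z.1.2 else f2 z.1.2) : Sym2 (Fin n))) := by
          intro e
          induction e using Sym2.ind with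
          | _ x y =>
            intro he
            rw [SimpleGraph.mem_edgeSet] at he
            obtain ⟨-, hcx, hcy⟩ := he
            obtain ⟨cx, hx⟩ := hconn_im x hcx
            obtain ⟨cy, hy⟩ := hconn_im y hcy
            exact ⟨((⟨x.val / b, hqlt x⟩, ⟨y.val / b, hqlt y⟩), (cx, cy)), by
              show Sym2.mk _ _ = _
              rw [← hx, ← hy]⟩
        refine (Set.ncard_le_ncard hsub (Set.toFinite _)).trans ?_
        refine (ncard_range_le _ (Set.toFinite _)).trans ?_
        have h5 : Nat.card ((Fin k × Fin k) × Bool × Bool) = 4 * (k * k) := by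
          rw [Nat.card_eq_fintype_card]
          simp only [Fintype.card_prod, Fintype.card_bool, Fintype.card_fin]
          ring
        exact h5.le
    -- real arithmetic
    have hγ0 : (0:ℝ) ≤ γ d := by linarith
    have hexpD1pos : 0 ≤ expo (d + 1) := by rw [← hkey]; positivity
    have hX0 : (0:ℝ) ≤ (n:ℝ) ^ expo (d+1) := Real.rpow_nonneg hν0.le _
    have hsum_s : (∑ i : Fin k, ((s i.val : ℕ) : ℝ)) = n := by
      rw [Fin.sum_univ_eq_sum_range (fun i => ((s i : ℕ) : ℝ)) k]
      have hterm : ∀ i ∈ Finset.range k,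
          ((s i : ℕ) : ℝ) = ((min (b * (i+1)) n : ℕ) : ℝ) - ((min (b * i) n : ℕ) : ℝ) := by
        intro i hi
        rw [Finset.mem_range] at hi
        have h1 : b * i < n := hik i hi
        have h2 : min (b * i) n = b * i := min_eq_left h1.le
        have h3 := hmineq i hi
        rw [h2]
        show ((min (b * (i+1)) n - b * i : ℕ) : ℝ) = _
        rw [Nat.cast_sub (by omega : b * i ≤ min (b * (i+1)) n)]
      rw [Finset.sum_congr rfl hterm,
        Finset.sum_range_sub (fun i => ((min (b * i) n : ℕ) : ℝ))]
      have h4 : min (b * k) n = n := min_eq_right hkb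
      have h5 : b * 0 = 0 := by ring
      rw [h4, h5]
      simp
    have hbound1 : ∀ i : Fin k, ((Gc i).edgeSet.ncard : ℝ) ≤
        γ d * (b:ℝ) ^ (expo d - 1) * (s i.val : ℝ) := by
      intro i
      refine (hGbound i).trans ?_
      have hs0 : (0:ℝ) < (s i.val : ℝ) := by exact_mod_cast hsl i.val i.2
      have hsplit := Real.rpow_add hs0 (expo d - 1) 1
      rw [Real.rpow_one] at hsplit
      rw [show expo d - 1 + 1 = expo d by ring] at hsplit
      rw [hsplit]
      have h2 : (s i.val : ℝ) ^ (expo d - 1) ≤ (b : ℝ) ^ (expo d - 1) :=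
        Real.rpow_le_rpow hs0.le (by exact_mod_cast hsu i.val) hed1
      calc γ d * ((s i.val : ℝ) ^ (expo d - 1) * (s i.val : ℝ))
          ≤ γ d * ((b:ℝ) ^ (expo d - 1) * (s i.val : ℝ)) := by
            exact mul_le_mul_of_nonneg_left (mul_le_mul_of_nonneg_right h2 hs0.le) hγ0
        _ = γ d * (b:ℝ) ^ (expo d - 1) * (s i.val : ℝ) := by ring
    have hsum1 : (∑ i : Fin k, ((Gc i).edgeSet.ncard : ℝ)) ≤
        γ d * (b:ℝ) ^ (expo d - 1) * n := by
      calc (∑ i : Fin k, ((Gc i).edgeSet.ncard : ℝ))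
          ≤ ∑ i : Fin k, γ d * (b:ℝ) ^ (expo d - 1) * (s i.val : ℝ) :=
            Finset.sum_le_sum (fun i _ => hbound1 i)
        _ = γ d * (b:ℝ) ^ (expo d - 1) * ∑ i : Fin k, ((s i.val : ℕ) : ℝ) := by
            rw [Finset.mul_sum]
        _ = γ d * (b:ℝ) ^ (expo d - 1) * n := by rw [hsum_s]
    have hBB : (b:ℝ) ^ (expo d - 1) ≤ 2 * (n:ℝ) ^ (β * (expo d - 1)) := by
      calc (b:ℝ) ^ (expo d - 1) ≤ (2 * (n:ℝ)^β) ^ (expo d - 1) :=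
            Real.rpow_le_rpow (Nat.cast_nonneg b) hbu hed1
        _ = (2:ℝ) ^ (expo d - 1) * ((n:ℝ)^β) ^ (expo d - 1) :=
            Real.mul_rpow (by norm_num) (Real.rpow_nonneg hν0.le β)
        _ ≤ 2 * (n:ℝ) ^ (β * (expo d - 1)) := by
            have h1 : (2:ℝ) ^ (expo d - 1) ≤ 2 := by
              calc (2:ℝ) ^ (expo d - 1) ≤ (2:ℝ) ^ (1:ℝ) :=
                    Real.rpow_le_rpow_of_exponent_le one_le_two hed2
                _ = 2 := Real.rpow_one 2
            have h2 : ((n:ℝ)^β) ^ (expo d - 1) = (n:ℝ) ^ (β * (expo d - 1)) :=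
              (Real.rpow_mul hν0.le β (expo d - 1)).symm
            rw [h2]
            exact mul_le_mul_of_nonneg_right h1 (Real.rpow_nonneg hν0.le _)
    have hterm1 : γ d * (b:ℝ) ^ (expo d - 1) * n ≤ 2 * γ d * (n:ℝ) ^ expo (d+1) := by
      calc γ d * (b:ℝ) ^ (expo d - 1) * n
          ≤ γ d * (2 * (n:ℝ) ^ (β * (expo d - 1))) * n := by
            exact mul_le_mul_of_nonneg_right (mul_le_mul_of_nonneg_left hBB hγ0) hν0.le
        _ = 2 * γ d * ((n:ℝ) * (n:ℝ) ^ (β * (expo d - 1))) := by ring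
        _ = 2 * γ d * (n:ℝ) ^ expo (d+1) := by
            rw [← hkey, Real.rpow_add hν0, Real.rpow_one]
    have hnb1 : (1:ℝ) ≤ (n:ℝ) ^ (1-β) := Real.one_le_rpow hν1 (by linarith)
    have hkR : (k:ℝ) ≤ 2 * (n:ℝ) ^ (1-β) := by
      have h1 : ((k:ℕ):ℝ) = (((n-1)/b : ℕ):ℝ) + 1 := by rw [hkdef]; push_cast; ring
      have h2 : (((n-1)/b : ℕ):ℝ) ≤ ((n-1:ℕ):ℝ) / (b:ℝ) := Nat.cast_div_le
      have h3 : ((n-1:ℕ):ℝ) ≤ (n:ℝ) := by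
        have h3' : (n-1:ℕ) ≤ n := Nat.sub_le _ _
        exact_mod_cast h3'
      have hb0R : (0:ℝ) < (n:ℝ)^β := by positivity
      have h4 : ((n-1:ℕ):ℝ)/(b:ℝ) ≤ (n:ℝ)/((n:ℝ)^β) :=
        div_le_div₀ hν0.le h3 hb0R hbR
      have h5 : (n:ℝ)/((n:ℝ)^β) = (n:ℝ)^(1-β) := by
        rw [Real.rpow_sub hν0, Real.rpow_one]
      rw [h1]
      rw [h5] at h4
      linarith
    have hterm2 : (4:ℝ) * ((k:ℝ) * (k:ℝ)) ≤ 16 * (n:ℝ) ^ expo (d+1) := by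
      have h1 : (k:ℝ) * (k:ℝ) ≤ (2*(n:ℝ)^(1-β)) * (2*(n:ℝ)^(1-β)) :=
        mul_le_mul hkR hkR (Nat.cast_nonneg k) (by positivity)
      have h2 : ((n:ℝ)^(1-β)) * ((n:ℝ)^(1-β)) = (n:ℝ) ^ expo (d+1) := by
        rw [← Real.rpow_add hν0, hkey2]
      calc (4:ℝ) * ((k:ℝ) * (k:ℝ))
          ≤ 4 * ((2*(n:ℝ)^(1-β)) * (2*(n:ℝ)^(1-β))) := by linarith
        _ = 16 * (((n:ℝ)^(1-β)) * ((n:ℝ)^(1-β))) := by ring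
        _ = 16 * (n:ℝ) ^ expo (d+1) := by rw [h2]
    have hEcast : (G.edgeSet.ncard : ℝ) ≤
        (∑ i : Fin k, ((Gc i).edgeSet.ncard : ℝ)) + 4 * ((k:ℝ) * (k:ℝ)) := by
      have h1 : ((G.edgeSet.ncard : ℕ) : ℝ) ≤
          (((∑ i : Fin k, (Gc i).edgeSet.ncard) + 4 * (k * k) : ℕ) : ℝ) := by
        exact_mod_cast hcount
      refine h1.trans_eq ?_
      push_cast
      ring
    rw [hγs]
    calc (G.edgeSet.ncard : ℝ)
        ≤ (∑ i : Fin k, ((Gc i).edgeSet.ncard : ℝ)) + 4 * ((k:ℝ) * (k:ℝ)) := hEcast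
      _ ≤ γ d * (b:ℝ) ^ (expo d - 1) * n + 16 * (n:ℝ) ^ expo (d+1) := by linarith
      _ ≤ 2 * γ d * (n:ℝ) ^ expo (d+1) + 16 * (n:ℝ) ^ expo (d+1) := by linarith
      _ ≤ (4 * γ d + 32) * (n:ℝ) ^ expo (d+1) := by
          have hfin : (2 * γ d + 16) * ((n:ℝ) ^ expo (d+1)) ≤
              (4 * γ d + 32) * ((n:ℝ) ^ expo (d+1)) :=
            mul_le_mul_of_nonneg_right (by linarith) hX0
          linarith

lemma gamma_ge_one (γ : ℕ → ℝ) (hγ1 : γ 1 = 1) (hγ : ∀ d, 2 ≤ d → γ d = 4 * γ (d - 1) + 32) :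
    ∀ d, 1 ≤ d → 1 ≤ γ d := by
  refine Nat.le_induction ?_ ?_
  · rw [hγ1]
  · intro m hm ih
    have h1 := hγ (m + 1) (by omega)
    rw [h1, Nat.add_sub_cancel]
    linarith

lemma ppred_all (γ : ℕ → ℝ) (hγ1 : γ 1 = 1) (hγ : ∀ d, 2 ≤ d → γ d = 4 * γ (d - 1) + 32) :
    ∀ d, 1 ≤ d → Ppred γ d := by
  refine Nat.le_induction ?_ ?_
  · exact ppred_one γ hγ1
  · intro m hm ih
    refine ppred_step γ m hm (gamma_ge_one γ hγ1 hγ m hm) ?_ ih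
    have h1 := hγ (m + 1) (by omega)
    rwa [Nat.add_sub_cancel] at h1

/-- Let `γ₁ = 1` and `γ_d = 4·γ_{d−1} + 32` for `d ≥ 2`.  For every `d ≥ 1` and every
`n ≥ 1` there is a traceable graph on exactly `n` vertices admitting a
`(d, 2^(d−1))`-tree-model with at most `γ_d · n^(1 + 1/(2^d − 1))` edges. -/
theorem stmt_9 (γ : ℕ → ℝ) (hγ1 : γ 1 = 1) (hγ : ∀ d, 2 ≤ d → γ d = 4 * γ (d - 1) + 32)
    (d : ℕ) (hd : 1 ≤ d) (n : ℕ) (hn : 1 ≤ n) :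
    ∃ G : SimpleGraph (Fin n), Traceable G ∧
      Nonempty (TreeModel G d (2 ^ (d - 1))) ∧
      (G.edgeSet.ncard : ℝ) ≤ γ d * (n : ℝ) ^ (1 + 1 / (2 ^ d - 1) : ℝ) := by
  obtain ⟨S, -, -, hS⟩ := ppred_all γ hγ1 hγ d hd
  obtain ⟨G, hchain, hM, hbound⟩ := hS n hn
  refine ⟨G, ?_, ?_, ?_⟩
  · obtain ⟨u, v, p, hp⟩ := exists_walk_of_chain G (List.finRange n) hchain (by
      intro h
      have h2 := congrArg List.length h
      simp only [List.length_finRange, List.length_nil] at h2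
      omega)
    refine ⟨u, v, p, fun x => ?_⟩
    rw [hp]
    exact List.count_eq_one_of_mem (List.nodup_finRange n) (List.mem_finRange x)
  · obtain ⟨M, -⟩ := hM
    exact ⟨M⟩
  · exact hbound
end

section
/- Let Π be a hereditary class of simple graphs and suppose there exist constants n₀ and D > 0 such that every traceable graph in Π on n ≥ n₀ vertices contains at least D·n·log₂(n) edges. Then for every α ≥ 0, every traceable simple graph G with distance to Π at most α and with n ≥ 2·n₀·max{α,1} vertices contains at least (D/2)·n·log₂(n/(2(α+1))) edges. -/
open List in
lemma my_exists_walk_of_chain' {W : Type} (H : SimpleGraph W) :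
    ∀ (l : List W) (x : W), List.Chain' H.Adj (x :: l) →
      ∃ (y : W) (w : H.Walk x y), w.support = x :: l := by
  intro l
  induction l with
  | nil => exact fun x _ => ⟨x, SimpleGraph.Walk.nil, rfl⟩
  | cons z l ih =>
    intro x hc
    rw [List.Chain', List.isChain_cons_cons] at hc
    obtain ⟨y, w, hw⟩ := ih z hc.2
    exact ⟨y, SimpleGraph.Walk.cons hc.1 w, by simp [hw]⟩

lemma my_exists_split {V : Type} [DecidableEq V] (S : Finset V) :
    ∀ l : List V, ∃ (r : List V) (P : List (List V)),
      r <+: l ∧ (∀ r' ∈ P, r' <:+: l) ∧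
      (r :: P).length = l.countP (fun x => x ∈ S) + 1 ∧
      (r :: P).flatten = l.filter (fun x => x ∉ S) := by
  intro l
  induction l with
  | nil => exact ⟨[], [], List.prefix_rfl, by simp, by simp, by simp⟩
  | cons x l ih =>
    obtain ⟨r, P, hpre, hinf, hlen, hjoin⟩ := ih
    by_cases hx : x ∈ S
    · refine ⟨[], r :: P, List.nil_prefix, ?_, ?_, ?_⟩
      · intro r' hr'
        rcases List.mem_cons.1 hr' with rfl | h
        · exact List.infix_cons hpre.isInfix
        · exact List.infix_cons (hinf r' h)
      · rw [List.countP_cons_of_pos (by simpa using hx)]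
        simp only [List.length_cons] at hlen ⊢
        omega
      · rw [List.filter_cons_of_neg (by simpa using hx)]
        simpa using hjoin
    · refine ⟨x :: r, P, ?_, fun r' h => List.infix_cons (hinf r' h), ?_, ?_⟩
      · obtain ⟨tl, rfl⟩ := hpre; exact ⟨tl, rfl⟩
      · rw [List.countP_cons_of_neg (by simpa using hx)]
        simpa using hlen
      · rw [List.filter_cons_of_pos (by simpa using hx)]
        simp only [List.flatten_cons] at hjoin ⊢
        rw [List.cons_append, hjoin]

lemma my_sum_map_one {γ : Type*} (l : List γ) : (l.map (fun _ => (1:ℕ))).sum = l.length := by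
  induction l with
  | nil => simp
  | cons a l ih => simp [ih]; omega

lemma my_length_filter_split {γ : Type*} (p : γ → Prop) [DecidablePred p] (l : List γ) :
    (l.filter (fun x => decide (p x))).length + (l.filter (fun x => decide ¬ p x)).length
      = l.length := by
  have h := List.sum_map_filter_add_sum_map_filter_not p (fun _ => (1:ℕ)) l
  simpa [my_sum_map_one] using h


lemma my_jensen_aux (a n : ℕ) (ms : List ℕ) (hb1 : ms ≠ [])
    (hb2 : ms.length ≤ a + 1) (hM : n ≤ 2 * ms.sum) (hn : 2 * (a + 1) < n) :
    (n : ℝ) / 2 * Real.log ((n : ℝ) / (2 * ((a : ℝ) + 1))) ≤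
      (ms.map (fun m : ℕ => (m : ℝ) * Real.log (m:ℝ))).sum := by
  have hb0 : 0 < ms.length := List.length_pos_iff.2 hb1
  have hbR : (0:ℝ) < (ms.length : ℝ) := by exact_mod_cast hb0
  set b : ℝ := (ms.length : ℝ) with hbdef
  set M : ℝ := ((ms.sum : ℕ) : ℝ) with hMdef
  have hlist : ∀ (g : ℕ → ℝ), (ms.map g).sum = ∑ i : Fin ms.length, g (ms.get i) := by
    intro g
    conv_lhs => rw [← List.ofFn_get ms]
    rw [List.map_ofFn, List.sum_ofFn]
    rfl
  have hsum1 : ∑ i : Fin ms.length, ((ms.get i : ℕ) : ℝ) = M := by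
    rw [hMdef, Nat.cast_list_sum, hlist (Nat.cast : ℕ → ℝ)]
  have jensen := Real.convexOn_mul_log.map_sum_le (t := (Finset.univ : Finset (Fin ms.length)))
      (w := fun _ => b⁻¹) (p := fun i => ((ms.get i : ℕ) : ℝ))
      (fun i _ => by positivity)
      (by simp [Finset.sum_const, Finset.card_univ, nsmul_eq_mul]
          exact mul_inv_cancel₀ hbR.ne')
      (fun i _ => by simp [Set.mem_Ici])
  simp only [smul_eq_mul] at jensen
  rw [← Finset.mul_sum, hsum1, ← Finset.mul_sum] at jensen
  rw [← hlist (fun m : ℕ => (m:ℝ) * Real.log (m:ℝ))] at jensen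
  have hkey : M * Real.log (M / b) ≤ (ms.map (fun m : ℕ => (m : ℝ) * Real.log (m:ℝ))).sum := by
    have h2 := mul_le_mul_of_nonneg_left jensen hbR.le
    calc M * Real.log (M / b) = b * (b⁻¹ * M * Real.log (b⁻¹ * M)) := by
          rw [div_eq_inv_mul]; field_simp
      _ ≤ b * (b⁻¹ * (ms.map (fun m : ℕ => (m : ℝ) * Real.log (m:ℝ))).sum) := h2
      _ = (ms.map (fun m : ℕ => (m : ℝ) * Real.log (m:ℝ))).sum := by field_simp
  have hM2 : (n:ℝ)/2 ≤ M := by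
    have : (n:ℝ) ≤ 2 * M := by rw [hMdef]; exact_mod_cast hM
    linarith
  have hbA : b ≤ (a:ℝ) + 1 := by rw [hbdef]; exact_mod_cast hb2
  have hpos : (0:ℝ) < 2 * ((a:ℝ) + 1) := by positivity
  have hc1 : (1:ℝ) < (n:ℝ) / (2 * ((a:ℝ) + 1)) := by
    rw [lt_div_iff₀ hpos, one_mul]
    exact_mod_cast hn
  have hle : (n:ℝ) / (2 * ((a:ℝ) + 1)) ≤ M / b := by
    rw [show (2 * ((a:ℝ) + 1)) = 2 * ((a:ℝ)+1) from rfl, ← div_div]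
    exact div_le_div₀ (by positivity) hM2 hbR hbA
  calc (n:ℝ)/2 * Real.log ((n:ℝ) / (2 * ((a:ℝ) + 1)))
      ≤ M * Real.log (M / b) :=
        mul_le_mul hM2 (Real.log_le_log (by linarith) hle) (Real.log_nonneg hc1.le)
          (by positivity)
    _ ≤ _ := hkey



lemma my_sum_ncard_le {V : Type} [Fintype V] [DecidableEq V] (G : SimpleGraph V) :
    ∀ (l : List (List V)), l.Pairwise List.Disjoint →
      ((l.map (fun r => ({e ∈ G.edgeSet | ∀ x ∈ e, x ∈ r} : Set (Sym2 V)).ncard)).sum)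
        ≤ ({e ∈ G.edgeSet | ∀ x ∈ e, x ∈ l.flatten} : Set (Sym2 V)).ncard := by
  intro l
  induction l with
  | nil => simp
  | cons r l ih =>
    intro hpw
    rw [List.pairwise_cons] at hpw
    have hIH := ih hpw.2
    simp only [List.map_cons, List.sum_cons]
    have hdisj : Disjoint ({e ∈ G.edgeSet | ∀ x ∈ e, x ∈ r} : Set (Sym2 V))
        ({e ∈ G.edgeSet | ∀ x ∈ e, x ∈ l.flatten} : Set (Sym2 V)) := by
      rw [Set.disjoint_left]
      rintro e ⟨_, he1⟩ ⟨_, he2⟩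
      induction e using Sym2.ind with
      | _ a b =>
        have ha1 : a ∈ r := he1 a (Sym2.mem_mk_left a b)
        have ha2 : a ∈ l.flatten := he2 a (Sym2.mem_mk_left a b)
        obtain ⟨r', hr', har'⟩ := List.mem_flatten.1 ha2
        exact hpw.1 r' hr' ha1 har'
    have hunion := Set.ncard_union_eq hdisj (Set.toFinite _) (Set.toFinite _)
    have hsub : ({e ∈ G.edgeSet | ∀ x ∈ e, x ∈ r} : Set (Sym2 V)) ∪
        ({e ∈ G.edgeSet | ∀ x ∈ e, x ∈ l.flatten} : Set (Sym2 V)) ⊆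
        ({e ∈ G.edgeSet | ∀ x ∈ e, x ∈ (r :: l).flatten} : Set (Sym2 V)) := by
      rintro e he
      rcases he with ⟨h1, h2⟩ | ⟨h1, h2⟩
      · exact ⟨h1, fun x hx => by
          rw [List.flatten_cons, List.mem_append]; exact Or.inl (h2 x hx)⟩
      · exact ⟨h1, fun x hx => by
          rw [List.flatten_cons, List.mem_append]; exact Or.inr (h2 x hx)⟩
    calc ({e ∈ G.edgeSet | ∀ x ∈ e, x ∈ r} : Set (Sym2 V)).ncard
          + ((l.map (fun r => ({e ∈ G.edgeSet | ∀ x ∈ e, x ∈ r} : Set (Sym2 V)).ncard)).sum)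
        ≤ ({e ∈ G.edgeSet | ∀ x ∈ e, x ∈ r} : Set (Sym2 V)).ncard
          + ({e ∈ G.edgeSet | ∀ x ∈ e, x ∈ l.flatten} : Set (Sym2 V)).ncard :=
          Nat.add_le_add_left hIH _
      _ = (({e ∈ G.edgeSet | ∀ x ∈ e, x ∈ r} : Set (Sym2 V)) ∪
            ({e ∈ G.edgeSet | ∀ x ∈ e, x ∈ l.flatten} : Set (Sym2 V))).ncard := hunion.symm
      _ ≤ _ := Set.ncard_le_ncard hsub (Set.toFinite _)

lemma my_piece_bound
    (Pi : ∀ (V : Type) [Fintype V] [DecidableEq V], SimpleGraph V → Prop)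
    (hHer : ∀ (V : Type) [Fintype V] [DecidableEq V] (G : SimpleGraph V),
      Pi V G → ∀ s : Finset V, Pi _ (G.induce (↑s : Set V)))
    (n₀ : ℕ) (D : ℝ)
    (hPi : ∀ (V : Type) [Fintype V] [DecidableEq V] (G : SimpleGraph V),
      Pi V G → Traceable G → n₀ ≤ Fintype.card V →
        D * (Fintype.card V : ℝ) * Real.logb 2 (Fintype.card V) ≤ (G.edgeSet.ncard : ℝ))
    (V : Type) [Fintype V] [DecidableEq V] (G : SimpleGraph V) (S : Finset V)
    (hS : Pi _ (G.induce (↑(Sᶜ) : Set V)))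
    (r : List V) (hne : r ≠ []) (hnd : r.Nodup) (hch : List.Chain' G.Adj r)
    (hrS : ∀ x ∈ r, x ∉ S) (hn₀ : n₀ ≤ r.length) :
    D * (r.length : ℝ) * Real.logb 2 (r.length : ℝ) ≤
      (({e ∈ G.edgeSet | ∀ x ∈ e, x ∈ r} : Set (Sym2 V)).ncard : ℝ) := by
  classical
  have hmem1 : ∀ x ∈ r, x ∈ (↑(Sᶜ) : Set V) := by
    intro x hx
    simpa using hrS x hx
  set l₁ : List (↑(Sᶜ : Finset V) : Set V) :=
    r.pmap (fun x hx => (⟨x, hx⟩ : (↑(Sᶜ : Finset V) : Set V))) hmem1 with hl₁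
  have hm1 : l₁.map Subtype.val = r := by
    rw [hl₁, List.map_pmap]
    simp
  set t : Finset (↑(Sᶜ : Finset V) : Set V) := l₁.toFinset with ht
  have hmem2 : ∀ y ∈ l₁, y ∈ (↑t : Set (↑(Sᶜ : Finset V) : Set V)) := by
    intro y hy
    simp [ht, hy]
  set l₂ : List (↑(↑t : Set (↑(Sᶜ : Finset V) : Set V)) : Type) :=
    l₁.pmap (fun y hy => ⟨y, hy⟩) hmem2 with hl₂
  have hm2 : l₂.map Subtype.val = l₁ := by
    rw [hl₂, List.map_pmap]
    simp
  have hm3 : l₂.map (fun z => z.val.val) = r := by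
    rw [show (fun z : (↑(↑t : Set (↑(Sᶜ : Finset V) : Set V)) : Type) => z.val.val)
        = Subtype.val ∘ Subtype.val from rfl, ← List.map_map, hm2, hm1]
  set H := (G.induce (↑(Sᶜ) : Set V)).induce (↑t : Set (↑(Sᶜ : Finset V) : Set V)) with hH
  have hadj : ∀ a b, H.Adj a b ↔ G.Adj a.val.val b.val.val := fun a b => Iff.rfl
  have hnd1 : l₁.Nodup := hnd.pmap (fun a _ b _ h => congrArg Subtype.val h)
  have hnd2 : l₂.Nodup := hnd1.pmap (fun a _ b _ h => congrArg Subtype.val h)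
  have hmemall : ∀ a : (↑(↑t : Set (↑(Sᶜ : Finset V) : Set V)) : Type), a ∈ l₂ := by
    intro a
    exact List.mem_pmap.2 ⟨a.1, List.mem_toFinset.mp a.2, Subtype.ext rfl⟩
  have hcard : Fintype.card (↑(↑t : Set (↑(Sᶜ : Finset V) : Set V)) : Type) = r.length := by
    rw [show Fintype.card (↑(↑t : Set (↑(Sᶜ : Finset V) : Set V)) : Type) = t.card by simp,
      ht, List.toFinset_card_of_nodup hnd1, hl₁, List.length_pmap]
  have hch2 : List.Chain' H.Adj l₂ := by
    have h := hch
    rw [← hm3] at h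
    exact ((List.isChain_map _).1 h).imp (fun a b hab => (hadj a b).2 hab)
  have hl₂ne : l₂ ≠ [] := by
    intro h
    apply hne
    rw [← hm3, h]
    rfl
  obtain ⟨z, l₂', hz⟩ := List.exists_cons_of_ne_nil hl₂ne
  rw [hz] at hch2
  obtain ⟨y, w, hw⟩ := my_exists_walk_of_chain' H l₂' z hch2
  have htrH : Traceable H := by
    refine ⟨z, y, w, fun a => ?_⟩
    rw [hw, ← hz]
    convert List.count_eq_one_of_mem hnd2 (hmemall a)
  have hPiH : Pi _ H := hHer _ (G.induce (↑(Sᶜ) : Set V)) hS t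
  have hbound := hPi _ H hPiH htrH (by rw [hcard]; exact hn₀)
  rw [hcard] at hbound
  refine hbound.trans ?_
  have hinj : Function.Injective
      (fun z : (↑(↑t : Set (↑(Sᶜ : Finset V) : Set V)) : Type) => z.val.val) :=
    Subtype.val_injective.comp Subtype.val_injective
  have hle : H.edgeSet.ncard ≤ ({e ∈ G.edgeSet | ∀ x ∈ e, x ∈ r} : Set (Sym2 V)).ncard := by
    refine Set.ncard_le_ncard_of_injOn (Sym2.map (fun z => z.val.val)) ?_ ?_ (Set.toFinite _)
    · rintro e he
      induction e using Sym2.ind with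
      | _ a b =>
        rw [SimpleGraph.mem_edgeSet] at he
        refine ⟨(G.mem_edgeSet).2 ((hadj a b).1 he), ?_⟩
        intro x hx
        rw [Sym2.map_pair_eq] at hx
        rcases Sym2.mem_iff.1 hx with rfl | rfl
        · rw [← hm3]; exact List.mem_map_of_mem (hmemall a)
        · rw [← hm3]; exact List.mem_map_of_mem (hmemall b)
    · exact (Sym2.map.injective hinj).injOn
  exact_mod_cast hle

/-- Let `Π` be a hereditary class of graphs such that every traceable graph in `Π` on
`n ≥ n₀` vertices has at least `D·n·log₂ n` edges.  Then for every `α ≥ 0`, every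
traceable graph with distance to `Π` at most `α` and at least `2·n₀·max{α,1}` vertices
has at least `(D/2)·n·log₂(n/(2(α+1)))` edges. -/
theorem stmt_11
    (Pi : ∀ (V : Type) [Fintype V] [DecidableEq V], SimpleGraph V → Prop)
    (hHer : ∀ (V : Type) [Fintype V] [DecidableEq V] (G : SimpleGraph V),
      Pi V G → ∀ s : Finset V, Pi _ (G.induce (↑s : Set V)))
    (n₀ : ℕ) (D : ℝ) (hD : 0 < D)
    (hPi : ∀ (V : Type) [Fintype V] [DecidableEq V] (G : SimpleGraph V),
      Pi V G → Traceable G → n₀ ≤ Fintype.card V →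
        D * (Fintype.card V : ℝ) * Real.logb 2 (Fintype.card V) ≤ (G.edgeSet.ncard : ℝ))
    (α : ℕ) (V : Type) [Fintype V] [DecidableEq V] (G : SimpleGraph V)
    (htr : Traceable G)
    (hdist : ∃ S : Finset V, S.card ≤ α ∧ Pi _ (G.induce (↑(Sᶜ) : Set V)))
    (hn : 2 * n₀ * max α 1 ≤ Fintype.card V) :
    (D / 2) * (Fintype.card V : ℝ) *
      Real.logb 2 ((Fintype.card V : ℝ) / (2 * (α + 1))) ≤ (G.edgeSet.ncard : ℝ) := by
  classical
  obtain ⟨S, hScard, hSPi⟩ := hdist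
  obtain ⟨u, v, p, hp⟩ := htr
  set n := Fintype.card V with hn_def
  rcases le_or_gt ((n : ℝ) / (2 * ((α:ℝ) + 1))) 1 with hcase | hcase
  · have hlog : Real.logb 2 ((n:ℝ) / (2 * ((α:ℝ) + 1))) ≤ 0 :=
      Real.logb_nonpos one_lt_two (by positivity) hcase
    have h1 : (D/2) * (n:ℝ) * Real.logb 2 ((n:ℝ) / (2 * ((α:ℝ)+1))) ≤ 0 :=
      mul_nonpos_of_nonneg_of_nonpos (by positivity) hlog
    exact h1.trans (Nat.cast_nonneg _)
  have hn23 : 2 * α + 2 < n := by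
    have h2 : ((2*α+2 : ℕ) : ℝ) < (n:ℝ) := by
      have h3 := (lt_div_iff₀ (by positivity : (0:ℝ) < 2 * ((α:ℝ)+1))).1 hcase
      push_cast
      linarith
    exact_mod_cast h2
  -- facts about the Hamiltonian path support
  have hnd : p.support.Nodup := List.nodup_iff_count_le_one.2 (fun a => (hp a).le)
  have hmem : ∀ x : V, x ∈ p.support := fun x => List.count_pos_iff.1 (by rw [hp x]; norm_num)
  have hlen : p.support.length = n := by
    rw [← List.toFinset_card_of_nodup hnd,
      show p.support.toFinset = Finset.univ from Finset.eq_univ_iff_forall.2 (by simp [hmem]),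
      Finset.card_univ]
  have hchain : List.Chain' G.Adj p.support := p.isChain_adj_support
  -- split into pieces
  obtain ⟨r₀, P, hpre, hinfP, hlenP, hjoin⟩ := my_exists_split S p.support
  set Pall : List (List V) := r₀ :: P with hPall
  have hinf : ∀ r ∈ Pall, r <:+: p.support := by
    intro r hr
    rcases List.mem_cons.1 hr with rfl | h
    · exact hpre.isInfix
    · exact hinfP r h
  have hcount : p.support.countP (fun x => x ∈ S) = S.card := by
    rw [List.countP_eq_length_filter, ← List.toFinset_card_of_nodup (hnd.filter _)]
    congr 1
    ext x
    simp [List.mem_filter, hmem x]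
  have hPalllen : Pall.length = S.card + 1 := by rw [hPall, hlenP, hcount]
  have hTot : (Pall.map List.length).sum + S.card = n := by
    have h1 : (Pall.map List.length).sum
        = (p.support.filter (fun x => ¬ (x ∈ S))).length := by
      rw [← List.length_flatten, hjoin]
    have h2 : (p.support.filter (fun x => decide (x ∈ S))).length
        + (p.support.filter (fun x => decide ¬ (x ∈ S))).length = p.support.length :=
      my_length_filter_split (fun x => x ∈ S) p.support
    have h4 : p.support.countP (fun x => x ∈ S)
        = (p.support.filter (fun x => decide (x ∈ S))).length :=
      List.countP_eq_length_filter
    rw [h1]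
    omega
  -- big and small pieces
  set N := max n₀ 1 with hN
  have hN1 : 1 ≤ N := le_max_right n₀ 1
  obtain ⟨N', hN'⟩ : ∃ N', N = N' + 1 := ⟨N - 1, by omega⟩
  set Pb := Pall.filter (fun r => decide (N ≤ r.length)) with hPb
  set Ps := Pall.filter (fun r => decide ¬ (N ≤ r.length)) with hPs
  have hsplit1 : (Pb.map List.length).sum + (Ps.map List.length).sum
      = (Pall.map List.length).sum :=
    List.sum_map_filter_add_sum_map_filter_not (fun r => N ≤ r.length) List.length Pall
  have hsplit2 : Pb.length + Ps.length = Pall.length :=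
    my_length_filter_split (fun r => N ≤ r.length) Pall
  have hsmall : (Ps.map List.length).sum ≤ Ps.length * N' := by
    have h5 := List.sum_le_card_nsmul (Ps.map List.length) N' ?side
    · simpa [List.length_map, smul_eq_mul] using h5
    case side =>
      intro x hx
      obtain ⟨r, hr, rfl⟩ := List.mem_map.1 hx
      have h6 := List.of_mem_filter hr
      simp only [decide_eq_true_eq] at h6
      omega
  have h2aN : 2 * α * N ≤ n := by
    rcases le_total n₀ 1 with h | h
    · have hNe : N = 1 := max_eq_right h
      rw [hNe]
      omega
    · have hNe : N = n₀ := max_eq_left h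
      rcases Nat.eq_zero_or_pos α with h0 | h1
      · simp [h0]
      · have hmax : max α 1 = α := Nat.max_eq_left h1
        rw [hmax] at hn
        rw [hNe]
        calc 2 * α * n₀ = 2 * n₀ * α := by ring
          _ ≤ n := hn
  have h2aN' : 2 * (α * N') + 2 * α ≤ n := by
    have h7 : 2 * α * (N' + 1) = 2 * (α * N') + 2 * α := by ring
    rw [hN', h7] at h2aN
    exact h2aN
  have hb1 : 1 ≤ Pb.length := by
    by_contra hb
    push_neg at hb
    have hb0 : Pb.length = 0 := by omega
    have hPslen : Ps.length = S.card + 1 := by omega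
    have hsmall2 : (Ps.map List.length).sum ≤ (S.card + 1) * N' := by
      rw [hPslen] at hsmall
      exact hsmall
    have hMn0 : (Pb.map List.length).sum = 0 := by
      rw [List.length_eq_zero_iff.1 hb0]
      simp
    have hcon : n ≤ (α + 1) * N' + α := by
      have h8 : (S.card + 1) * N' ≤ (α + 1) * N' := Nat.mul_le_mul_right _ (by omega)
      linarith [hTot, hsplit1, hsmall2, h8, hMn0, hScard]
    rcases Nat.eq_zero_or_pos α with h0 | h1
    · subst h0
      have hNle : N ≤ n₀ + 1 := by rw [hN]; exact max_le (Nat.le_succ _) (by omega)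
      have h2n₀ : 2 * n₀ ≤ n := by simpa using hn
      simp only [zero_add, one_mul, add_zero] at hcon
      omega
    · have hmul : (α + 1) * N' ≤ 2 * (α * N') := by
        have : (α + 1) * N' ≤ (2 * α) * N' := Nat.mul_le_mul_right _ (by omega)
        linarith [this]
      linarith [hcon, hmul, h2aN', h1]
  have hsm_le : Ps.length ≤ α := by omega
  have hSsum_le : (Ps.map List.length).sum ≤ α * N' :=
    hsmall.trans (Nat.mul_le_mul_right _ hsm_le)
  have hn2M : n ≤ 2 * (Pb.map List.length).sum := by
    linarith [hTot, hsplit1, hSsum_le, h2aN', hScard]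
  have hb2 : Pb.length ≤ α + 1 := by omega
  -- pairwise disjointness
  have hpwise : Pall.Pairwise List.Disjoint := by
    have hjnd : Pall.flatten.Nodup := by rw [hjoin]; exact hnd.filter _
    exact (List.nodup_flatten.1 hjnd).2
  have hpwb : Pb.Pairwise List.Disjoint :=
    List.Pairwise.sublist List.filter_sublist hpwise
  -- per piece bound
  have hpiece : ∀ r ∈ Pb, D * (r.length:ℝ) * Real.logb 2 (r.length:ℝ) ≤
      ((({e ∈ G.edgeSet | ∀ x ∈ e, x ∈ r} : Set (Sym2 V)).ncard : ℕ) : ℝ) := by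
    intro r hr
    have hrPall : r ∈ Pall := List.mem_of_mem_filter hr
    have hrN : N ≤ r.length := by
      have h6 := List.of_mem_filter hr
      simpa using h6
    have hrinf : r <:+: p.support := hinf r hrPall
    have hrnd : r.Nodup := hrinf.sublist.nodup hnd
    have hrch : List.Chain' G.Adj r := hchain.infix hrinf
    have hrS : ∀ x ∈ r, x ∉ S := by
      intro x hx
      have h9 : x ∈ Pall.flatten := List.mem_flatten.2 ⟨r, hrPall, hx⟩
      rw [hjoin] at h9
      have := List.of_mem_filter h9
      simpa using this
    have hrne : r ≠ [] := by
      have : 0 < r.length := by omega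
      exact List.length_pos_iff.1 this
    exact my_piece_bound Pi hHer n₀ D hPi V G S hSPi r hrne hrnd hrch hrS
      (le_trans (le_max_left _ _) hrN)
  have hsum_le : ((Pb.map (fun r => D * (r.length:ℝ) * Real.logb 2 (r.length:ℝ))).sum)
      ≤ ((Pb.map (fun r =>
          ((({e ∈ G.edgeSet | ∀ x ∈ e, x ∈ r} : Set (Sym2 V)).ncard : ℕ) : ℝ))).sum) :=
    List.sum_le_sum hpiece
  have hcast : ((Pb.map (fun r =>
        ((({e ∈ G.edgeSet | ∀ x ∈ e, x ∈ r} : Set (Sym2 V)).ncard : ℕ) : ℝ))).sum)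
      = (((Pb.map (fun r =>
          ({e ∈ G.edgeSet | ∀ x ∈ e, x ∈ r} : Set (Sym2 V)).ncard)).sum : ℕ) : ℝ) := by
    rw [Nat.cast_list_sum, List.map_map]
    rfl
  have hedges : ((Pb.map (fun r =>
        ({e ∈ G.edgeSet | ∀ x ∈ e, x ∈ r} : Set (Sym2 V)).ncard)).sum) ≤ G.edgeSet.ncard :=
    (my_sum_ncard_le G Pb hpwb).trans
      (Set.ncard_le_ncard (Set.sep_subset _ _) (Set.toFinite _))
  -- Jensen
  have hjj := my_jensen_aux α n (Pb.map List.length)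
    (List.length_pos_iff.1 (by rw [List.length_map]; omega))
    (by rw [List.length_map]; omega)
    hn2M
    (by omega)
  have hms : (((Pb.map List.length).map (fun m : ℕ => (m:ℝ) * Real.log (m:ℝ))).sum)
      = ((Pb.map (fun r => (r.length:ℝ) * Real.log (r.length:ℝ))).sum) := by
    rw [List.map_map]
    rfl
  rw [hms] at hjj
  have hlog2 : (0:ℝ) < Real.log 2 := Real.log_pos one_lt_two
  have hmain : (D/2) * (n:ℝ) * Real.logb 2 ((n:ℝ) / (2 * ((α:ℝ)+1)))
      ≤ ((Pb.map (fun r => D * (r.length:ℝ) * Real.logb 2 (r.length:ℝ))).sum) := by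
    have hmap : (Pb.map (fun r => D * (r.length:ℝ) * Real.logb 2 (r.length:ℝ)))
        = (Pb.map (fun r => (D / Real.log 2) * ((r.length:ℝ) * Real.log (r.length:ℝ)))) := by
      apply List.map_congr_left
      intro r _
      rw [Real.logb]
      field_simp
    rw [hmap, List.sum_map_mul_left]
    have h1 : (D/2) * (n:ℝ) * Real.logb 2 ((n:ℝ) / (2 * ((α:ℝ)+1)))
        = (D / Real.log 2) * ((n:ℝ)/2 * Real.log ((n:ℝ) / (2 * ((α:ℝ)+1)))) := by
      rw [Real.logb]
      field_simp
    rw [h1]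
    exact mul_le_mul_of_nonneg_left hjj (by positivity)
  calc (D/2) * (n:ℝ) * Real.logb 2 ((n:ℝ) / (2 * ((α:ℝ)+1)))
      ≤ ((Pb.map (fun r => D * (r.length:ℝ) * Real.logb 2 (r.length:ℝ))).sum) := hmain
    _ ≤ _ := hsum_le
    _ = _ := hcast
    _ ≤ (G.edgeSet.ncard : ℝ) := by exact_mod_cast hedges
end

section
/- For every integer d ≥ 0 and every integer n of the form n = (k+1)(d+1) − 2 with k ≥ 2, there exists a traceable simple graph G on n vertices with cluster vertex deletion number at most d and at most 3·n²/(d+1) edges. -/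
/-- A cluster graph is a graph in which every connected component is a clique. -/
def IsClusterGraph {V : Type*} (G : SimpleGraph V) : Prop :=
  ∀ c : G.ConnectedComponent, G.IsClique {v | G.connectedComponentMk v = c}

/-- The cluster vertex deletion number of `G`: the minimum size of a vertex set whose
deletion yields a cluster graph. -/
noncomputable def cvd {V : Type*} [Fintype V] [DecidableEq V] (G : SimpleGraph V) : ℕ :=
  sInf {k | ∃ S : Finset V, S.card ≤ k ∧ IsClusterGraph (G.induce (↑(Sᶜ) : Set V))}

/-- If adjacency is given by `v ≠ w ∧ f v = f w`, the graph is a cluster graph. -/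
lemma isClusterGraph_of_fiber {V : Type*} (G : SimpleGraph V) (f : V → ℕ)
    (h : ∀ v w, G.Adj v w ↔ v ≠ w ∧ f v = f w) : IsClusterGraph G := by
  have key : ∀ v w : V, G.Reachable v w → f v = f w := by
    intro v w hr
    obtain ⟨p⟩ := hr
    induction p with
    | nil => rfl
    | cons ha _ ih => exact ((h _ _).mp ha).2.trans ih
  intro c x hx y hy hxy
  have hr : G.Reachable x y := by
    rw [Set.mem_setOf_eq] at hx hy
    exact (SimpleGraph.ConnectedComponent.eq).mp (hx.trans hy.symm)
  exact (h x y).mpr ⟨hxy, key x y hr⟩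

/-- A graph on `Fin n` in which consecutive vertices are adjacent is traceable. -/
lemma traceable_of_consecutive {n : ℕ} (hn : 0 < n) (G : SimpleGraph (Fin n))
    (h : ∀ i (hi : i + 1 < n), G.Adj ⟨i, by omega⟩ ⟨i + 1, hi⟩) : Traceable G := by
  have aux : ∀ m (i : Fin n), i.val + m + 1 = n →
      ∃ p : G.Walk i ⟨n - 1, Nat.sub_lt hn Nat.one_pos⟩,
        p.support.map Fin.val = List.range' i.val (m + 1) := by
    intro m
    induction m with
    | zero =>
      intro i hi
      have hieq : i = ⟨n - 1, Nat.sub_lt hn Nat.one_pos⟩ := Fin.ext (show i.val = n - 1 by omega)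
      subst hieq
      exact ⟨SimpleGraph.Walk.nil, by simp⟩
    | succ m ih =>
      intro i hi
      have hlt : i.val + 1 < n := by omega
      obtain ⟨p, hp⟩ := ih ⟨i.val + 1, hlt⟩ (by show i.val + 1 + m + 1 = n; omega)
      have hp' : p.support.map Fin.val = List.range' (i.val + 1) (m + 1) := hp
      have hadj : G.Adj i ⟨i.val + 1, hlt⟩ := h i.val hlt
      refine ⟨SimpleGraph.Walk.cons hadj p, ?_⟩
      rw [SimpleGraph.Walk.support_cons, List.map_cons, hp']
      simp [List.range'_succ]
  obtain ⟨p, hp⟩ := aux (n - 1) ⟨0, hn⟩ (show 0 + (n - 1) + 1 = n by omega)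
  have hp' : p.support.map Fin.val = List.range' 0 (n - 1 + 1) := hp
  refine ⟨_, _, p, ?_⟩
  intro v
  have h1 : (p.support.map Fin.val).count v.val = (List.range n).count v.val := by
    rw [hp', List.range_eq_range', show n - 1 + 1 = n by omega]
  rw [List.count_map_of_injective _ _ Fin.val_injective] at h1
  rw [h1]
  exact List.count_eq_one_of_mem List.nodup_range (List.mem_range.mpr v.isLt)

/-- For every `d ≥ 0` and every `n = (k+1)(d+1) − 2` with `k ≥ 2`, there is a traceable
graph on `n` vertices with cluster vertex deletion number at most `d` and at most
`3·n²/(d+1)` edges. -/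
theorem stmt_13 (d : ℕ) (k : ℕ) (hk : 2 ≤ k) (n : ℕ) (hn : n = (k + 1) * (d + 1) - 2) :
    ∃ G : SimpleGraph (Fin n), Traceable G ∧ cvd G ≤ d ∧
      (G.edgeSet.ncard : ℝ) ≤ 3 * (n : ℝ) ^ 2 / (d + 1) := by
  classical
  set M := (k + 1) * (d + 1) with hMdef
  have hM : 3 ≤ M := by rw [hMdef]; nlinarith
  have hn1 : 1 ≤ n := by omega
  -- block of a vertex
  set f : Fin n → ℕ := fun v => (v.val + 2) / (k + 1) with hf
  set G : SimpleGraph (Fin n) :=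
    { Adj := fun i j => i ≠ j ∧ (f i = f j ∨ i.val + 1 = j.val ∨ j.val + 1 = i.val)
      symm := by
        constructor
        intro i j ⟨h1, h2⟩
        exact ⟨h1.symm, by tauto⟩
      loopless := by constructor; intro i ⟨h1, _⟩; exact h1 rfl } with hG
  have hGadj : ∀ i j : Fin n, G.Adj i j ↔
      i ≠ j ∧ (f i = f j ∨ i.val + 1 = j.val ∨ j.val + 1 = i.val) := fun _ _ => Iff.rfl
  -- same block implies close
  have hclose : ∀ i j : Fin n, f i = f j → j.val ≤ i.val + k := by
    intro i j hij
    have e1 : (i.val + 2) % (k + 1) + (k + 1) * ((i.val + 2) / (k + 1)) = i.val + 2 :=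
      Nat.mod_add_div _ _
    have e2 : (j.val + 2) % (k + 1) + (k + 1) * ((j.val + 2) / (k + 1)) = j.val + 2 :=
      Nat.mod_add_div _ _
    have hq : (i.val + 2) / (k + 1) = (j.val + 2) / (k + 1) := hij
    rw [hq] at e1
    have m1 : (i.val + 2) % (k + 1) < k + 1 := Nat.mod_lt _ (by omega)
    have m2 : (j.val + 2) % (k + 1) < k + 1 := Nat.mod_lt _ (by omega)
    omega
  refine ⟨G, ?_, ?_, ?_⟩
  · -- traceable
    apply traceable_of_consecutive (by omega)
    intro i hi
    exact (hGadj _ _).mpr ⟨by simp [Fin.ext_iff], Or.inr (Or.inl rfl)⟩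
  · -- cvd ≤ d
    apply Nat.sInf_le
    rw [Set.mem_setOf_eq]
    refine ⟨Finset.univ.filter
      (fun v : Fin n => (v.val + 2) % (k + 1) = k ∧ v.val + 2 < M - 1), ?_, ?_⟩
    · -- cardinality at most d
      have hc : (Finset.univ.filter
          (fun v : Fin n => (v.val + 2) % (k + 1) = k ∧ v.val + 2 < M - 1)).card ≤
          (Finset.range d).card := by
        apply Finset.card_le_card_of_injOn (fun v => (v.val + 2) / (k + 1))
        · intro v hv
          simp only [Finset.coe_filter, Set.mem_setOf_eq, Finset.mem_filter, Finset.mem_univ, true_and] at hv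
          obtain ⟨hmod, hlt⟩ := hv
          rw [Finset.coe_range, Set.mem_Iio]
          by_contra hq
          push_neg at hq
          have h1 : (v.val + 2) % (k + 1) + (k + 1) * ((v.val + 2) / (k + 1)) = v.val + 2 :=
            Nat.mod_add_div _ _
          have h2 : (k + 1) * d ≤ (k + 1) * ((v.val + 2) / (k + 1)) :=
            Nat.mul_le_mul_left _ hq
          have h3 : M = (k + 1) * d + (k + 1) := by rw [hMdef]; ring
          omega
        · intro a ha b hb hab
          simp only [Finset.coe_filter, Set.mem_setOf_eq, Finset.mem_univ, true_and] at ha hb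
          have h1 : (a.val + 2) % (k + 1) + (k + 1) * ((a.val + 2) / (k + 1)) = a.val + 2 :=
            Nat.mod_add_div _ _
          have h2 : (b.val + 2) % (k + 1) + (k + 1) * ((b.val + 2) / (k + 1)) = b.val + 2 :=
            Nat.mod_add_div _ _
          simp only at hab
          rw [hab] at h1
          apply Fin.ext
          omega
      simpa using hc
    · -- cluster graph after deletion
      apply isClusterGraph_of_fiber _ (fun a => f a.val)
      rintro ⟨v, hv⟩ ⟨w, hw⟩
      simp only [Finset.coe_compl, Set.mem_compl_iff, Finset.mem_coe, Finset.mem_filter,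
        Finset.mem_univ, true_and, not_and, not_lt] at hv hw
      -- key step: a non-deleted vertex with successor is in the same block
      have step : ∀ x y : Fin n, x.val + 1 = y.val →
          ((x.val + 2) % (k + 1) = k → M - 1 ≤ x.val + 2) → f x = f y := by
        intro x y hxy hS
        by_cases hd : (k + 1) ∣ (x.val + 2 + 1)
        · exfalso
          obtain ⟨c, hc⟩ := hd
          have hc1 : 1 ≤ c := by
            rcases Nat.eq_zero_or_pos c with rfl | h
            · rw [Nat.mul_zero] at hc; omega
            · exact h
          have hc2 : (k + 1) * c = (k + 1) * (c - 1) + (k + 1) := by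
            cases c with
            | zero => omega
            | succ c' => simp only [Nat.succ_sub_one]; ring
          have hx2 : x.val + 2 = (c - 1) * (k + 1) + k := by
            rw [Nat.mul_comm]; omega
          have hmod : (x.val + 2) % (k + 1) = k := by
            rw [hx2, Nat.mul_add_mod_of_lt (by omega)]
          have h5 := hS hmod
          have h6 := y.isLt
          omega
        · have hdiv : (x.val + 2 + 1) / (k + 1) = (x.val + 2) / (k + 1) :=
            Nat.succ_div_of_not_dvd hd
          show (x.val + 2) / (k + 1) = (y.val + 2) / (k + 1)
          rw [show y.val + 2 = x.val + 2 + 1 by omega, hdiv]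
      constructor
      · intro hadj
        obtain ⟨hne, hcase⟩ := (hGadj v w).mp hadj
        refine ⟨by simpa [Subtype.ext_iff] using hne, ?_⟩
        rcases hcase with hfeq | hvw | hwv
        · exact hfeq
        · exact step v w hvw hv
        · exact (step w v hwv hw).symm
      · rintro ⟨hne, hfeq⟩
        exact (hGadj v w).mpr ⟨fun h => hne (Subtype.ext h), Or.inl hfeq⟩
  · -- edge count
    have gcomm : ∀ a b : Fin n,
        ((min a b : Fin n), (max a b).val - (min a b).val) =
        ((min b a : Fin n), (max b a).val - (min b a).val) := by
      intro a b; rw [min_comm, max_comm]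
    set g : Sym2 (Fin n) → Fin n × ℕ :=
      Sym2.lift ⟨fun a b => ((min a b : Fin n), (max a b).val - (min a b).val), gcomm⟩ with hg
    have hgab : ∀ a b : Fin n, g s(a, b) = ((min a b : Fin n), (max a b).val - (min a b).val) :=
      fun a b => rfl
    have hsab : ∀ a b : Fin n, s(a, b) = s((min a b : Fin n), (max a b : Fin n)) := by
      intro a b
      rcases le_total a b with hab | hab
      · rw [min_eq_left hab, max_eq_right hab]
      · rw [min_eq_right hab, max_eq_left hab, Sym2.eq_swap]
    have hcard : G.edgeSet.ncard ≤ n * (k + 1) := by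
      have hle : G.edgeSet.ncard ≤
          ((Finset.univ ×ˢ Finset.range (k + 1) : Finset (Fin n × ℕ)) : Set (Fin n × ℕ)).ncard := by
        apply Set.ncard_le_ncard_of_injOn g
        · intro e he
          induction e using Sym2.ind with
          | _ a b =>
            rw [SimpleGraph.mem_edgeSet] at he
            obtain ⟨hne, hcase⟩ := (hGadj a b).mp he
            rw [hgab]
            simp only [Finset.coe_product, Set.mem_prod, Finset.mem_coe, Finset.mem_univ,
              Finset.coe_range, Set.mem_Iio, true_and]
            have hdiff : (max a b).val - (min a b).val ≤ k := by
              rcases le_total a b with hab | hab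
              · rw [min_eq_left hab, max_eq_right hab]
                rcases hcase with hfeq | h1 | h1
                · have := hclose a b hfeq; omega
                · omega
                · omega
              · rw [min_eq_right hab, max_eq_left hab]
                rcases hcase with hfeq | h1 | h1
                · have := hclose b a hfeq.symm; omega
                · omega
                · omega
            omega
        · intro e1 he1 e2 he2 heq
          induction e1 using Sym2.ind with
          | _ a b =>
            induction e2 using Sym2.ind with
            | _ c e =>
              rw [SimpleGraph.mem_edgeSet] at he1 he2
              have hne1 : a ≠ b := ((hGadj a b).mp he1).1
              have hne2 : c ≠ e := ((hGadj c e).mp he2).1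
              rw [hgab, hgab, Prod.mk.injEq] at heq
              obtain ⟨hmin, hdiff⟩ := heq
              have hlt1 : (min a b).val < (max a b).val := by
                rcases lt_or_gt_of_ne hne1 with h | h
                · rw [min_eq_left h.le, max_eq_right h.le]; exact h
                · rw [min_eq_right h.le, max_eq_left h.le]; exact h
              have hlt2 : (min c e).val < (max c e).val := by
                rcases lt_or_gt_of_ne hne2 with h | h
                · rw [min_eq_left h.le, max_eq_right h.le]; exact h
                · rw [min_eq_right h.le, max_eq_left h.le]; exact h
              have hminv : (min a b).val = (min c e).val := by rw [hmin]
              have hmax : (max a b) = (max c e) := by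
                apply Fin.ext; omega
              rw [hsab a b, hsab c e, hmin, hmax]
      rw [Set.ncard_coe_finset, Finset.card_product, Finset.card_univ, Fintype.card_fin,
        Finset.card_range] at hle
      exact hle
    -- arithmetic
    have key : G.edgeSet.ncard * (d + 1) ≤ 3 * n ^ 2 := by
      calc G.edgeSet.ncard * (d + 1) ≤ n * (k + 1) * (d + 1) :=
            Nat.mul_le_mul_right _ hcard
        _ = n * M := by rw [hMdef]; ring
        _ = n * (n + 2) := by congr 1; omega
        _ ≤ 3 * n ^ 2 := by nlinarith
    rw [le_div_iff₀ (by positivity : (0 : ℝ) < (d : ℝ) + 1)]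
    calc (G.edgeSet.ncard : ℝ) * ((d : ℝ) + 1) = ((G.edgeSet.ncard * (d + 1) : ℕ) : ℝ) := by
          push_cast; ring
      _ ≤ ((3 * n ^ 2 : ℕ) : ℝ) := by exact_mod_cast key
      _ = 3 * (n : ℝ) ^ 2 := by push_cast; ring
end
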